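/- arXiv:1604.05267 — 9 statements merged into one kernel-verified Lean document; each statement's English description precedes it below -/
import Mathlib

section
/- Let h : (0,∞) → ℝ be smooth and n ≥ 1 an integer. Then for every x > 0: x^n · d^{2n−1}/dx^{2n−1} ( x^{n−1} h(x) ) = d^{n−1}/dx^{n−1} ( x^{2n−1} h^{(n)}(x) ); moreover, setting \hat h(y) = −h(y^{−1}), one has x^n · d^{2n−1}/dx^{2n−1} ( x^{n−1} h(x) ) = [ y^n · d^{2n−1}/dy^{2n−1} ( y^{n−1} \hat h(y) ) ] evaluated at y = x^{−1}. -/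
open Set MeasureTheory Filter

noncomputable def Pk (k : ℕ) (x : ℝ) : ℝ :=
  ∑ n ∈ Finset.range (k + 1), ((2 * k).choose (n + k) : ℝ) * (-x) ^ n

noncomputable def Pkhat (k : ℕ) (x : ℝ) : ℝ :=
  Pk k x - ((2 * k).choose k : ℝ)

/-- The kernel `Φ_k(x,t)`. -/
noncomputable def Phi (k : ℕ) (x t : ℝ) : ℝ :=
  x⁻¹ * (if t ≤ x then Pk k (t / x) else -Pkhat k (x / t))

/-- The function `ψ_k`. -/
noncomputable def psiK (k : ℕ) (y : ℝ) : ℝ :=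
  if 1 ≤ y then Pk k y⁻¹ else -Pkhat k y

/-- `f` is a `k`-Stieltjes function on `(0,∞)` (for `k ≥ 2`). -/
def IsStieltjesK (k : ℕ) (f : ℝ → ℝ) : Prop :=
  (∀ x > 0, 0 ≤ f x) ∧
  ContDiffOn ℝ (2 * k - 3 : ℕ) f (Ioi 0) ∧
  (∀ n, 1 ≤ n → n ≤ k - 1 → ∀ x > 0,
    0 ≤ (-1 : ℝ) ^ (n - 1) * iteratedDeriv (2 * n - 1) (fun y => y ^ n * f y) x) ∧
  ConvexOn ℝ (Ioi 0)
    (fun x => (-1 : ℝ) ^ (k - 1) * iteratedDeriv (2 * k - 3) (fun y => y ^ k * f y) x)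

/-- `g` is `k`-monotone on the open interval `I`. -/
def KMonotoneOn (k : ℕ) (g : ℝ → ℝ) (I : Set ℝ) : Prop :=
  if k = 1 then (∀ x ∈ I, 0 ≤ g x) ∧ AntitoneOn g I
  else
    ContDiffOn ℝ (k - 2 : ℕ) g I ∧
    ∀ n ≤ k - 2,
      (∀ x ∈ I, 0 ≤ (-1 : ℝ) ^ n * iteratedDeriv n g x) ∧
      AntitoneOn (fun x => (-1 : ℝ) ^ n * iteratedDeriv n g x) I ∧
      ConvexOn ℝ I (fun x => (-1 : ℝ) ^ n * iteratedDeriv n g x)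

/-- `v(w) = (w + √(w²−4))/2`. -/
noncomputable def vOf (w : ℝ) : ℝ := (w + Real.sqrt (w ^ 2 - 4)) / 2

/-- `F_u(w) = f(uv) f(u/v)`. -/
noncomputable def Fu (f : ℝ → ℝ) (u w : ℝ) : ℝ := f (u * vOf w) * f (u / vOf w)

/-- `f` is `k`-hyperbolically monotone. -/
def IsHMk (k : ℕ) (f : ℝ → ℝ) : Prop :=
  (∀ x > 0, 0 ≤ f x) ∧ ∀ u > 0, KMonotoneOn k (Fu f u) (Ioi 2)

/-- `f` is power regular `k`-hyperbolically monotone. -/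
def IsPRHMk (k : ℕ) (f : ℝ → ℝ) : Prop :=
  ∀ p > 0, IsHMk k (fun x => f x ^ p)

/-- `ψ_f(x) = -x (log f)'(x)`. -/
noncomputable def psiF (f : ℝ → ℝ) (x : ℝ) : ℝ := -x * deriv (fun y => Real.log (f y)) x

/-- `Δ_u(f)`. -/
noncomputable def DeltaU (f : ℝ → ℝ) (u w : ℝ) : ℝ :=
  (psiF f (u * vOf w) - psiF f (u / vOf w)) / (vOf w - (vOf w)⁻¹)

/-- `Δ_{k,u}`. -/
noncomputable def DeltaKU (k : ℕ) (u w : ℝ) : ℝ :=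
  (psiK k (u * vOf w) - psiK k (u / vOf w)) / (vOf w - (vOf w)⁻¹)


section ThetaProofAuxSection
open Polynomial Real

noncomputable section

/-- Submodule of globally smooth functions. -/
def Sm : Submodule ℝ (ℝ → ℝ) where
  carrier := {f | ContDiff ℝ (⊤ : ℕ∞) f}
  add_mem' := by
    intro a b hf hg
    simp only [Set.mem_setOf_eq] at *
    exact hf.add hg
  zero_mem' := by
    simp only [Set.mem_setOf_eq]
    exact contDiff_const
  smul_mem' := by
    intro c f hf
    simp only [Set.mem_setOf_eq] at *
    exact hf.const_smul c

lemma Sm_smooth (f : Sm) : ContDiff ℝ (⊤ : ℕ∞) (f : ℝ → ℝ) := f.2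

lemma Sm_diff (f : Sm) : Differentiable ℝ (f : ℝ → ℝ) := (Sm_smooth f).differentiable (by simp)

/-- The derivative operator on smooth functions. -/
def Dop : Module.End ℝ Sm where
  toFun f := ⟨deriv (f : ℝ → ℝ), (contDiff_infty_iff_deriv.mp (Sm_smooth f)).2⟩
  map_add' f g := by
    ext t
    exact deriv_add (Sm_diff f t) (Sm_diff g t)
  map_smul' c f := by
    ext t
    exact deriv_const_smul c (Sm_diff f t)

lemma Dop_apply (f : Sm) (t : ℝ) : (Dop f : ℝ → ℝ) t = deriv (f : ℝ → ℝ) t := rfl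

/-- Multiplication by `exp (a * t)`. -/
def Mexp (a : ℝ) : Module.End ℝ Sm where
  toFun f := ⟨fun t => exp (a * t) * (f : ℝ → ℝ) t,
    ((Real.contDiff_exp.comp ((contDiff_const (c := a)).mul contDiff_id)).mul (Sm_smooth f))⟩
  map_add' f g := by ext t; simp [mul_add]
  map_smul' c f := by ext t; simp [smul_eq_mul]; ring

lemma Mexp_apply (a : ℝ) (f : Sm) (t : ℝ) :
    (Mexp a f : ℝ → ℝ) t = exp (a * t) * (f : ℝ → ℝ) t := rfl

/-- Reflection `t ↦ f (-t)`. -/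
def Refl : Module.End ℝ Sm where
  toFun f := ⟨fun t => (f : ℝ → ℝ) (-t), (Sm_smooth f).comp contDiff_neg⟩
  map_add' f g := by ext t; simp
  map_smul' c f := by ext t; simp

lemma Refl_apply (f : Sm) (t : ℝ) : (Refl f : ℝ → ℝ) t = (f : ℝ → ℝ) (-t) := rfl

lemma Mexp_mul_Mexp (a b : ℝ) : Mexp a * Mexp b = Mexp (a + b) := by
  ext f t
  simp only [Module.End.mul_apply, Mexp_apply]
  rw [← mul_assoc, ← Real.exp_add, add_mul]

lemma Mexp_zero : Mexp 0 = 1 := by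
  ext f t
  simp [Mexp_apply]

lemma Refl_mul_Refl : Refl * Refl = 1 := by
  ext f t
  simp [Module.End.mul_apply, Refl_apply]


end

set_option maxHeartbeats 1000000 in
set_option synthInstance.maxHeartbeats 400000 in
lemma DconjPow (E E' T : Module.End ℝ Sm) (hEE : E * E' = 1) (hE'E : E' * E = 1) (n : ℕ) :
    E' * T ^ n * E = (E' * T * E) ^ n := by
  induction n with
  | zero => simpa using hE'E
  | succ n ih =>
    have key : E' * T ^ (n+1) * E = (E' * T ^ n * E) * (E' * T * E) := by
      have h1 : (E' * T ^ n * E) * (E' * T * E) = (E' * T ^ n) * (E * E') * (T * E) := by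
        noncomm_ring
      rw [h1, hEE, mul_one, pow_succ]
      noncomm_ring
    rw [key, ih, pow_succ]

set_option maxHeartbeats 1000000 in
set_option synthInstance.maxHeartbeats 400000 in
lemma DconjAeval (E E' : Module.End ℝ Sm) (hEE : E * E' = 1) (hE'E : E' * E = 1)
    (qE : ℝ[X]) (hD : E' * Dop * E = aeval Dop qE) (p : ℝ[X]) :
    E' * aeval Dop p * E = aeval Dop (p.comp qE) := by
  induction p using Polynomial.induction_on' with
  | add p q hp hq =>
    simp only [add_comp, map_add]
    rw [mul_add, add_mul, hp, hq]
  | monomial n a =>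
    rw [← C_mul_X_pow_eq_monomial, mul_comp, C_comp, X_pow_comp]
    simp only [map_mul, map_pow, aeval_C, aeval_X, Algebra.algebraMap_eq_smul_one]
    calc E' * ((a • 1) * Dop ^ n) * E = a • (E' * Dop ^ n * E) := by
          simp only [smul_mul_assoc, one_mul, mul_smul_comm]
      _ = a • ((E' * Dop * E) ^ n) := by rw [DconjPow E E' Dop hEE hE'E]
      _ = (a • 1) * (aeval Dop qE) ^ n := by
          rw [hD, smul_mul_assoc, one_mul]

/-- the polynomial `∏_{j<m} (X - j)` -/
noncomputable def qP (m : ℕ) : ℝ[X] := ∏ j ∈ Finset.range m, (X - C (j : ℝ))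

lemma Mexp_conj_D (a : ℝ) : Mexp (-a) * Dop * Mexp a = aeval Dop (X + C a) := by
  ext f t
  have hf := Sm_diff f
  have h1 : HasDerivAt (fun u => exp (a * u)) (exp (a * t) * a) t := by
    have ha : HasDerivAt (fun u : ℝ => a * u) a t := by
      simpa using (hasDerivAt_id t).const_mul a
    simpa [Function.comp_def] using (Real.hasDerivAt_exp (a * t)).comp t ha
  have h2 : HasDerivAt (fun u => exp (a * u) * (f : ℝ → ℝ) u)
      ((exp (a * t) * a) * (f : ℝ → ℝ) t + exp (a * t) * deriv (f : ℝ → ℝ) t) t :=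
    h1.mul (hf t).hasDerivAt
  simp only [Module.End.mul_apply, Mexp_apply, Dop_apply, map_add, aeval_X, aeval_C,
    LinearMap.add_apply]
  have hc : (Mexp a f : ℝ → ℝ) = fun u => exp (a * u) * (f : ℝ → ℝ) u := rfl
  rw [hc, h2.deriv]
  have he : exp (-a * t) * exp (a * t) = 1 := by
    rw [← Real.exp_add]; ring_nf; exact Real.exp_zero
  have hadd : ((Dop f + (algebraMap ℝ (Module.End ℝ Sm) a) f : Sm) : ℝ → ℝ) t
      = deriv (f : ℝ → ℝ) t + a * (f : ℝ → ℝ) t := by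
    rw [Submodule.coe_add]; rfl
  rw [hadd]
  have hm : ∀ c : ℝ, exp (-a * t) * (exp (a * t) * c) = c := fun c => by
    rw [← mul_assoc, he, one_mul]
  calc exp (-a*t) * (exp (a*t) * a * (f : ℝ → ℝ) t + exp (a*t) * deriv (f : ℝ → ℝ) t)
      = exp (-a*t) * (exp (a*t) * (a * (f : ℝ → ℝ) t))
        + exp (-a*t) * (exp (a*t) * (deriv (f : ℝ → ℝ) t)) := by ring
    _ = a * (f : ℝ → ℝ) t + deriv (f : ℝ → ℝ) t := by rw [hm, hm]
    _ = deriv (f : ℝ → ℝ) t + a * (f : ℝ → ℝ) t := by ring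

lemma Refl_conj_D : Refl * Dop * Refl = aeval Dop (-X : ℝ[X]) := by
  ext f t
  have hf := Sm_diff f
  have h2 : HasDerivAt (fun u => (f : ℝ → ℝ) (-u)) (-deriv (f : ℝ → ℝ) t) (-t) := by
    have h0 : HasDerivAt (fun u : ℝ => -u) (-1) (-t) := hasDerivAt_neg (-t)
    have := (hf (-(-t))).hasDerivAt.comp (-t) h0
    simpa [Function.comp_def, neg_neg, mul_neg_one] using this
  simp only [Module.End.mul_apply, Refl_apply, Dop_apply, map_neg, aeval_X, LinearMap.neg_apply]
  have hc : (Refl f : ℝ → ℝ) = fun u => (f : ℝ → ℝ) (-u) := rfl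
  rw [hc, h2.deriv]
  simp
  rfl

lemma iterSmooth (F : ℝ → ℝ) (hF : ContDiffOn ℝ (⊤ : ℕ∞) F (Set.Ioi 0)) (k : ℕ) :
    ContDiffOn ℝ (⊤ : ℕ∞) (iteratedDeriv k F) (Set.Ioi 0) := by
  induction k with
  | zero => simpa [iteratedDeriv_zero] using hF
  | succ k ih =>
    rw [iteratedDeriv_succ]
    exact ih.deriv_of_isOpen isOpen_Ioi (by exact_mod_cast le_top)

lemma iterDiffAt (F : ℝ → ℝ) (hF : ContDiffOn ℝ (⊤ : ℕ∞) F (Set.Ioi 0)) (k : ℕ)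
    {x : ℝ} (hx : 0 < x) : DifferentiableAt ℝ (iteratedDeriv k F) x :=
  (((iterSmooth F hF k).differentiableOn (by simp)).differentiableAt
    (isOpen_Ioi.mem_nhds hx))

noncomputable def cExp (F : ℝ → ℝ) (hF : ContDiffOn ℝ (⊤ : ℕ∞) F (Set.Ioi 0)) : Sm :=
  ⟨fun t => F (exp t), by
    have : ContDiffOn ℝ (⊤ : ℕ∞) (fun t => F (exp t)) Set.univ :=
      hF.comp Real.contDiff_exp.contDiffOn (fun t _ => Real.exp_pos t)
    show ContDiff ℝ (⊤ : ℕ∞) (fun t => F (exp t))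
    simpa [contDiffOn_univ] using this⟩

lemma cExp_apply (F : ℝ → ℝ) (hF : ContDiffOn ℝ (⊤ : ℕ∞) F (Set.Ioi 0)) (t : ℝ) :
    (cExp F hF : ℝ → ℝ) t = F (exp t) := rfl

lemma bridge (F : ℝ → ℝ) (hF : ContDiffOn ℝ (⊤ : ℕ∞) F (Set.Ioi 0)) (k : ℕ) :
    ∀ t : ℝ, exp t ^ k * iteratedDeriv k F (exp t)
      = ((aeval Dop (qP k)) (cExp F hF) : ℝ → ℝ) t := by
  induction k with
  | zero =>
    intro t
    simp [qP, cExp_apply]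
  | succ k ih =>
    intro t
    have hq : qP (k+1) = (X - C (k:ℝ)) * qP k := by
      rw [qP, qP, Finset.prod_range_succ, mul_comm]
    rw [hq, map_mul, Module.End.mul_apply]
    set u := aeval Dop (qP k) (cExp F hF) with hu
    have huf : (u : ℝ → ℝ) = fun s => exp s ^ k * iteratedDeriv k F (exp s) :=
      funext fun s => (ih s).symm
    have hval : ((aeval Dop (X - C (k:ℝ)) u) : ℝ → ℝ) t
        = deriv (u : ℝ → ℝ) t - (k:ℝ) * (u : ℝ → ℝ) t := by
      rw [map_sub, aeval_X, aeval_C]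
      have : ((Dop u - (algebraMap ℝ (Module.End ℝ Sm) (k:ℝ)) u : Sm) : ℝ → ℝ) t
          = deriv (u : ℝ → ℝ) t - (k:ℝ) * (u : ℝ → ℝ) t := by
        rw [Submodule.coe_sub]; rfl
      exact this
    have hG : HasDerivAt (fun s => iteratedDeriv k F (exp s))
        (iteratedDeriv (k+1) F (exp t) * exp t) t := by
      have hd : DifferentiableAt ℝ (iteratedDeriv k F) (exp t) := iterDiffAt F hF k (Real.exp_pos t)
      have h1 : HasDerivAt (iteratedDeriv k F) (iteratedDeriv (k+1) F (exp t)) (exp t) := by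
        have h2 := hd.hasDerivAt
        rwa [show deriv (iteratedDeriv k F) (exp t) = iteratedDeriv (k+1) F (exp t) from
          (congrFun (iteratedDeriv_succ (n := k)) (exp t)).symm] at h2
      simpa [Function.comp_def] using h1.comp t (Real.hasDerivAt_exp t)
    have hP : HasDerivAt (fun s => exp s ^ k) ((k:ℝ) * exp t ^ (k-1) * exp t) t :=
      (Real.hasDerivAt_exp t).pow k
    have hM : HasDerivAt (fun s => exp s ^ k * iteratedDeriv k F (exp s))
        (((k:ℝ) * exp t ^ (k-1) * exp t) * iteratedDeriv k F (exp t)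
          + exp t ^ k * (iteratedDeriv (k+1) F (exp t) * exp t)) t := hP.mul hG
    rw [hval, huf, hM.deriv]
    have hpow : ((k:ℝ)) * exp t ^ (k-1) * exp t = (k:ℝ) * exp t ^ k := by
      cases k with
      | zero => simp
      | succ m => rw [Nat.add_sub_cancel, mul_assoc, ← pow_succ]
    rw [hpow, pow_succ]
    ring

lemma qP_comp_shift (m : ℝ) (N : ℕ) :
    (qP N).comp (X + C m) = ∏ j ∈ Finset.range N, (X + C m - C (j:ℝ)) := by
  rw [qP, prod_comp]
  exact Finset.prod_congr rfl fun j _ => by rw [sub_comp, X_comp, C_comp]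

lemma PI1 (m : ℕ) : (qP (2*m+1)).comp (X + C (m:ℝ))
    = (qP m).comp (X + C (m:ℝ)) * qP (m+1) := by
  rw [qP_comp_shift, qP_comp_shift, qP]
  rw [show 2*m+1 = m + (m+1) from by omega, Finset.prod_range_add]
  congr 1
  refine Finset.prod_congr rfl fun i _ => ?_
  have hc : ((m + i : ℕ) : ℝ) = (m:ℝ) + (i:ℝ) := by push_cast; ring
  rw [hc, show C ((m:ℝ) + (i:ℝ)) = C (m:ℝ) + C (i:ℝ) from map_add C _ _]
  ring

lemma PI2 (m : ℕ) :
    ((qP (2*m+1)).comp (X + C (m:ℝ))).comp (-X) = -((qP (2*m+1)).comp (X + C (m:ℝ))) := by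
  rw [qP_comp_shift, prod_comp]
  have e1 : ∀ j ∈ Finset.range (2*m+1),
      ((X:ℝ[X]) + C (m:ℝ) - C (j:ℝ)).comp (-X)
        = (-1) * ((X:ℝ[X]) - C (m:ℝ) + C (j:ℝ)) := by
    intro j _
    rw [sub_comp, add_comp, X_comp, C_comp, C_comp]
    ring
  rw [Finset.prod_congr rfl e1, Finset.prod_mul_distrib, Finset.prod_const,
    Finset.card_range, Odd.neg_one_pow ⟨m, by ring⟩]
  have e2 : ∏ j ∈ Finset.range (2*m+1), ((X:ℝ[X]) - C (m:ℝ) + C (j:ℝ))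
      = ∏ j ∈ Finset.range (2*m+1), ((X:ℝ[X]) + C (m:ℝ) - C (j:ℝ)) := by
    rw [← Finset.prod_range_reflect (fun j => (X:ℝ[X]) + C (m:ℝ) - C (j:ℝ)) (2*m+1)]
    refine Finset.prod_congr rfl fun j hj => ?_
    have hj' : j ≤ 2*m := by
      have := Finset.mem_range.mp hj; omega
    have hcast : ((2*m+1-1-j : ℕ) : ℝ) = 2*(m:ℝ) - (j:ℝ) := by
      rw [show 2*m+1-1-j = 2*m - j from by omega, Nat.cast_sub hj']
      push_cast; ring
    rw [hcast, show C (2*(m:ℝ) - (j:ℝ)) = C (2*(m:ℝ)) - C (j:ℝ) from map_sub C _ _,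
      show C (2*(m:ℝ)) = C (m:ℝ) + C (m:ℝ) from by rw [← map_add]; ring_nf]
    ring
  rw [e2]
  ring

lemma Mexp_inv_left (a : ℝ) : Mexp (-a) * Mexp a = 1 := by
  rw [Mexp_mul_Mexp, neg_add_cancel, Mexp_zero]

lemma Mexp_inv_right (a : ℝ) : Mexp a * Mexp (-a) = 1 := by
  rw [Mexp_mul_Mexp, add_neg_cancel, Mexp_zero]

lemma conjM (a : ℝ) (p : ℝ[X]) :
    aeval Dop p * Mexp a = Mexp a * aeval Dop (p.comp (X + C a)) := by
  have h0 := DconjAeval (Mexp a) (Mexp (-a)) (Mexp_inv_right a) (Mexp_inv_left a)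
    (X + C a) (Mexp_conj_D a) p
  calc aeval Dop p * Mexp a = (Mexp a * Mexp (-a)) * (aeval Dop p * Mexp a) := by
        rw [Mexp_inv_right, one_mul]
    _ = Mexp a * (Mexp (-a) * aeval Dop p * Mexp a) := by noncomm_ring
    _ = Mexp a * aeval Dop (p.comp (X + C a)) := by rw [h0]

theorem theta_identities_aux (h : ℝ → ℝ) (hh : ContDiffOn ℝ (⊤ : ℕ∞) h (Set.Ioi 0))
    (m : ℕ) (x : ℝ) (hx : 0 < x) :
    x ^ (m+1) * iteratedDeriv (2*m+1) (fun y => y ^ m * h y) x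
      = iteratedDeriv m (fun y => y ^ (2*m+1) * iteratedDeriv (m+1) h y) x ∧
    x ^ (m+1) * iteratedDeriv (2*m+1) (fun y => y ^ m * h y) x
      = x⁻¹ ^ (m+1) * iteratedDeriv (2*m+1) (fun y => y ^ m * -h y⁻¹) x⁻¹ := by
  have hpowC : ∀ k : ℕ, ContDiffOn ℝ (⊤ : ℕ∞) (fun y : ℝ => y ^ k) (Set.Ioi 0) :=
    fun k => (contDiff_id.pow k).contDiffOn
  set F1 : ℝ → ℝ := fun y => y ^ m * h y with hF1def
  have hF1 : ContDiffOn ℝ (⊤ : ℕ∞) F1 (Set.Ioi 0) := (hpowC m).mul hh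
  set F2 : ℝ → ℝ := fun y => y ^ (2*m+1) * iteratedDeriv (m+1) h y with hF2def
  have hF2 : ContDiffOn ℝ (⊤ : ℕ∞) F2 (Set.Ioi 0) :=
    (hpowC (2*m+1)).mul (iterSmooth h hh (m+1))
  set F3 : ℝ → ℝ := fun y => y ^ m * -h y⁻¹ with hF3def
  have hinv : ContDiffOn ℝ (⊤ : ℕ∞) (fun y : ℝ => h y⁻¹) (Set.Ioi 0) := by
    refine hh.comp ((contDiffOn_inv ℝ).mono ?_) ?_
    · intro y hy
      exact ne_of_gt hy
    · intro y hy
      exact inv_pos.mpr (show (0:ℝ) < y from hy)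
  have hF3 : ContDiffOn ℝ (⊤ : ℕ∞) F3 (Set.Ioi 0) := (hpowC m).mul hinv.neg
  set g : Sm := cExp h hh with hgdef
  set r : ℝ[X] := (qP (2*m+1)).comp (X + C (m:ℝ)) with hrdef
  set t : ℝ := Real.log x with htdef
  have hxt : exp t = x := Real.exp_log hx
  -- function identification 1
  have hg1 : cExp F1 hF1 = Mexp (m:ℝ) g := by
    apply Subtype.ext
    funext u
    rw [cExp_apply, Mexp_apply, cExp_apply, Real.exp_nat_mul]
  -- E1
  have E1 : ∀ s, exp s ^ (2*m+1) * iteratedDeriv (2*m+1) F1 (exp s)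
      = exp ((m:ℝ)*s) * ((aeval Dop r) g : ℝ → ℝ) s := by
    intro s
    rw [bridge F1 hF1 (2*m+1) s, hg1]
    have : aeval Dop (qP (2*m+1)) (Mexp (m:ℝ) g) = Mexp (m:ℝ) (aeval Dop r g) := by
      rw [← Module.End.mul_apply, conjM, Module.End.mul_apply]
    rw [this, Mexp_apply]
  have claim1 : ∀ s, exp s ^ (m+1) * iteratedDeriv (2*m+1) F1 (exp s)
      = ((aeval Dop r) g : ℝ → ℝ) s := by
    intro s
    have h0 := E1 s
    have hexp : exp s ^ (2*m+1) = exp ((m:ℝ)*s) * exp s ^ (m+1) := by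
      rw [Real.exp_nat_mul, ← pow_add]
      congr 1
      omega
    rw [hexp, mul_assoc] at h0
    exact mul_left_cancel₀ (Real.exp_ne_zero _) h0
  -- part 1
  have hg2 : cExp F2 hF2 = Mexp (m:ℝ) (aeval Dop (qP (m+1)) g) := by
    apply Subtype.ext
    funext u
    rw [cExp_apply, Mexp_apply]
    show exp u ^ (2*m+1) * iteratedDeriv (m+1) h (exp u) = _
    have hb := bridge h hh (m+1) u
    have hexp : exp u ^ (2*m+1) = exp ((m:ℝ)*u) * exp u ^ (m+1) := by
      rw [Real.exp_nat_mul, ← pow_add]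
      congr 1
      omega
    rw [hexp, mul_assoc, hb]
  have E2 : ∀ s, exp s ^ m * iteratedDeriv m F2 (exp s)
      = exp ((m:ℝ)*s) * ((aeval Dop r) g : ℝ → ℝ) s := by
    intro s
    rw [bridge F2 hF2 m s, hg2]
    have h1 : aeval Dop (qP m) (Mexp (m:ℝ) (aeval Dop (qP (m+1)) g))
        = Mexp (m:ℝ) (aeval Dop ((qP m).comp (X + C (m:ℝ))) (aeval Dop (qP (m+1)) g)) := by
      rw [← Module.End.mul_apply, conjM, Module.End.mul_apply]
    rw [h1, ← Module.End.mul_apply (aeval Dop ((qP m).comp (X + C (m:ℝ)))), ← map_mul, ← PI1,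
      ← hrdef, Mexp_apply]
  have claim2 : iteratedDeriv m F2 x = ((aeval Dop r) g : ℝ → ℝ) t := by
    have h0 := E2 t
    rw [hxt] at h0
    have hxm : exp ((m:ℝ)*t) = x ^ m := by rw [Real.exp_nat_mul, hxt]
    rw [hxm] at h0
    exact mul_left_cancel₀ (pow_ne_zero m (ne_of_gt hx)) h0
  constructor
  · have hc1 := claim1 t
    rw [hxt] at hc1
    rw [hc1, claim2]
  -- part 2
  · have hg3 : cExp F3 hF3 = Mexp (m:ℝ) (-(Refl g)) := by
      apply Subtype.ext
      funext u
      rw [cExp_apply, Mexp_apply]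
      have hcoe : ((-(Refl g) : Sm) : ℝ → ℝ) u = -((Refl g : ℝ → ℝ) u) := rfl
      rw [hcoe, Refl_apply, cExp_apply]
      show exp u ^ m * -h (exp u)⁻¹ = exp ((m:ℝ)*u) * -h (exp (-u))
      rw [Real.exp_nat_mul, Real.exp_neg]
    have hRr : (aeval Dop r) (Refl g) = -(Refl ((aeval Dop r) g)) := by
      have h0 := DconjAeval Refl Refl Refl_mul_Refl Refl_mul_Refl (-X) Refl_conj_D r
      rw [show r.comp (-X) = -r from PI2 m, map_neg] at h0
      have h1 := congrArg (fun T : Module.End ℝ Sm => T g) h0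
      simp only [Module.End.mul_apply, LinearMap.neg_apply] at h1
      have h2 := congrArg (fun v : Sm => Refl v) h1
      simp only [map_neg] at h2
      have h3 : Refl (Refl ((aeval Dop r) (Refl g))) = (aeval Dop r) (Refl g) := by
        have h4 := congrArg (fun T : Module.End ℝ Sm => T ((aeval Dop r) (Refl g))) Refl_mul_Refl
        simpa [Module.End.mul_apply] using h4
      rw [h3] at h2
      exact h2
    have E3 : ∀ s, exp s ^ (2*m+1) * iteratedDeriv (2*m+1) F3 (exp s)
        = exp ((m:ℝ)*s) * ((aeval Dop r) g : ℝ → ℝ) (-s) := by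
      intro s
      rw [bridge F3 hF3 (2*m+1) s, hg3]
      have h1 : aeval Dop (qP (2*m+1)) (Mexp (m:ℝ) (-(Refl g)))
          = Mexp (m:ℝ) (aeval Dop r (-(Refl g))) := by
        rw [← Module.End.mul_apply, conjM, Module.End.mul_apply, hrdef]
      rw [h1, map_neg, hRr, neg_neg, Mexp_apply, Refl_apply]
    have claim3 : ∀ s, exp s ^ (m+1) * iteratedDeriv (2*m+1) F3 (exp s)
        = ((aeval Dop r) g : ℝ → ℝ) (-s) := by
      intro s
      have h0 := E3 s
      have hexp : exp s ^ (2*m+1) = exp ((m:ℝ)*s) * exp s ^ (m+1) := by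
        rw [Real.exp_nat_mul, ← pow_add]
        congr 1
        omega
      rw [hexp, mul_assoc] at h0
      exact mul_left_cancel₀ (Real.exp_ne_zero _) h0
    have hc1 := claim1 t
    rw [hxt] at hc1
    have hc3 := claim3 (-t)
    rw [Real.exp_neg, hxt, neg_neg] at hc3
    rw [hc1, hc3]


end ThetaProofAuxSection

/-- Lemma 2: for smooth `h` on `(0,∞)`, `n ≥ 1` and `x > 0`,
`Θ_n(h)(x) = x^n (x^{n-1} h)^{(2n-1)}(x)` equals `(x^{2n-1} h^{(n)})^{(n-1)}(x)` and also
equals `Θ_n(ĥ)(x⁻¹)`, where `ĥ(y) = -h(y⁻¹)`. -/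
theorem theta_operator_identities (h : ℝ → ℝ) (hh : ContDiffOn ℝ (⊤ : ℕ∞) h (Ioi 0))
    (n : ℕ) (hn : 1 ≤ n) (x : ℝ) (hx : 0 < x) :
    x ^ n * iteratedDeriv (2 * n - 1) (fun y => y ^ (n - 1) * h y) x
      = iteratedDeriv (n - 1) (fun y => y ^ (2 * n - 1) * iteratedDeriv n h y) x ∧
    x ^ n * iteratedDeriv (2 * n - 1) (fun y => y ^ (n - 1) * h y) x
      = x⁻¹ ^ n * iteratedDeriv (2 * n - 1) (fun y => y ^ (n - 1) * -h y⁻¹) x⁻¹ := by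
  obtain ⟨m, rfl⟩ : ∃ m, n = m + 1 := ⟨n - 1, by omega⟩
  have hidx1 : 2 * (m+1) - 1 = 2*m + 1 := by omega
  have hidx2 : (m+1) - 1 = m := by omega
  rw [hidx1, hidx2]
  exact theta_identities_aux h hh m x hx
end

section
/- For every integer k ≥ 1, every n ∈ {1,…,k} and every x > 0, one has (−1)^{n−1} d^{2n−1}/dx^{2n−1} ( x^{n−1} ψ_k(x) ) ≥ 0. -/
open Set MeasureTheory Filter

section AuxWidder

open Finset intervalIntegral


lemma maxpow_hasDerivAt (p : ℕ) (t : ℝ) :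
    HasDerivAt (fun s : ℝ => max s 0 ^ (p+2)) ((p+2) * max t 0 ^ (p+1)) t := by
  rcases lt_trichotomy t 0 with ht | rfl | ht
  · have h0 : (fun s : ℝ => max s 0 ^ (p+2)) =ᶠ[nhds t] fun _ => (0:ℝ) := by
      filter_upwards [Iio_mem_nhds ht] with s hs
      rw [Set.mem_Iio] at hs
      simp [max_eq_right hs.le]
    have h := (hasDerivAt_const t (0:ℝ)).congr_of_eventuallyEq h0
    simpa [max_eq_right ht.le] using h
  · rw [hasDerivAt_iff_tendsto_slope]
    have hb : ∀ s : ℝ, s ≠ 0 → ‖slope (fun s : ℝ => max s 0 ^ (p+2)) 0 s‖ ≤ |s| ^ (p+1) := by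
      intro s hs
      rw [slope_def_field, Real.norm_eq_abs, sub_zero]
      have h1 : (max (0:ℝ) 0) ^ (p+2) = 0 := by simp
      rw [h1, sub_zero, abs_div]
      rcases le_or_gt s 0 with h | h
      · rw [max_eq_right h, zero_pow (by omega : p+2 ≠ 0), abs_zero, zero_div]
        positivity
      · rw [max_eq_left h.le, abs_pow, div_le_iff₀ (abs_pos.mpr hs), ← pow_succ]
    have hT : Tendsto (fun s : ℝ => |s| ^ (p+1)) (nhds 0) (nhds 0) := by
      have hc : Continuous fun s : ℝ => |s| ^ (p+1) := by continuity
      simpa using hc.tendsto 0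
    have h : Tendsto (slope (fun s : ℝ => max s 0 ^ (p+2)) 0) (nhdsWithin 0 {0}ᶜ) (nhds 0) :=
      squeeze_zero_norm' ((eventually_mem_nhdsWithin).mono hb)
      (hT.mono_left nhdsWithin_le_nhds)
    simpa using h
  · have h0 : (fun s : ℝ => max s 0 ^ (p+2)) =ᶠ[nhds t] fun s => s ^ (p+2) := by
      filter_upwards [Ioi_mem_nhds ht] with s hs
      rw [Set.mem_Ioi] at hs
      simp [max_eq_left hs.le]
    have h := (hasDerivAt_pow (p+2) t).congr_of_eventuallyEq h0
    simp only [max_eq_left ht.le]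
    refine h.congr_deriv ?_
    rw [show p+2-1 = p+1 by omega]
    push_cast
    ring

lemma maxpow_contDiff : ∀ (m p : ℕ), m ≤ p + 1 → ContDiff ℝ (m : ℕ∞) (fun t : ℝ => max t 0 ^ (p+2)) := by
  intro m
  induction m with
  | zero =>
    intro p _
    simp only [Nat.cast_zero, contDiff_zero]
    continuity
  | succ m IH =>
    intro p hm
    have hderiv : deriv (fun t : ℝ => max t 0 ^ (p+2)) = fun t : ℝ => ((p:ℝ)+2) * max t 0 ^ (p+1) := by
      funext t
      exact (maxpow_hasDerivAt p t).deriv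
    have hd : Differentiable ℝ (fun t : ℝ => max t 0 ^ (p+2)) :=
      fun t => (maxpow_hasDerivAt p t).differentiableAt
    have hcast : (((m+1 : ℕ) : ℕ∞) : WithTop ℕ∞) = ((m : ℕ∞) : WithTop ℕ∞) + 1 := by push_cast; ring
    rw [hcast, contDiff_succ_iff_deriv]
    refine ⟨hd, by simp, ?_⟩
    rw [hderiv]
    rcases p with _ | q
    · have hm0 : m = 0 := by omega
      subst hm0
      simp only [Nat.cast_zero, contDiff_zero]
      continuity
    · have h := (contDiff_const (c := ((q:ℝ)+1+2))).mul (IH q (by omega))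
      have heq : (fun t : ℝ => (((q+1:ℕ):ℝ) + 2) * max t 0 ^ (q+1+1))
          = fun t : ℝ => ((q:ℝ)+1+2) * max t 0 ^ (q+2) := by
        funext t
        push_cast
        ring
      rw [heq]
      exact h


lemma prod_asc (r j : ℕ) : ∏ i ∈ Finset.range r, ((j:ℝ) + 1 + i)
    = (Nat.factorial (r+j) : ℝ) / (Nat.factorial j : ℝ) := by
  induction r with
  | zero =>
    simp [Nat.div_self, div_self (Nat.cast_ne_zero.mpr (Nat.factorial_ne_zero j) : (Nat.factorial j : ℝ) ≠ 0)]
  | succ r IH =>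
    rw [Finset.prod_range_succ, IH]
    have h1 : (Nat.factorial (r+1+j) : ℝ) = ((r+j:ℕ)+1 : ℝ) * (Nat.factorial (r+j) : ℝ) := by
      rw [show r+1+j = (r+j)+1 by omega, Nat.factorial_succ]
      push_cast
      ring
    have h2 : (Nat.factorial j : ℝ) ≠ 0 := Nat.cast_ne_zero.mpr (Nat.factorial_ne_zero j)
    field_simp [h1]
    rw [h1]
    push_cast
    ring

lemma prod_desc (r j : ℕ) : ∏ i ∈ Finset.range r, (((r:ℝ) + j) - i)
    = (Nat.factorial (r+j) : ℝ) / (Nat.factorial j : ℝ) := by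
  rw [← prod_asc r j, ← Finset.prod_range_reflect]
  apply Finset.prod_congr rfl
  intro i hi
  rw [Finset.mem_range] at hi
  have h : ((r - 1 - i : ℕ) : ℝ) = (r:ℝ) - 1 - i := by
    have h1 : r - 1 - i = r - (1+i) := by omega
    rw [h1]
    push_cast [Nat.cast_sub (by omega : 1+i ≤ r)]
    ring
  rw [h]
  ring

lemma prod_desc_neg (r j : ℕ) : ∏ i ∈ Finset.range r, ((-1 - (j:ℝ)) - i)
    = (-1:ℝ)^r * ((Nat.factorial (r+j) : ℝ) / (Nat.factorial j : ℝ)) := by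
  have h : ∀ i ∈ Finset.range r, (-1 - (j:ℝ)) - i = (-1) * ((j:ℝ) + 1 + i) := by
    intro i _; ring
  rw [Finset.prod_congr rfl h, Finset.prod_mul_distrib, Finset.prod_const, prod_asc,
    Finset.card_range]

lemma iteratedDeriv_zpow_sum (s : Finset ℕ) (c : ℕ → ℝ) (e : ℕ → ℤ) :
    ∀ (j : ℕ) (x : ℝ), x ≠ 0 →
      iteratedDeriv j (fun y : ℝ => ∑ m ∈ s, c m * y ^ (e m)) x
        = ∑ m ∈ s, c m * (∏ i ∈ Finset.range j, ((e m : ℝ) - i)) * x ^ (e m - j) := by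
  intro j
  induction j with
  | zero =>
    intro x hx
    simp [iteratedDeriv_zero]
  | succ j IH =>
    intro x hx
    rw [iteratedDeriv_succ]
    have hev : iteratedDeriv j (fun y : ℝ => ∑ m ∈ s, c m * y ^ (e m))
        =ᶠ[nhds x] fun y : ℝ => ∑ m ∈ s, c m * (∏ i ∈ Finset.range j, ((e m : ℝ) - i)) * y ^ (e m - j) := by
      filter_upwards [IsOpen.mem_nhds isOpen_compl_singleton hx] with y hy
      exact IH y hy
    rw [hev.deriv_eq]
    have hdiff : ∀ m ∈ s, DifferentiableAt ℝ (fun y : ℝ => c m * (∏ i ∈ Finset.range j, ((e m : ℝ) - i)) * y ^ (e m - j)) x :=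
      fun m _ => ((differentiableAt_zpow.mpr (Or.inl hx)).const_mul _)
    rw [deriv_fun_sum hdiff]
    apply Finset.sum_congr rfl
    intro m _
    rw [deriv_const_mul_field, deriv_zpow, Finset.prod_range_succ]
    have hexp : e m - (j:ℤ) - 1 = e m - ((j:ℕ)+1 : ℕ) := by push_cast; ring
    rw [← hexp]
    push_cast
    ring

lemma alt_inv_sum : ∀ (d q : ℕ),
    ∑ b ∈ Finset.range (d+1), (-1:ℝ)^b * (d.choose b : ℝ) / ((q:ℝ)+1+b)
      = (Nat.factorial d : ℝ) * (Nat.factorial q : ℝ) / (Nat.factorial (d+q+1) : ℝ) := by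
  intro d
  induction d with
  | zero =>
    intro q
    rw [show (0:ℕ)+q+1 = q+1 by omega, Nat.factorial_succ]
    push_cast
    have h : ((q:ℝ)+1) ≠ 0 := by positivity
    have h2 : (Nat.factorial q : ℝ) ≠ 0 := Nat.cast_ne_zero.mpr (Nat.factorial_ne_zero q)
    field_simp
    simp [h]
  | succ d IH =>
    intro q
    have key : ∑ b ∈ Finset.range (d+2), (-1:ℝ)^b * ((d+1).choose b : ℝ) / ((q:ℝ)+1+b)
        = (∑ b ∈ Finset.range (d+1), (-1:ℝ)^b * (d.choose b : ℝ) / ((q:ℝ)+1+b))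
          - (∑ b ∈ Finset.range (d+1), (-1:ℝ)^b * (d.choose b : ℝ) / (((q+1:ℕ):ℝ)+1+b)) := by
      have h1 := Finset.sum_range_succ' (fun b => (-1:ℝ)^b * ((d+1).choose b : ℝ) / ((q:ℝ)+1+b)) (d+1)
      have h2 : ∀ b ∈ Finset.range (d+1),
          (-1:ℝ)^(b+1) * ((d+1).choose (b+1) : ℝ) / ((q:ℝ)+1+(b+1:ℕ))
          = -((-1:ℝ)^b * (d.choose b : ℝ) / (((q+1:ℕ):ℝ)+1+b)
              + (-1:ℝ)^b * (d.choose (b+1) : ℝ) / ((q:ℝ)+2+b)) := by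
        intro b _
        rw [Nat.choose_succ_succ]
        have hden : ((q:ℝ)+1+((b:ℕ)+1:ℕ)) ≠ 0 := by push_cast; positivity
        push_cast
        rw [pow_succ]
        have hd1 : (q:ℝ)+1+((b:ℝ)+1) = (q:ℝ)+2+b := by ring
        have hd2 : ((q:ℝ)+1)+1+b = (q:ℝ)+2+b := by ring
        rw [hd1, hd2]
        ring
      have h3 : ∑ b ∈ Finset.range (d+1), (fun b => (-1:ℝ)^b * ((d+1).choose b : ℝ) / ((q:ℝ)+1+b)) (b+1)
          = -(∑ b ∈ Finset.range (d+1), (-1:ℝ)^b * (d.choose b : ℝ) / (((q+1:ℕ):ℝ)+1+b))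
            - (∑ b ∈ Finset.range (d+1), (-1:ℝ)^b * (d.choose (b+1) : ℝ) / ((q:ℝ)+2+b)) := by
        rw [Finset.sum_congr rfl (fun b hb => h2 b hb)]
        rw [Finset.sum_neg_distrib, Finset.sum_add_distrib]
        ring
      have h4 : ∑ b ∈ Finset.range (d+1), (-1:ℝ)^b * (d.choose b : ℝ) / ((q:ℝ)+1+b)
          = -(∑ b ∈ Finset.range d, (-1:ℝ)^b * (d.choose (b+1) : ℝ) / ((q:ℝ)+2+b)) + 1/((q:ℝ)+1) := by
        rw [Finset.sum_range_succ' (fun b => (-1:ℝ)^b * (d.choose b : ℝ) / ((q:ℝ)+1+b)) d]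
        have h5 : ∀ b ∈ Finset.range d,
            (-1:ℝ)^(b+1) * (d.choose (b+1) : ℝ) / ((q:ℝ)+1+(b+1:ℕ))
            = -((-1:ℝ)^b * (d.choose (b+1) : ℝ) / ((q:ℝ)+2+b)) := by
          intro b _
          push_cast
          rw [pow_succ]
          have hd1 : (q:ℝ)+1+((b:ℝ)+1) = (q:ℝ)+2+b := by ring
          rw [hd1]
          ring
        rw [Finset.sum_congr rfl h5, Finset.sum_neg_distrib]
        simp
      have h6 : ∑ b ∈ Finset.range (d+1), (-1:ℝ)^b * (d.choose (b+1) : ℝ) / ((q:ℝ)+2+b)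
          = ∑ b ∈ Finset.range d, (-1:ℝ)^b * (d.choose (b+1) : ℝ) / ((q:ℝ)+2+b) := by
        rw [Finset.sum_range_succ]
        simp [Nat.choose_succ_self]
      rw [h1, h3, h6, h4]
      simp only [pow_zero, Nat.choose_zero_right, Nat.cast_one, Nat.cast_zero, one_mul, add_zero]
      ring
    rw [key, IH q, IH (q+1)]
    have e1 : d+(q+1)+1 = d+q+2 := by omega
    have e2 : (d+1)+q+1 = d+q+2 := by omega
    rw [e1, e2]
    have f1 : (Nat.factorial (d+q+2) : ℝ) = ((d:ℝ)+(q:ℝ)+2) * (Nat.factorial (d+q+1) : ℝ) := by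
      rw [show d+q+2 = (d+q+1)+1 by omega, Nat.factorial_succ]
      push_cast; ring
    have f2 : (Nat.factorial (d+1) : ℝ) = ((d:ℝ)+1) * (Nat.factorial d : ℝ) := by
      rw [Nat.factorial_succ]; push_cast; ring
    have f3 : (Nat.factorial (q+1) : ℝ) = ((q:ℝ)+1) * (Nat.factorial q : ℝ) := by
      rw [Nat.factorial_succ]; push_cast; ring
    rw [f1, f2, f3]
    have n1 : (Nat.factorial (d+q+1) : ℝ) ≠ 0 := Nat.cast_ne_zero.mpr (Nat.factorial_ne_zero _)
    have n2 : ((d:ℝ)+(q:ℝ)+2) ≠ 0 := by positivity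
    field_simp
    ring

lemma Qp_nonneg (N d : ℕ) {z : ℝ} (h0 : 0 ≤ z) (h1 : z ≤ 1) :
    0 ≤ ∑ j ∈ Finset.range (d+1), (-1:ℝ)^j * ((2*(N+1+d)).choose (2*N+2+d+j) : ℝ)
        * ((Nat.factorial (2*N+1+j) : ℝ) / (Nat.factorial j : ℝ)) * z^j := by
  have hInt : (0:ℝ) ≤ ∫ t in (0:ℝ)..1, t^(2*N+1) * ((1 - z*t)^d * (1-t)^d) := by
    apply intervalIntegral.integral_nonneg zero_le_one
    intro u hu
    obtain ⟨hu0, hu1⟩ := hu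
    have hz : z*u ≤ 1 := by
      calc z*u ≤ 1*1 := by apply mul_le_mul h1 hu1 hu0 zero_le_one
      _ = 1 := by ring
    apply mul_nonneg (pow_nonneg hu0 _)
    exact mul_nonneg (pow_nonneg (by linarith) _) (pow_nonneg (by linarith) _)
  -- pointwise expansion
  have hexp : ∀ t : ℝ, t^(2*N+1) * ((1 - z*t)^d * (1-t)^d)
      = ∑ a ∈ Finset.range (d+1), (d.choose a : ℝ) * (-z)^a *
          (∑ b ∈ Finset.range (d+1), (d.choose b : ℝ) * (-1)^b * t^(2*N+1+a+b)) := by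
    intro t
    have e1 : (1 - z*t)^d = ∑ a ∈ Finset.range (d+1), (d.choose a : ℝ) * (-z)^a * t^a := by
      rw [show (1 - z*t) = (-(z*t)) + 1 by ring, add_pow]
      apply Finset.sum_congr rfl
      intro a _
      rw [one_pow, show (-(z*t)) = (-z)*t by ring, mul_pow]
      ring
    have e2 : (1 - t)^d = ∑ b ∈ Finset.range (d+1), (d.choose b : ℝ) * (-1)^b * t^b := by
      rw [show (1 - t) = (-t) + 1 by ring, add_pow]
      apply Finset.sum_congr rfl
      intro b _
      rw [one_pow, show (-t) = (-1)*t by ring, mul_pow]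
      ring
    rw [e1, e2, Finset.sum_mul_sum]
    rw [Finset.mul_sum]
    apply Finset.sum_congr rfl
    intro a _
    rw [Finset.mul_sum, Finset.mul_sum]
    apply Finset.sum_congr rfl
    intro b _
    rw [pow_add, pow_add]
    ring
  -- integrate the expansion
  have hIntegral : ∫ t in (0:ℝ)..1, t^(2*N+1) * ((1 - z*t)^d * (1-t)^d)
      = ∑ a ∈ Finset.range (d+1), (d.choose a : ℝ) * (-z)^a *
          (∑ b ∈ Finset.range (d+1), (d.choose b : ℝ) * (-1)^b * (1/(((2*N+1+a+b:ℕ):ℝ)+1))) := by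
    rw [intervalIntegral.integral_congr (g := fun t => ∑ a ∈ Finset.range (d+1), (d.choose a : ℝ) * (-z)^a *
          (∑ b ∈ Finset.range (d+1), (d.choose b : ℝ) * (-1)^b * t^(2*N+1+a+b)))
        (fun t _ => hexp t)]
    rw [intervalIntegral.integral_finset_sum]
    · apply Finset.sum_congr rfl
      intro a _
      rw [intervalIntegral.integral_const_mul, intervalIntegral.integral_finset_sum]
      · congr 1
        apply Finset.sum_congr rfl
        intro b _
        rw [intervalIntegral.integral_const_mul, integral_pow]
        norm_num
      · intro b _
        apply Continuous.intervalIntegrable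
        continuity
    · intro a _
      apply Continuous.intervalIntegrable
      continuity
  -- evaluate inner sums
  have hInner : ∀ a : ℕ, (∑ b ∈ Finset.range (d+1), (d.choose b : ℝ) * (-1)^b * (1/(((2*N+1+a+b:ℕ):ℝ)+1)))
      = (Nat.factorial d : ℝ) * (Nat.factorial (2*N+1+a) : ℝ) / (Nat.factorial (d+(2*N+1+a)+1) : ℝ) := by
    intro a
    rw [← alt_inv_sum d (2*N+1+a)]
    apply Finset.sum_congr rfl
    intro b _
    push_cast
    ring
  -- final identification
  have key : ∑ j ∈ Finset.range (d+1), (-1:ℝ)^j * ((2*(N+1+d)).choose (2*N+2+d+j) : ℝ)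
        * ((Nat.factorial (2*N+1+j) : ℝ) / (Nat.factorial j : ℝ)) * z^j
      = (((2*(N+1+d)).factorial : ℝ) / ((d.factorial : ℝ) * (d.factorial : ℝ))) *
        ∫ t in (0:ℝ)..1, t^(2*N+1) * ((1 - z*t)^d * (1-t)^d) := by
    rw [hIntegral, Finset.mul_sum]
    apply Finset.sum_congr rfl
    intro a ha
    rw [Finset.mem_range] at ha
    have had : a ≤ d := by omega
    rw [hInner a]
    have hc1 : ((2*(N+1+d)).choose (2*N+2+d+a) : ℝ)
        = ((2*(N+1+d)).factorial : ℝ) / ((Nat.factorial (2*N+2+d+a) : ℝ) * (Nat.factorial (d-a) : ℝ)) := by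
      rw [Nat.cast_choose ℝ (by omega : 2*N+2+d+a ≤ 2*(N+1+d)),
        show 2*(N+1+d) - (2*N+2+d+a) = d - a from by omega]
    have hc2 : ((d.choose a) : ℝ) = (d.factorial : ℝ) / ((Nat.factorial a : ℝ) * (Nat.factorial (d-a) : ℝ)) := by
      rw [Nat.cast_choose ℝ had]
    have hf1 : (Nat.factorial (d+(2*N+1+a)+1) : ℝ) = (Nat.factorial (2*N+2+d+a) : ℝ) := by
      rw [show d+(2*N+1+a)+1 = 2*N+2+d+a from by omega]
    rw [hc1, hc2, hf1]
    have n1 : (Nat.factorial (2*N+2+d+a) : ℝ) ≠ 0 := Nat.cast_ne_zero.mpr (Nat.factorial_ne_zero _)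
    have n2 : (Nat.factorial (d-a) : ℝ) ≠ 0 := Nat.cast_ne_zero.mpr (Nat.factorial_ne_zero _)
    have n3 : (Nat.factorial a : ℝ) ≠ 0 := Nat.cast_ne_zero.mpr (Nat.factorial_ne_zero _)
    have n4 : (Nat.factorial d : ℝ) ≠ 0 := Nat.cast_ne_zero.mpr (Nat.factorial_ne_zero _)
    have n5 : (Nat.factorial (2*N+1+a) : ℝ) ≠ 0 := Nat.cast_ne_zero.mpr (Nat.factorial_ne_zero _)
    rw [show (-z)^a = (-1:ℝ)^a * z^a from by rw [neg_pow]]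
    field_simp
  rw [key]
  apply mul_nonneg _ hInt
  positivity

lemma sum_range_split' {M : Type*} [AddCommMonoid M] (a b : ℕ) (f : ℕ → M) :
    ∑ i ∈ Finset.range (a+b), f i = (∑ i ∈ Finset.range a, f i) + ∑ i ∈ Finset.range b, f (a+i) := by
  induction b with
  | zero => simp
  | succ b IH =>
    rw [show a+(b+1) = (a+b)+1 from rfl, Finset.sum_range_succ, IH, Finset.sum_range_succ,
      add_assoc]

lemma sum_range_split {M : Type*} [AddCommMonoid M] (a b c : ℕ) (f : ℕ → M) (h : c = a + b) :
    ∑ i ∈ Finset.range c, f i = (∑ i ∈ Finset.range a, f i) + ∑ i ∈ Finset.range b, f (a+i) := by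
  subst h; exact sum_range_split' a b f

noncomputable def lowP (N d : ℕ) : ℝ → ℝ :=
  fun y => ∑ m ∈ Finset.range (N+1+d),
    ((-1:ℝ)^m * ((2*(N+1+d)).choose (m+1+(N+1+d)) : ℝ)) * y^(m+N+1)

lemma neg_one_pow_sub {j k : ℕ} (hjk : j ≤ k) : (-1:ℝ)^(k-j) = (-1)^(k+j) := by
  rw [show k+j = (k-j) + 2*j by omega, pow_add, pow_mul, neg_one_sq, one_pow, mul_one]

lemma lowP_eq (N d : ℕ) (y : ℝ) : y^N * (-Pkhat (N+1+d) y) = lowP N d y := by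
  unfold Pkhat Pk lowP
  rw [Finset.sum_range_succ' (fun n => ((2*(N+1+d)).choose (n + (N+1+d)) : ℝ) * (-y)^n) (N+1+d)]
  simp only [pow_zero, mul_one, Nat.zero_add, zero_add]
  rw [add_sub_cancel_right, ← Finset.sum_neg_distrib, Finset.mul_sum]
  apply Finset.sum_congr rfl
  intro m _
  rw [neg_pow y (m+1), show m+N+1 = (m+1)+N by omega, pow_add, pow_succ]
  ring

lemma key_identity (k : ℕ) {y : ℝ} (hy : 0 < y) :
    y^k * Pk k y⁻¹ + y^k * Pkhat k y = (-1:ℝ)^k * (y-1)^(2*k) := by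
  have hy0 : y ≠ 0 := hy.ne'
  have hA : y^k * Pk k y⁻¹ = ∑ i ∈ Finset.range (k+1), (-1:ℝ)^(k+i) * ((2*k).choose i : ℝ) * y^i := by
    unfold Pk
    rw [Finset.mul_sum]
    have step1 : ∀ m ∈ Finset.range (k+1),
        y^k * (((2*k).choose (m+k) : ℝ) * (-y⁻¹)^m)
          = ((2*k).choose (m+k) : ℝ) * (-1:ℝ)^m * y^(k-m) := by
      intro m hm
      rw [Finset.mem_range] at hm
      have hmk : m ≤ k := by omega
      rw [show (-y⁻¹) = (-1) * y⁻¹ by ring, mul_pow, inv_pow]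
      rw [pow_sub₀ y hy0 hmk]
      field_simp
    rw [Finset.sum_congr rfl step1]
    rw [← Finset.sum_range_reflect]
    apply Finset.sum_congr rfl
    intro i hi
    rw [Finset.mem_range] at hi
    have hik : i ≤ k := by omega
    rw [show k+1-1-i = k-i by omega]
    rw [show (k-i)+k = 2*k-i by omega]
    rw [Nat.choose_symm (by omega : i ≤ 2*k)]
    rw [show k-(k-i) = i by omega]
    rw [neg_one_pow_sub hik]
    ring
  have hB : y^k * Pkhat k y = ∑ i ∈ Finset.Ico (k+1) (2*k+1), (-1:ℝ)^(k+i) * ((2*k).choose i : ℝ) * y^i := by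
    unfold Pkhat Pk
    rw [Finset.sum_range_succ' (fun n => ((2*k).choose (n + k) : ℝ) * (-y)^n) k]
    simp only [pow_zero, mul_one, Nat.zero_add, zero_add]
    rw [add_sub_cancel_right]
    rw [Finset.sum_Ico_eq_sum_range, show 2*k+1-(k+1) = k by omega]
    rw [Finset.mul_sum]
    apply Finset.sum_congr rfl
    intro m _
    rw [show k+1+m = (m+1)+k by omega]
    rw [neg_pow y (m+1), show k+((m+1)+k) = 2*k + (m+1) by omega, pow_add (-1:ℝ) (2*k) (m+1),
      pow_mul, neg_one_sq, one_pow, one_mul, pow_add y (m+1) k]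
    ring
  have hC : (-1:ℝ)^k * (y-1)^(2*k) = ∑ i ∈ Finset.range (2*k+1), (-1:ℝ)^(k+i) * ((2*k).choose i : ℝ) * y^i := by
    rw [show y - 1 = y + (-1) by ring, add_pow, Finset.mul_sum]
    apply Finset.sum_congr rfl
    intro i hi
    rw [Finset.mem_range] at hi
    have hik : i ≤ 2*k := by omega
    rw [neg_one_pow_sub hik, show k+i = i + k by omega]
    rw [show (-1:ℝ)^(2*k+i) = (-1)^i by rw [pow_add, pow_mul, neg_one_sq, one_pow, one_mul]]
    ring
  rw [hA, hB, hC, Finset.range_eq_Ico, Finset.range_eq_Ico]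
  exact Finset.sum_Ico_consecutive _ (by omega : 0 ≤ k+1) (by omega : k+1 ≤ 2*k+1)


noncomputable def Qp (N d : ℕ) (z : ℝ) : ℝ :=
  ∑ j ∈ Finset.range (d+1), (-1:ℝ)^j * ((2*(N+1+d)).choose (2*N+2+d+j) : ℝ)
    * ((Nat.factorial (2*N+1+j) : ℝ) / (Nat.factorial j : ℝ)) * z^j

lemma Qp_nonneg' (N d : ℕ) {z : ℝ} (h0 : 0 ≤ z) (h1 : z ≤ 1) : 0 ≤ Qp N d z :=
  Qp_nonneg N d h0 h1

noncomputable def Wfun (N d : ℕ) : ℝ → ℝ :=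
  fun y => (-1:ℝ)^(N+1+d) * ((y^(1+d))⁻¹ * (max (y-1) 0)^(2*(N+1+d)))

lemma rep_low (N d : ℕ) {y : ℝ} (hy : ¬ (1 ≤ y)) :
    y^N * psiK (N+1+d) y = lowP N d y := by
  rw [psiK, if_neg hy]; exact lowP_eq N d y

lemma rep_mid (N d : ℕ) {y : ℝ} (hy : 0 < y) :
    y^N * psiK (N+1+d) y = lowP N d y + Wfun N d y := by
  by_cases h1 : 1 ≤ y
  · rw [psiK, if_pos h1]
    have hid := key_identity (N+1+d) hy
    have hy0 : y ≠ 0 := hy.ne'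
    have hyk : y^(N+1+d) ≠ 0 := pow_ne_zero _ hy0
    have hy1d : y^(1+d) ≠ 0 := pow_ne_zero _ hy0
    have hsplit : y^(N+1+d) = y^N * y^(1+d) := by rw [← pow_add]; congr 1; omega
    have hmax : max (y-1) 0 = y - 1 := max_eq_left (by linarith)
    rw [← lowP_eq N d y]
    unfold Wfun
    rw [hmax]
    have e1 : Pk (N+1+d) y⁻¹ = -Pkhat (N+1+d) y
        + (-1:ℝ)^(N+1+d) * (y-1)^(2*(N+1+d)) / y^(N+1+d) := by
      set A := Pk (N+1+d) y⁻¹ with hA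
      set B := Pkhat (N+1+d) y with hB
      field_simp
      linear_combination hid
    rw [e1, hsplit]
    field_simp
  · rw [rep_low N d h1]
    unfold Wfun
    rw [max_eq_right (by linarith [lt_of_not_ge h1] : y - 1 ≤ 0),
      zero_pow (by omega : 2*(N+1+d) ≠ 0)]
    ring

lemma lowP_contDiff (N d M : ℕ) : ContDiff ℝ (M : ℕ∞) (lowP N d) := by
  unfold lowP
  apply ContDiff.sum
  intro m _
  exact contDiff_const.mul (contDiff_id.pow _)

lemma diffAt_iterated {f : ℝ → ℝ} {x : ℝ} {m n : ℕ} (hf : ContDiffAt ℝ (n : ℕ∞) f x)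
    (hmn : m < n) : DifferentiableAt ℝ (iteratedDeriv m f) x := by
  obtain ⟨u, hu, hcd⟩ := hf.contDiffOn (le_refl _) (by simp)
  obtain ⟨t, hts, hto, hxt⟩ := mem_nhds_iff.mp hu
  have hcd' : ContDiffOn ℝ (n : ℕ∞) f t := hcd.mono hts
  have h1 : DifferentiableOn ℝ (iteratedDerivWithin m f t) t :=
    hcd'.differentiableOn_iteratedDerivWithin (by exact_mod_cast hmn) hto.uniqueDiffOn
  have h2 : Set.EqOn (iteratedDerivWithin m f t) (iteratedDeriv m f) t := by
    intro z hz
    rw [iteratedDerivWithin_eq_iteratedFDerivWithin, iteratedDeriv_eq_iteratedFDeriv,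
      iteratedFDerivWithin_of_isOpen m hto hz]
  exact ((h1 x hxt).congr (fun z hz => (h2 hz).symm) (h2 hxt).symm).differentiableAt
    (hto.mem_nhds hxt)

lemma lowP_iteratedDeriv (N d : ℕ) {x : ℝ} (hx : x ≠ 0) :
    iteratedDeriv (2*N+1) (lowP N d) x = (-1:ℝ)^N * Qp N d x := by
  have h0 : lowP N d = fun y : ℝ => ∑ m ∈ Finset.range (N+1+d),
      ((-1:ℝ)^m * ((2*(N+1+d)).choose (m+1+(N+1+d)) : ℝ)) * y^(((m+N+1 : ℕ) : ℤ)) := by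
    funext y
    apply Finset.sum_congr rfl
    intro m _
    rw [zpow_natCast]
  rw [h0, iteratedDeriv_zpow_sum _ _ _ (2*N+1) x hx]
  rw [sum_range_split N (d+1) (N+1+d) _ (by omega)]
  have hfirst : ∑ m ∈ Finset.range N, ((-1:ℝ)^m * ((2*(N+1+d)).choose (m+1+(N+1+d)) : ℝ))
      * (∏ i ∈ Finset.range (2*N+1), ((((m+N+1 : ℕ) : ℤ) : ℝ) - i)) * x^(((m+N+1 : ℕ) : ℤ) - (2*N+1 : ℕ)) = 0 := by
    apply Finset.sum_eq_zero
    intro m hm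
    rw [Finset.mem_range] at hm
    have hzero : ∏ i ∈ Finset.range (2*N+1), ((((m+N+1 : ℕ) : ℤ) : ℝ) - i) = 0 := by
      apply Finset.prod_eq_zero (Finset.mem_range.mpr (by omega : m+N+1 < 2*N+1))
      push_cast
      ring
    rw [hzero]
    ring
  rw [hfirst, zero_add]
  unfold Qp
  rw [Finset.mul_sum]
  apply Finset.sum_congr rfl
  intro j hj
  have hprod : ∏ i ∈ Finset.range (2*N+1), ((((N+j+N+1 : ℕ) : ℤ) : ℝ) - i)
      = (Nat.factorial (2*N+1+j) : ℝ) / (Nat.factorial j : ℝ) := by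
    rw [← prod_desc (2*N+1) j]
    apply Finset.prod_congr rfl
    intro i _
    push_cast
    ring
  have hxp : x ^ (((N+j+N+1 : ℕ) : ℤ) - (2*N+1 : ℕ)) = x ^ j := by
    rw [show (((N+j+N+1 : ℕ) : ℤ) - (2*N+1 : ℕ)) = (j : ℤ) from by push_cast; ring, zpow_natCast]
  rw [hprod, hxp, show N+j+1+(N+1+d) = 2*N+2+d+j from by omega, pow_add]
  ring

lemma high_eventually (N d : ℕ) {x : ℝ} (hx : 1 < x) :
    (fun y : ℝ => y^N * psiK (N+1+d) y) =ᶠ[nhds x] fun y : ℝ =>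
      ∑ m ∈ Finset.range (N+1+d+1),
        ((-1:ℝ)^m * ((2*(N+1+d)).choose (m+(N+1+d)) : ℝ)) * y^((N : ℤ) - m) := by
  filter_upwards [Ioi_mem_nhds hx] with y hy
  rw [Set.mem_Ioi] at hy
  have hy0 : (0:ℝ) < y := by linarith
  rw [psiK, if_pos hy.le]
  unfold Pk
  rw [Finset.mul_sum]
  apply Finset.sum_congr rfl
  intro m _
  rw [show (-y⁻¹) = (-1) * y⁻¹ from by ring, mul_pow, inv_pow,
    zpow_sub₀ hy0.ne', zpow_natCast, zpow_natCast]
  field_simp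

lemma high_iteratedDeriv (N d : ℕ) {x : ℝ} (hx : 1 < x) :
    iteratedDeriv (2*N+1) (fun y : ℝ => y^N * psiK (N+1+d) y) x
      = (-1:ℝ)^N * (x ^ (-(2*(N:ℤ)+2)) * Qp N d x⁻¹) := by
  have hx0 : (0:ℝ) < x := by linarith
  rw [Filter.EventuallyEq.iteratedDeriv_eq (2*N+1) (high_eventually N d hx)]
  rw [iteratedDeriv_zpow_sum _ _ (fun m => (N : ℤ) - m) (2*N+1) x hx0.ne']
  rw [sum_range_split (N+1) (d+1) (N+1+d+1) _ (by omega)]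
  have hfirst : ∑ m ∈ Finset.range (N+1), ((-1:ℝ)^m * ((2*(N+1+d)).choose (m+(N+1+d)) : ℝ))
      * (∏ i ∈ Finset.range (2*N+1), ((Int.cast ((N : ℤ) - (m:ℤ)) : ℝ) - i)) * x^(((N : ℤ) - m) - (2*N+1 : ℕ)) = 0 := by
    apply Finset.sum_eq_zero
    intro m hm
    rw [Finset.mem_range] at hm
    have hmN : m ≤ N := by omega
    have hzero : ∏ i ∈ Finset.range (2*N+1), ((Int.cast ((N : ℤ) - (m:ℤ)) : ℝ) - i) = 0 := by
      apply Finset.prod_eq_zero (Finset.mem_range.mpr (by omega : N - m < 2*N+1))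
      push_cast [Nat.cast_sub hmN]
      ring
    rw [hzero]
    ring
  rw [hfirst, zero_add]
  unfold Qp
  rw [Finset.mul_sum, Finset.mul_sum]
  apply Finset.sum_congr rfl
  intro j hj
  have hprod : ∏ i ∈ Finset.range (2*N+1), ((Int.cast ((N : ℤ) - ((N+1+j : ℕ):ℤ)) : ℝ) - i)
      = (-1:ℝ) * ((Nat.factorial (2*N+1+j) : ℝ) / (Nat.factorial j : ℝ)) := by
    have h := prod_desc_neg (2*N+1) j
    rw [show ((-1:ℝ))^(2*N+1) = -1 from by
      rw [pow_succ, pow_mul, neg_one_sq, one_pow, one_mul]] at h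
    rw [← h]
    apply Finset.prod_congr rfl
    intro i _
    push_cast
    ring
  have hxp : x ^ (((N : ℤ) - (N+1+j : ℕ)) - (2*N+1 : ℕ)) = x ^ (-(2*(N:ℤ)+2)) * (x⁻¹) ^ j := by
    rw [show (((N : ℤ) - (N+1+j : ℕ)) - (2*N+1 : ℕ)) = (-(2*(N:ℤ)+2)) + (-(j:ℤ)) from by
      push_cast; ring]
    rw [zpow_add₀ hx0.ne', zpow_neg, zpow_neg, zpow_natCast, inv_pow]
  rw [hprod, hxp, show N+1+j+(N+1+d) = 2*N+2+d+j from by omega]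
  rw [show N+1+j = (N+1)+j from rfl, pow_add, pow_succ]
  ring

/-- inequality (8): for `k ≥ 1`, `n = 1, …, k` and `x > 0`,
`(-1)^{n-1} (x^{n-1} ψ_k(x))^{(2n-1)} ≥ 0`. -/
theorem psiK_widder_inequalities (k n : ℕ) (hn : 1 ≤ n) (hnk : n ≤ k)
    (x : ℝ) (hx : 0 < x) :
    0 ≤ (-1 : ℝ) ^ (n - 1) *
      iteratedDeriv (2 * n - 1) (fun y => y ^ (n - 1) * psiK k y) x := by
  obtain ⟨N, rfl⟩ : ∃ N, n = N + 1 := ⟨n-1, by omega⟩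
  obtain ⟨d, rfl⟩ : ∃ d, k = N + 1 + d := ⟨k-(N+1), by omega⟩
  simp only [show 2*(N+1)-1 = 2*N+1 from by omega, Nat.add_sub_cancel]
  have hsign : ∀ r : ℝ, (-1:ℝ)^N * ((-1:ℝ)^N * r) = r := by
    intro r
    rw [← mul_assoc, ← pow_add, show N+N = 2*N from by omega, pow_mul, neg_one_sq, one_pow,
      one_mul]
  rcases lt_trichotomy x 1 with hx1 | hx1 | hx1
  · have hev : (fun y : ℝ => y^N * psiK (N+1+d) y) =ᶠ[nhds x] lowP N d := by
      filter_upwards [Iio_mem_nhds hx1] with y hy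
      rw [Set.mem_Iio] at hy
      exact rep_low N d (not_le.mpr hy)
    rw [Filter.EventuallyEq.iteratedDeriv_eq (2*N+1) hev, lowP_iteratedDeriv N d hx.ne', hsign]
    exact Qp_nonneg' N d hx.le hx1.le
  · subst hx1
    set F := fun y : ℝ => y^N * psiK (N+1+d) y with hF
    have hrep : F =ᶠ[nhds (1:ℝ)] fun y => lowP N d y + Wfun N d y := by
      filter_upwards [Ioi_mem_nhds (zero_lt_one)] with y hy
      rw [Set.mem_Ioi] at hy
      exact rep_mid N d hy
    have hWc : ContDiffAt ℝ ((2*N+1 : ℕ) : ℕ∞) (Wfun N d) 1 := by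
      have hu : ContDiff ℝ ((2*N+1 : ℕ) : ℕ∞) (fun t : ℝ => max t 0 ^ (2*(N+1+d))) := by
        have h := maxpow_contDiff (2*N+1) (2*N+2*d) (by omega)
        rw [show 2*N+2*d+2 = 2*(N+1+d) from by omega] at h
        exact h
      have hcomp : ContDiff ℝ ((2*N+1 : ℕ) : ℕ∞) (fun y : ℝ => max (y-1) 0 ^ (2*(N+1+d))) :=
        hu.comp (contDiff_id.sub contDiff_const)
      have hinv : ContDiffAt ℝ ((2*N+1 : ℕ) : ℕ∞) (fun y : ℝ => (y^(1+d))⁻¹) 1 := by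
        apply ContDiffAt.inv
        · exact (contDiff_id.pow _).contDiffAt
        · norm_num
      exact contDiffAt_const.mul (hinv.mul hcomp.contDiffAt)
    have hFC : ContDiffAt ℝ ((2*N+1 : ℕ) : ℕ∞) F 1 :=
      (((lowP_contDiff N d (2*N+1)).contDiffAt).add hWc).congr_of_eventuallyEq hrep
    have hdiffF : DifferentiableAt ℝ (iteratedDeriv (2*N) F) 1 :=
      diffAt_iterated hFC (by omega)
    have hEqIio : Set.EqOn (iteratedDeriv (2*N) F) (iteratedDeriv (2*N) (lowP N d))
        (Set.Iio 1) :=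
      Set.EqOn.iteratedDeriv_of_isOpen (fun y hy => rep_low N d (not_le.mpr hy)) isOpen_Iio (2*N)
    have hlowdiff : Differentiable ℝ (iteratedDeriv (2*N) (lowP N d)) := fun z =>
      diffAt_iterated ((lowP_contDiff N d (2*N+1)).contDiffAt) (by omega)
    have hval : iteratedDeriv (2*N) F 1 = iteratedDeriv (2*N) (lowP N d) 1 := by
      have h1 : Filter.Tendsto (iteratedDeriv (2*N) F) (nhdsWithin 1 (Set.Iio 1))
          (nhds (iteratedDeriv (2*N) F 1)) :=
        (hdiffF.continuousAt.tendsto).mono_left nhdsWithin_le_nhds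
      have h2 : Filter.Tendsto (iteratedDeriv (2*N) F) (nhdsWithin 1 (Set.Iio 1))
          (nhds (iteratedDeriv (2*N) (lowP N d) 1)) := by
        apply Filter.Tendsto.congr' _
          (((hlowdiff 1).continuousAt.tendsto).mono_left nhdsWithin_le_nhds)
        filter_upwards [self_mem_nhdsWithin] with y hy
        exact (hEqIio hy).symm
      exact tendsto_nhds_unique h1 h2
    rw [iteratedDeriv_succ]
    have hd1 : HasDerivWithinAt (iteratedDeriv (2*N) F) (deriv (iteratedDeriv (2*N) F) 1)
        (Set.Iic 1) 1 := hdiffF.hasDerivAt.hasDerivWithinAt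
    have hd2 : HasDerivWithinAt (iteratedDeriv (2*N) (lowP N d))
        (deriv (iteratedDeriv (2*N) F) 1) (Set.Iic 1) 1 := by
      apply hd1.congr
      · intro y hy
        rcases lt_or_eq_of_le (Set.mem_Iic.mp hy) with h | h
        · exact (hEqIio h).symm
        · subst h; exact hval.symm
      · exact hval.symm
    have hd3 : HasDerivWithinAt (iteratedDeriv (2*N) (lowP N d))
        (deriv (iteratedDeriv (2*N) (lowP N d)) 1) (Set.Iic 1) 1 :=
      (hlowdiff 1).hasDerivAt.hasDerivWithinAt
    have hU : UniqueDiffWithinAt ℝ (Set.Iic (1:ℝ)) 1 :=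
      uniqueDiffOn_Iic 1 1 (Set.mem_Iic.mpr le_rfl)
    have heq : deriv (iteratedDeriv (2*N) F) 1 = deriv (iteratedDeriv (2*N) (lowP N d)) 1 := by
      rw [← hd2.derivWithin hU, ← hd3.derivWithin hU]
    rw [heq, ← iteratedDeriv_succ, lowP_iteratedDeriv N d one_ne_zero, hsign]
    exact Qp_nonneg' N d zero_le_one le_rfl
  · rw [high_iteratedDeriv N d hx1, hsign]
    apply mul_nonneg (zpow_pos hx _).le
    exact Qp_nonneg' N d (inv_nonneg.mpr hx.le) (inv_le_one_of_one_le₀ hx1.le)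
end AuxWidder
end

section
/- For every integer k ≥ 1, the function ψ_k is of class C^{2k−1} on (0,∞); that is, the function equal to P_k(y^{−1}) for y ≥ 1 and to −\hat P_k(y) for 0 < y < 1 is (2k−1)-times continuously differentiable, in particular across y = 1. -/
open Set MeasureTheory Filter

open Set Filter Finset

/-- positive-part power -/
noncomputable def pp (n : ℕ) (x : ℝ) : ℝ := max x 0 ^ n

lemma pp_hasDerivAt (n : ℕ) (x : ℝ) :
    HasDerivAt (pp (n + 2)) (((n : ℝ) + 2) * pp (n + 1) x) x := by
  rcases lt_trichotomy x 0 with hx | rfl | hx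
  · have h0 : pp (n + 1) x = 0 := by
      simp [pp, max_eq_right hx.le]
    have hev : (fun _ : ℝ => (0 : ℝ)) =ᶠ[nhds x] pp (n + 2) := by
      filter_upwards [Iio_mem_nhds hx] with y hy
      simp [pp, max_eq_right (le_of_lt (mem_Iio.mp hy))]
    rw [h0, mul_zero]
    exact (hasDerivAt_const x (0 : ℝ)).congr_of_eventuallyEq hev.symm
  · -- x = 0
    have h0 : pp (n + 1) 0 = 0 := by simp [pp]
    rw [h0, mul_zero]
    rw [hasDerivAt_iff_tendsto_slope]
    apply squeeze_zero_norm' (a := fun y : ℝ => |y| ^ (n + 1))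
    · filter_upwards [self_mem_nhdsWithin] with y (hy : y ≠ 0)
      have h1 : |pp (n + 2) y| ≤ |y| ^ (n + 2) := by
        rw [pp, abs_pow]
        apply pow_le_pow_left₀ (abs_nonneg _)
        rw [abs_of_nonneg (le_max_right _ _)]
        exact max_le (le_abs_self y) (abs_nonneg y)
      have : ‖slope (pp (n + 2)) 0 y‖ = |pp (n + 2) y| / |y| := by
        simp [slope_def_field, pp, abs_div]
      rw [this]
      rw [div_le_iff₀ (abs_pos.mpr hy)]
      calc |pp (n + 2) y| ≤ |y| ^ (n + 2) := h1
        _ = |y| ^ (n + 1) * |y| := by ring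
    · have : Filter.Tendsto (fun y : ℝ => |y| ^ (n + 1)) (nhds 0) (nhds 0) := by
        have : Tendsto (fun y : ℝ => |y| ^ (n + 1)) (nhds 0) (nhds (|(0 : ℝ)| ^ (n + 1))) :=
          (continuous_abs.pow (n + 1)).tendsto (0 : ℝ)
        convert this using 2; simp
      exact this.mono_left nhdsWithin_le_nhds
  · have hev : (fun y : ℝ => y ^ (n + 2)) =ᶠ[nhds x] pp (n + 2) := by
      filter_upwards [Ioi_mem_nhds hx] with y hy
      simp [pp, max_eq_left (le_of_lt (mem_Ioi.mp hy))]
    have h0 : pp (n + 1) x = x ^ (n + 1) := by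
      simp [pp, max_eq_left hx.le]
    have := hasDerivAt_pow (n + 2) x
    rw [h0]
    have h2 := this.congr_of_eventuallyEq hev.symm
    refine h2.congr_deriv ?_
    push_cast
    simp

lemma pp_contDiff : ∀ n : ℕ, ContDiff ℝ n (pp (n + 1)) := by
  intro n
  induction n with
  | zero =>
    rw [CharP.cast_eq_zero, contDiff_zero]
    unfold pp
    continuity
  | succ m ih =>
    have hd : deriv (pp (m + 2)) = fun x => ((m : ℝ) + 2) * pp (m + 1) x :=
      funext fun x => (pp_hasDerivAt m x).deriv
    rw [show ((m + 1 : ℕ) : WithTop ℕ∞) = (m : ℕ) + 1 by push_cast; rfl]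
    rw [contDiff_succ_iff_deriv]
    refine ⟨fun x => (pp_hasDerivAt m x).differentiableAt, ?_, ?_⟩
    · intro h; simp at h
    · rw [hd]; exact contDiff_const.mul ih

lemma key (k : ℕ) {y : ℝ} (hy : y ≠ 0) :
    Pk k y⁻¹ = -Pkhat k y + (-1) ^ k * (y ^ k)⁻¹ * (y - 1) ^ (2 * k) := by
  have hky : y ^ k ≠ 0 := pow_ne_zero _ hy
  set g : ℕ → ℝ := fun j => ((2 * k).choose j : ℝ) * (-y) ^ j with hg
  have hsum : ((y - 1) ^ (2 * k) : ℝ) = ∑ j ∈ Finset.range (2 * k + 1), g j := by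
    have h1 : ((y - 1) ^ (2 * k) : ℝ) = (-y + 1) ^ (2 * k) := by
      rw [show (-y + 1 : ℝ) = -(y - 1) by ring, Even.neg_pow (even_two_mul k)]
    rw [h1, add_pow]
    apply Finset.sum_congr rfl
    intro j hj
    simp [hg]
    ring
  have hupper : ∑ n ∈ Finset.range (k + 1), g (k + n) = (-1) ^ k * (y ^ k * Pk k y) := by
    rw [Pk, Finset.mul_sum, Finset.mul_sum]
    apply Finset.sum_congr rfl
    intro n _
    rw [hg]
    simp only [Nat.add_comm k n]
    rw [pow_add, neg_pow y k]
    ring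
  have hlower : ∑ j ∈ Finset.range (k + 1), g j
      = (-1) ^ k * (y ^ k * Pk k y⁻¹) := by
    rw [← Finset.sum_range_reflect]
    rw [Pk, Finset.mul_sum, Finset.mul_sum]
    apply Finset.sum_congr rfl
    intro j hj
    have hjk : j ≤ k := Nat.lt_succ_iff.mp (Finset.mem_range.mp hj)
    rw [hg]
    simp only [Nat.add_sub_cancel]
    have hch : (((2 * k).choose (k - j) : ℕ) : ℝ) = (((2 * k).choose (j + k) : ℕ) : ℝ) := by
      rw [show k - j = 2 * k - (j + k) by omega, Nat.choose_symm (by omega)]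
    have hsign : ((-1 : ℝ)) ^ (k - j) = (-1) ^ (k + j) := by
      rw [show k + j = (k - j) + 2 * j by omega, pow_add, pow_mul]
      norm_num
    rw [hch, neg_pow y (k - j), hsign, pow_add, pow_sub₀ y hy hjk,
      neg_pow y⁻¹ j, inv_pow]
    ring
  have hsplit : ∑ j ∈ Finset.range (2 * k + 1), g j
      = ∑ j ∈ Finset.range k, g j + ∑ n ∈ Finset.range (k + 1), g (k + n) := by
    rw [show 2 * k + 1 = k + (k + 1) by ring, Finset.sum_range_add]
  have hlow' : ∑ j ∈ Finset.range k, g j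
      = (-1) ^ k * (y ^ k * Pk k y⁻¹) - g k := by
    rw [← hlower, Finset.sum_range_succ]; ring
  have hgk : g k = (-1) ^ k * (((2 * k).choose k : ℝ) * y ^ k) := by
    rw [hg, neg_pow]; ring
  have main : (y - 1) ^ (2 * k)
      = (-1) ^ k * (y ^ k * Pk k y⁻¹ + y ^ k * Pk k y - ((2 * k).choose k : ℝ) * y ^ k) := by
    rw [hsum, hsplit, hlow', hupper, hgk]; ring
  have hsq : ((-1 : ℝ)) ^ k * (-1) ^ k = 1 := by
    rw [← pow_add, ← two_mul, pow_mul]; norm_num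
  have hB : y ^ k * Pk k y⁻¹ + y ^ k * Pk k y - ((2 * k).choose k : ℝ) * y ^ k
      = y ^ k * (Pk k y⁻¹ + Pk k y - ((2 * k).choose k : ℝ)) := by ring
  rw [Pkhat, main, hB]
  rw [show ((-1 : ℝ)) ^ k * (y ^ k)⁻¹ *
        ((-1) ^ k * (y ^ k * (Pk k y⁻¹ + Pk k y - ((2 * k).choose k : ℝ))))
      = ((-1 : ℝ) ^ k * (-1) ^ k) * ((y ^ k)⁻¹ * (y ^ k * (Pk k y⁻¹ + Pk k y - ((2 * k).choose k : ℝ)))) from by ring,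
    hsq, one_mul, inv_mul_cancel_left₀ hky]
  ring

/-- for every `k ≥ 1`, the function `ψ_k` is of class `C^{2k-1}`
on `(0,∞)`, in particular across `y = 1`. -/
theorem psiK_contDiffOn (k : ℕ) (hk : 1 ≤ k) :
    ContDiffOn ℝ (2 * k - 1 : ℕ) (psiK k) (Ioi 0) := by
  have hpp : ContDiff ℝ (2 * k - 1 : ℕ) (pp (2 * k)) := by
    have h := pp_contDiff (2 * k - 1)
    rwa [show 2 * k - 1 + 1 = 2 * k by omega] at h
  have hF : ContDiffOn ℝ (2 * k - 1 : ℕ)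
      (fun y => -Pkhat k y + (-1) ^ k * (y ^ k)⁻¹ * pp (2 * k) (y - 1)) (Ioi 0) := by
    apply ContDiffOn.add
    · apply ContDiff.contDiffOn
      apply ContDiff.neg
      unfold Pkhat Pk
      exact (ContDiff.sum fun i _ => contDiff_const.mul (contDiff_id.neg.pow _)).sub
        contDiff_const
    · apply ContDiffOn.mul
      · apply ContDiffOn.mul contDiffOn_const
        exact ((contDiff_id.pow k).contDiffOn).inv fun x hx => pow_ne_zero _ (ne_of_gt hx)
      · exact (hpp.comp (contDiff_id.sub contDiff_const)).contDiffOn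
  apply hF.congr
  intro y hy
  have hy0 : (0 : ℝ) < y := hy
  unfold psiK
  split_ifs with h
  · rw [key k (ne_of_gt hy0)]
    have : pp (2 * k) (y - 1) = (y - 1) ^ (2 * k) := by
      rw [pp, max_eq_left (by linarith : (0 : ℝ) ≤ y - 1)]
    rw [this]
  · have : pp (2 * k) (y - 1) = 0 := by
      rw [pp, max_eq_right (by linarith : y - 1 ≤ 0)]
      exact zero_pow (by omega)
    rw [this, mul_zero, add_zero]
end

section
/- For every integer k ≥ 1: P_k(1) = (1/2) C(2k,k), and for every i = 1,…,k one has P_k^{(i)}(1) = (−1)^i i! C(2k−i−1, k−1). -/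
open Set MeasureTheory Filter

section AuxPk
open Finset
-- helper: (-1)^(k-r) = (-1)^k * (-1)^r for r ≤ k
lemma neg_one_pow_sub' {k r : ℕ} (h : r ≤ k) : ((-1:ℝ)) ^ (k - r) = (-1) ^ k * (-1) ^ r := by
  have : ((-1:ℝ)) ^ (k - r) * (-1) ^ r = (-1) ^ k := by
    rw [← pow_add, Nat.sub_add_cancel h]
  calc ((-1:ℝ)) ^ (k - r) = (-1)^(k-r) * ((-1)^r * (-1)^r) := by
        rw [← pow_add, ← two_mul, pow_mul]; norm_num
    _ = (-1) ^ k * (-1) ^ r := by rw [← mul_assoc, this]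

-- Lemma A: partial alternating sum
lemma altsum (N : ℕ) : ∀ m : ℕ,
    ∑ r ∈ range (m + 1), (-1:ℝ) ^ r * ((N + 1).choose r : ℝ) = (-1) ^ m * (N.choose m : ℝ) := by
  intro m
  induction m with
  | zero => simp
  | succ m ih =>
      rw [Finset.sum_range_succ, ih]
      have : (N + 1).choose (m + 1) = N.choose m + N.choose (m + 1) := Nat.choose_succ_succ N m
      rw [this]
      push_cast
      ring

-- Lemma B
lemma keyB : ∀ i m N : ℕ,
    ∑ j ∈ range (m + 1), (-1:ℝ) ^ j * ((i + j).choose j : ℝ) * ((N + i + 1).choose (m - j) : ℝ)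
      = (N.choose m : ℝ) := by
  intro i
  induction i with
  | zero =>
      intro m N
      simp only [Nat.zero_add, Nat.add_zero, Nat.choose_self, Nat.cast_one, mul_one]
      rw [← Finset.sum_range_reflect]
      have h1 : ∀ j ∈ range (m + 1),
          (-1:ℝ) ^ (m + 1 - 1 - j) * ((N + 1).choose (m - (m + 1 - 1 - j)) : ℝ)
          = (-1) ^ m * ((-1) ^ j * ((N + 1).choose j : ℝ)) := by
        intro j hj
        have hjm : j ≤ m := Nat.lt_succ_iff.mp (Finset.mem_range.mp hj)
        have e1 : m + 1 - 1 - j = m - j := by omega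
        rw [e1, Nat.sub_sub_self hjm, neg_one_pow_sub' hjm]
        ring
      rw [Finset.sum_congr rfl h1, ← Finset.mul_sum, altsum, ← mul_assoc, ← pow_add, ← two_mul,
        pow_mul]
      norm_num
  | succ i ihI =>
      intro m
      induction m with
      | zero => intro N; simp
      | succ m ihM =>
          intro N
          -- peel j = 0
          rw [Finset.sum_range_succ']
          have hpas : ∀ j : ℕ, (i + 1 + (j + 1)).choose (j + 1)
              = (i + 1 + j).choose j + (i + 1 + j).choose (j + 1) := by
            intro j
            have : i + 1 + (j + 1) = (i + 1 + j) + 1 := by ring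
            rw [this, Nat.choose_succ_succ]
          have hsplit : ∀ j ∈ range (m + 1),
              (-1:ℝ) ^ (j+1) * ((i + 1 + (j+1)).choose (j+1) : ℝ) * ((N + (i+1) + 1).choose (m + 1 - (j+1)) : ℝ)
              = -((-1:ℝ) ^ j * ((i + 1 + j).choose j : ℝ) * ((N + (i+1) + 1).choose (m - j) : ℝ))
                + -((-1:ℝ) ^ j * ((i + 1 + j).choose (j+1) : ℝ) * ((N + (i+1) + 1).choose (m - j) : ℝ)) := by
            intro j hj
            rw [hpas j]
            have : m + 1 - (j + 1) = m - j := by omega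
            rw [this]
            push_cast; ring
          rw [Finset.sum_congr rfl hsplit, Finset.sum_add_distrib, Finset.sum_neg_distrib,
            Finset.sum_neg_distrib, ihM N]
          -- remaining sum: relate to ihI at (m+1, N+1)
          have hI := ihI (m + 1) (N + 1)
          rw [Finset.sum_range_succ'] at hI
          have h2 : ∀ j ∈ range (m + 1),
              (-1:ℝ) ^ (j+1) * ((i + (j+1)).choose (j+1) : ℝ) * (((N+1) + i + 1).choose (m + 1 - (j+1)) : ℝ)
              = -((-1:ℝ) ^ j * ((i + 1 + j).choose (j+1) : ℝ) * ((N + (i+1) + 1).choose (m - j) : ℝ)) := by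
            intro j hj
            have e1 : i + (j + 1) = i + 1 + j := by ring
            have e2 : m + 1 - (j + 1) = m - j := by omega
            have e3 : N + 1 + i + 1 = N + (i + 1) + 1 := by ring
            rw [e1, e2, e3]; push_cast; ring
          rw [Finset.sum_congr rfl h2, Finset.sum_neg_distrib] at hI
          simp only [Nat.choose_zero_right, pow_zero, Nat.cast_one, one_mul, mul_one, Nat.sub_zero] at hI ⊢
          have e3 : N + 1 + i + 1 = N + (i + 1) + 1 := by ring
          rw [e3] at hI
          have hP : ((N + 1).choose (m + 1) : ℝ) = (N.choose m : ℝ) + (N.choose (m+1) : ℝ) := by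
            rw [Nat.choose_succ_succ]; push_cast; ring
          linarith [hI, hP]

-- iterated derivative of a polynomial-type sum
lemma iteratedDeriv_poly (m : ℕ) (a : ℕ → ℝ) : ∀ i : ℕ,
    iteratedDeriv i (fun x : ℝ => ∑ n ∈ range m, a n * x ^ n)
      = fun x => ∑ n ∈ range m, a n * (n.descFactorial i : ℝ) * x ^ (n - i) := by
  intro i
  induction i with
  | zero => simp
  | succ i ih =>
      rw [iteratedDeriv_succ, ih]
      funext x
      have hd : HasDerivAt (fun x : ℝ => ∑ n ∈ range m, a n * (n.descFactorial i : ℝ) * x ^ (n - i))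
          (∑ n ∈ range m, a n * (n.descFactorial i : ℝ) * (((n - i : ℕ) : ℝ) * x ^ (n - i - 1))) x := by
        apply HasDerivAt.fun_sum
        intro n _
        exact (hasDerivAt_pow (n - i) x).const_mul _
      rw [hd.deriv]
      apply Finset.sum_congr rfl
      intro n _
      rw [Nat.descFactorial_succ, Nat.sub_sub]
      push_cast
      ring


/-- for `k ≥ 1`, `P_k(1) = (1/2) C(2k,k)` and
`P_k^{(i)}(1) = (-1)^i i! C(2k-i-1, k-1)` for `i = 1, …, k`. -/
theorem Pk_derivatives_at_one (k : ℕ) (hk : 1 ≤ k) :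
    Pk k 1 = ((2 * k).choose k : ℝ) / 2 ∧
    ∀ i, 1 ≤ i → i ≤ k →
      iteratedDeriv i (Pk k) 1
        = (-1 : ℝ) ^ i * (i.factorial : ℝ) * ((2 * k - i - 1).choose (k - 1) : ℝ) := by
  have hPk : Pk k = fun x : ℝ =>
      ∑ n ∈ range (k + 1), (((2 * k).choose (n + k) : ℝ) * (-1) ^ n) * x ^ n := by
    funext x
    unfold Pk
    refine Finset.sum_congr rfl fun n _ => ?_
    rw [neg_pow]
    ring
  have h2 : (2 * k).choose k = 2 * (2 * k - 1).choose k := by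
    have e1 : 2 * k = (2 * k - 1) + 1 := by omega
    have e2 : k = (k - 1) + 1 := by omega
    have hps := Nat.choose_succ_succ (2 * k - 1) (k - 1)
    simp only [Nat.succ_eq_add_one] at hps
    rw [← e1, ← e2] at hps
    have hs : (2 * k - 1).choose (k - 1) = (2 * k - 1).choose k := by
      have := Nat.choose_symm (show k ≤ 2 * k - 1 by omega)
      rwa [show 2 * k - 1 - k = k - 1 by omega] at this
    omega
  constructor
  · rw [hPk]
    simp only [one_pow, mul_one]
    have hsym : ∀ n ∈ range (k + 1),
        ((2 * k).choose (n + k) : ℝ) * (-1 : ℝ) ^ n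
          = (-1 : ℝ) ^ n * ((2 * k).choose (k - n) : ℝ) := by
      intro n hn
      have hn' : n ≤ k := Nat.lt_succ_iff.mp (Finset.mem_range.mp hn)
      have : (2 * k).choose (n + k) = (2 * k).choose (k - n) := by
        rw [← Nat.choose_symm (show n + k ≤ 2 * k by omega)]
        congr 1
        omega
      rw [this]; ring
    rw [Finset.sum_congr rfl hsym, ← Finset.sum_range_reflect]
    have h1 : ∀ j ∈ range (k + 1),
        (-1 : ℝ) ^ (k + 1 - 1 - j) * ((2 * k).choose (k - (k + 1 - 1 - j)) : ℝ)
          = (-1 : ℝ) ^ k * ((-1 : ℝ) ^ j * (((2 * k - 1) + 1).choose j : ℝ)) := by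
      intro j hj
      have hjm : j ≤ k := Nat.lt_succ_iff.mp (Finset.mem_range.mp hj)
      have e1 : k + 1 - 1 - j = k - j := by omega
      have e2 : k - (k - j) = j := by omega
      have e3 : 2 * k - 1 + 1 = 2 * k := by omega
      rw [e1, e2, e3, neg_one_pow_sub' hjm]
      ring
    rw [Finset.sum_congr rfl h1, ← Finset.mul_sum, altsum (2 * k - 1) k, ← mul_assoc, ← pow_add,
      ← two_mul, pow_mul]
    rw [h2]
    push_cast
    ring
  · intro i hi1 hik
    rw [hPk, iteratedDeriv_poly]
    simp only [one_pow, mul_one]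
    -- restrict the sum to n ≥ i
    have hsub : ∑ n ∈ Finset.Ico i (k + 1),
          ((2 * k).choose (n + k) : ℝ) * (-1 : ℝ) ^ n * (n.descFactorial i : ℝ)
        = ∑ n ∈ range (k + 1),
          ((2 * k).choose (n + k) : ℝ) * (-1 : ℝ) ^ n * (n.descFactorial i : ℝ) := by
      apply Finset.sum_subset
      · intro x hx
        simp only [Finset.mem_Ico] at hx
        exact Finset.mem_range.mpr hx.2
      · intro x hx hx'
        simp only [Finset.mem_range] at hx
        simp only [Finset.mem_Ico, not_and, not_le] at hx'
        have : x < i := by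
          rcases lt_or_ge x i with h | h
          · exact h
          · exact absurd (hx' h) (by omega)
        rw [Nat.descFactorial_eq_zero_iff_lt.mpr this]
        simp
    rw [← hsub, Finset.sum_Ico_eq_sum_range]
    have hterm : ∀ j ∈ range (k + 1 - i),
        ((2 * k).choose ((i + j) + k) : ℝ) * (-1 : ℝ) ^ (i + j) * (((i + j).descFactorial i : ℕ) : ℝ)
          = ((-1 : ℝ) ^ i * (i.factorial : ℝ)) *
            ((-1 : ℝ) ^ j * ((i + j).choose j : ℝ) * (((2 * k - i - 1) + i + 1).choose ((k - i) - j) : ℝ)) := by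
      intro j hj
      have hjm : j ≤ k - i := by
        have := Finset.mem_range.mp hj; omega
      have hc1 : (2 * k).choose ((i + j) + k) = (2 * k).choose ((k - i) - j) := by
        rw [← Nat.choose_symm (show (i + j) + k ≤ 2 * k by omega)]
        congr 1
        omega
      have hc2 : (i + j).descFactorial i = i.factorial * (i + j).choose j := by
        rw [Nat.descFactorial_eq_factorial_mul_choose]
        congr 1
        have h' := Nat.choose_symm (show i ≤ i + j from Nat.le_add_right i j)
        rw [show i + j - i = j by omega] at h'
        exact h'.symm
      have hc3 : (2 * k - i - 1) + i + 1 = 2 * k := by omega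
      rw [hc1, hc2, hc3, pow_add]
      push_cast
      ring
    rw [Finset.sum_congr rfl hterm, ← Finset.mul_sum]
    have hr : k + 1 - i = (k - i) + 1 := by omega
    rw [hr, keyB i (k - i) (2 * k - i - 1)]
    have : (2 * k - i - 1).choose (k - i) = (2 * k - i - 1).choose (k - 1) := by
      have := Nat.choose_symm (show k - 1 ≤ 2 * k - i - 1 by omega)
      rwa [show 2 * k - i - 1 - (k - 1) = k - i by omega] at this
    rw [this]

end AuxPk
end

section
/- For an integer k ≥ 1 define π_k(x) = (−1)^k d^{2k−1}/dx^{2k−1} ( x^k ψ_k(x) ) on (0,∞). Then π_k is continuous on (0,∞), π_k'(x) = −(2k)! for 0 < x < 1, and π_k'(x) = 0 for x > 1; in particular π_k is convex on (0,∞). -/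
open Set MeasureTheory Filter

open Topology

noncomputable def ramp (y : ℝ) : ℝ := max (y - 1) 0

lemma ramp_continuous : Continuous ramp :=
  (continuous_id.sub continuous_const).max continuous_const

lemma ramp_hasDerivAt (n : ℕ) (hn : 1 ≤ n) (x : ℝ) :
    HasDerivAt (fun y => ramp y ^ (n + 1)) (((n : ℝ) + 1) * ramp x ^ n) x := by
  have hn0 : n ≠ 0 := by omega
  rcases lt_trichotomy x 1 with hx | hx | hx
  · have hr : ramp x = 0 := max_eq_right (by linarith)
    rw [show (((n:ℝ)+1) * ramp x ^ n) = 0 by simp [hr, zero_pow hn0]]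
    have hev : (fun y => ramp y ^ (n + 1)) =ᶠ[𝓝 x] fun _ => (0:ℝ) := by
      filter_upwards [Iio_mem_nhds hx] with y hy
      have : ramp y = 0 := max_eq_right (by simp only [mem_Iio] at hy; linarith)
      simp [this]
    exact (hasDerivAt_const x 0).congr_of_eventuallyEq hev
  · subst hx
    have hr : ramp 1 = 0 := by simp [ramp]
    rw [show (((n:ℝ)+1) * ramp 1 ^ n) = 0 by simp [hr, zero_pow hn0]]
    rw [hasDerivAt_iff_tendsto_slope]
    refine squeeze_zero_norm' (a := fun y => |y - 1| ^ n) ?_ ?_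
    · filter_upwards [self_mem_nhdsWithin] with y hy
      have hy1 : y ≠ 1 := by simpa using hy
      have habs : |y - 1| ≠ 0 := by simp [sub_eq_zero, hy1]
      have h2 : (0:ℝ) ≤ ramp y := le_max_right _ _
      have h1 : ramp y ≤ |y - 1| := max_le (le_abs_self _) (abs_nonneg _)
      have h3 : ramp y ^ (n+1) ≤ |y-1| ^ (n+1) := pow_le_pow_left₀ h2 h1 _
      have hs : slope (fun y => ramp y ^ (n+1)) 1 y = (ramp y ^ (n+1)) / (y - 1) := by
        rw [slope_def_field, hr]; simp [zero_pow]
      rw [hs]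
      calc ‖ramp y ^ (n+1) / (y - 1)‖ = ramp y ^ (n+1) / |y - 1| := by
            rw [norm_div, norm_pow, Real.norm_eq_abs, Real.norm_eq_abs, abs_of_nonneg h2]
        _ ≤ |y - 1| ^ (n+1) / |y - 1| := by gcongr
        _ = |y - 1| ^ n := by
            rw [pow_succ, mul_div_assoc, div_self habs, mul_one]
    · have hc : ContinuousAt (fun y : ℝ => |y - 1| ^ n) 1 :=
        (((continuous_id.sub continuous_const).abs).pow n).continuousAt
      have h5 : Tendsto (fun y : ℝ => |y - 1| ^ n) (𝓝[≠] 1) (𝓝 (|1 - (1:ℝ)| ^ n)) :=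
        tendsto_nhdsWithin_of_tendsto_nhds hc.tendsto
      simpa [zero_pow hn0] using h5
  · have hr : ramp x = x - 1 := max_eq_left (by linarith)
    have hev : (fun y => ramp y ^ (n + 1)) =ᶠ[𝓝 x] fun y => (y - 1) ^ (n+1) := by
      filter_upwards [Ioi_mem_nhds hx] with y hy
      rw [show ramp y = y - 1 from max_eq_left (by simp only [mem_Ioi] at hy; linarith)]
    have h0 : HasDerivAt (fun y : ℝ => (y - 1)^(n+1)) ((↑(n+1) : ℝ) * (x-1)^(n+1-1) * 1) x :=
      ((hasDerivAt_id x).sub_const 1).pow (n+1)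
    have h1 := h0.congr_of_eventuallyEq hev
    refine h1.congr_deriv ?_
    rw [hr]; push_cast; ring_nf

lemma ramp_pow_deriv (n : ℕ) (hn : 1 ≤ n) :
    deriv (fun y => ramp y ^ (n + 1)) = fun x => ((n:ℝ)+1) * ramp x ^ n :=
  funext fun x => (ramp_hasDerivAt n hn x).deriv

lemma contDiff_ramp_pow (m : ℕ) : ContDiff ℝ m (fun y : ℝ => ramp y ^ (m + 1)) := by
  induction m with
  | zero => exact contDiff_zero.mpr (by simpa using ramp_continuous.pow 1)
  | succ i ih =>
    rw [show ((i+1 : ℕ) : WithTop ℕ∞) = (i : ℕ) + 1 by push_cast; rfl]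
    refine contDiff_succ_iff_deriv.mpr ⟨fun x => (ramp_hasDerivAt (i+1) (by omega) x).differentiableAt, by simp, ?_⟩
    rw [ramp_pow_deriv (i+1) (by omega)]
    exact contDiff_const.mul (by exact_mod_cast ih)

lemma iteratedDeriv_ramp_pow (N j : ℕ) (hj : j + 1 ≤ N) :
    iteratedDeriv j (fun y => ramp y ^ N) = fun y => ((N.descFactorial j : ℝ)) * ramp y ^ (N - j) := by
  induction j with
  | zero => simp
  | succ i ih =>
    rw [iteratedDeriv_succ, ih (by omega)]
    funext x
    have h2 : 1 ≤ N - i - 1 := by omega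
    have hd := ((ramp_hasDerivAt (N - i - 1) h2 x).const_mul ((N.descFactorial i : ℝ))).deriv
    rw [show N - i - 1 + 1 = N - i from by omega] at hd
    have hc : ((N - i - 1 : ℕ) : ℝ) + 1 = ((N - i : ℕ) : ℝ) := by
      rw [show N - i = (N - i - 1) + 1 from by omega]; push_cast; ring
    rw [hd, hc, Nat.descFactorial_succ, show N - i - 1 = N - (i+1) from by omega]
    push_cast
    ring

lemma neg_one_pow_eq_of_mod (a b : ℕ) (h : a % 2 = b % 2) : (-1:ℝ)^a = (-1)^b := by
  rw [← Nat.div_add_mod a 2, ← Nat.div_add_mod b 2, pow_add, pow_add, pow_mul, pow_mul]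
  norm_num [h]

lemma iteratedDeriv_monomial_sum {ι : Type*} (s : Finset ι) (c : ι → ℝ) (N : ι → ℕ) (j : ℕ) :
    iteratedDeriv j (fun y : ℝ => ∑ i ∈ s, c i * y ^ N i)
      = fun y => ∑ i ∈ s, (c i * ((N i).descFactorial j : ℝ)) * y ^ (N i - j) := by
  induction j with
  | zero => simp
  | succ j ih =>
    rw [iteratedDeriv_succ, ih]
    funext x
    rw [deriv_fun_sum (fun i _ => ((differentiableAt_pow _).const_mul _))]
    apply Finset.sum_congr rfl
    intro i _
    rw [((hasDerivAt_pow (N i - j) x).const_mul ((c i * ((N i).descFactorial j : ℝ)))).deriv,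
      Nat.descFactorial_succ, show N i - j - 1 = N i - (j+1) from by omega]
    push_cast
    ring

noncomputable def aCoef (k n : ℕ) : ℝ :=
  if n = 0 then 0 else (-1:ℝ)^(n+1) * ((2*k).choose (n+k) : ℝ)

lemma Qs_eq (k : ℕ) (y : ℝ) :
    (∑ n ∈ Finset.range (k+1), aCoef k n * y ^ (n+k))
      = ((2*k).choose k : ℝ) * y^k - y^k * Pk k y := by
  rw [Pk, Finset.mul_sum, eq_sub_iff_add_eq, ← Finset.sum_add_distrib]
  rw [Finset.sum_eq_single_of_mem 0 (Finset.mem_range.mpr k.succ_pos)]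
  · simp [aCoef, mul_comm]
  · intro n _ hn0
    rw [aCoef, if_neg hn0, neg_pow, pow_add, pow_succ]
    ring

lemma key_id (k : ℕ) (y : ℝ) (hy : 0 < y) :
    y^k * Pk k y⁻¹
      = (∑ n ∈ Finset.range (k+1), aCoef k n * y ^ (n+k)) + (-1:ℝ)^k * (y - 1)^(2*k) := by
  have hy0 : y ≠ 0 := ne_of_gt hy
  -- expand LHS
  have hL : y^k * Pk k y⁻¹
      = ∑ n ∈ Finset.range (k+1), ((2*k).choose (n+k) : ℝ) * (-1)^n * y^(k-n) := by
    rw [Pk, Finset.mul_sum]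
    apply Finset.sum_congr rfl
    intro n hn
    have hn' : n ≤ k := by have := Finset.mem_range.mp hn; omega
    have hsplit : y ^ k = y^(k-n) * y^n := by rw [← pow_add]; congr 1; omega
    rw [hsplit, neg_pow, inv_pow]
    field_simp
  -- expand the binomial
  have hT : (-1:ℝ)^k * (y - 1)^(2*k)
      = ∑ m ∈ Finset.range (2*k+1), (-1:ℝ)^(m+k) * ((2*k).choose m : ℝ) * y^m := by
    have h1 : (y - 1 : ℝ) = -(1 - y) := by ring
    rw [h1, Even.neg_pow (even_two_mul k), show (1 - y : ℝ) = -y + 1 from by ring, add_pow,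
      Finset.mul_sum]
    apply Finset.sum_congr rfl
    intro m _
    rw [neg_pow, pow_add]
    push_cast
    ring
  set B : ℕ → ℝ := fun m => (-1:ℝ)^(m+k) * ((2*k).choose m : ℝ) * y^m with hB
  have hsplit : ∑ m ∈ Finset.range (2*k+1), B m
      = (∑ i ∈ Finset.range k, B i) + ∑ i ∈ Finset.range (k+1), B (k + i) := by
    rw [show 2*k+1 = k + (k+1) from by omega, Finset.sum_range_add]
  -- Claim A : Qs + ∑_{i∈range(k+1)} B (k+i) = C y^k
  have hA : (∑ n ∈ Finset.range (k+1), aCoef k n * y ^ (n+k))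
      + (∑ i ∈ Finset.range (k+1), B (k + i)) = ((2*k).choose k : ℝ) * y^k := by
    rw [← Finset.sum_add_distrib]
    rw [Finset.sum_eq_single_of_mem 0 (Finset.mem_range.mpr k.succ_pos)]
    · simp [aCoef, hB]
    · intro n _ hn0
      rw [hB]
      simp only
      rw [show (2*k).choose (k+n) = (2*k).choose (n+k) from by rw [Nat.add_comm k n],
        neg_one_pow_eq_of_mod (k+n+k) n (by omega),
        show y ^ (k+n) = y ^ (n+k) from by rw [Nat.add_comm k n],
        aCoef, if_neg hn0, pow_succ]
      ring
  -- Claim B : ∑_{i∈range k} B i = LHS-sum minus its 0 term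
  have hBclaim : ∑ i ∈ Finset.range k, B i
      = (∑ n ∈ Finset.range (k+1), ((2*k).choose (n+k) : ℝ) * (-1)^n * y^(k-n))
        - ((2*k).choose k : ℝ) * y^k := by
    rw [Finset.sum_range_succ' (fun n => ((2*k).choose (n+k) : ℝ) * (-1)^n * y^(k-n)) k]
    simp only [pow_zero, Nat.zero_add, Nat.sub_zero]
    rw [← Finset.sum_range_reflect (fun i => B i) k]
    have : ∀ i ∈ Finset.range k, B (k - 1 - i)
        = ((2*k).choose (i+1+k) : ℝ) * (-1)^(i+1) * y^(k-(i+1)) := by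
      intro i hi
      have hik : i < k := Finset.mem_range.mp hi
      rw [hB]
      simp only
      rw [show (2*k).choose (k-1-i) = (2*k).choose (i+1+k) from by
        rw [show k - 1 - i = 2*k - (i+1+k) from by omega]
        exact Nat.choose_symm (by omega),
        neg_one_pow_eq_of_mod (k-1-i+k) (i+1) (by omega),
        show y ^ (k-1-i) = y ^ (k-(i+1)) from by rw [show k-1-i = k-(i+1) from by omega]]
      ring
    rw [Finset.sum_congr rfl this]
    ring
  rw [hL, hT, hsplit]
  linarith [hA, hBclaim]

lemma convexOn_congr' {s : Set ℝ} {f g : ℝ → ℝ} (hf : ConvexOn ℝ s f)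
    (h : ∀ x ∈ s, g x = f x) : ConvexOn ℝ s g := by
  refine ⟨hf.1, fun x hx y hy a b ha hb hab => ?_⟩
  rw [h x hx, h y hy, h _ (hf.1 hx hy ha hb hab)]
  exact hf.2 hx hy ha hb hab

lemma affine_convexOn (a b : ℝ) : ConvexOn ℝ (Ioi (0:ℝ)) (fun x => a * x + b) := by
  refine ⟨convex_Ioi 0, fun x _ y _ p q hp hq hpq => ?_⟩
  simp only [smul_eq_mul]
  apply le_of_eq
  linear_combination (-b : ℝ) * hpq

/-- for `k ≥ 1`, setting `π_k(x) = (-1)^k (x^k ψ_k(x))^{(2k-1)}`,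
the function `π_k` is continuous on `(0,∞)`, has derivative `-(2k)!` on `(0,1)` and
derivative `0` on `(1,∞)`; in particular it is convex on `(0,∞)`. -/
theorem pik_properties (k : ℕ) (hk : 1 ≤ k) :
    ContinuousOn
      (fun x => (-1 : ℝ) ^ k * iteratedDeriv (2 * k - 1) (fun y => y ^ k * psiK k y) x)
      (Ioi 0) ∧
    (∀ x : ℝ, 0 < x → x < 1 →
      deriv (fun x => (-1 : ℝ) ^ k *
          iteratedDeriv (2 * k - 1) (fun y => y ^ k * psiK k y) x) x
        = -((2 * k).factorial : ℝ)) ∧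
    (∀ x : ℝ, 1 < x →
      deriv (fun x => (-1 : ℝ) ^ k *
          iteratedDeriv (2 * k - 1) (fun y => y ^ k * psiK k y) x) x = 0) ∧
    ConvexOn ℝ (Ioi 0)
      (fun x => (-1 : ℝ) ^ k * iteratedDeriv (2 * k - 1) (fun y => y ^ k * psiK k y) x) := by
  obtain ⟨m, rfl⟩ : ∃ m, k = m + 1 := ⟨k - 1, by omega⟩
  set DD : ℝ := ((2*m+2).descFactorial (2*m+1) : ℝ) with hDDdef
  set c0 : ℝ := aCoef (m+1) m * (((m+(m+1)).descFactorial (2*m+1)) : ℝ) with hc0def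
  set EE : ℝ := (-1:ℝ)^(m+1) * c0 with hEEdef
  have hDD : DD = ((2*(m+1)).factorial : ℝ) := by
    have h2 := Nat.descFactorial_succ (2*m+2) (2*m+1)
    rw [show 2*m+1+1 = 2*m+2 from rfl, Nat.descFactorial_self,
      show 2*m+2 - (2*m+1) = 1 from by omega, one_mul] at h2
    rw [hDDdef, ← h2, show 2*(m+1) = 2*m+2 from by ring]
  have hDD0 : (0:ℝ) ≤ DD := Nat.cast_nonneg _
  -- the equality of functions on (0,∞)
  have hG : EqOn (fun y => y ^ (m+1) * psiK (m+1) y)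
      (fun y => (∑ n ∈ Finset.range (m+1+1), aCoef (m+1) n * y ^ (n+(m+1)))
        + (-1:ℝ)^(m+1) * ramp y ^ (2*m+2)) (Ioi 0) := by
    intro y hy
    have hy0 : (0:ℝ) < y := hy
    simp only
    by_cases h1 : 1 ≤ y
    · rw [psiK, if_pos h1, key_id (m+1) y hy0,
        show ramp y = y - 1 from max_eq_left (by linarith),
        show 2*m+2 = 2*(m+1) from by ring]
    · rw [psiK, if_neg h1, Pkhat,
        show ramp y = 0 from max_eq_right (by push_neg at h1; linarith),
        zero_pow (by omega : 2*m+2 ≠ 0), mul_zero, add_zero, Qs_eq]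
      ring
  have hstep := hG.iteratedDeriv_of_isOpen isOpen_Ioi (2*m+1)
  have hcdQ : ContDiff ℝ (2*m+1)
      (fun y : ℝ => ∑ n ∈ Finset.range (m+1+1), aCoef (m+1) n * y ^ (n+(m+1))) :=
    ContDiff.sum (fun i _ => contDiff_const.mul (contDiff_id.pow _))
  have hcdh : ContDiff ℝ (2*m+1) (fun y : ℝ => ramp y ^ (2*m+2)) := by
    have := contDiff_ramp_pow (2*m+1)
    rwa [show 2*m+1+1 = 2*m+2 from rfl] at this
  have hQval := iteratedDeriv_monomial_sum (Finset.range (m+1+1)) (aCoef (m+1))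
      (fun n => n + (m+1)) (2*m+1)
  have hrval := iteratedDeriv_ramp_pow (2*m+2) (2*m+1) (by omega)
  -- sum evaluation
  have hsum : ∀ x : ℝ,
      (∑ n ∈ Finset.range (m+1+1),
        (aCoef (m+1) n * (((n+(m+1)).descFactorial (2*m+1)) : ℝ)) * x ^ (n+(m+1) - (2*m+1)))
      = c0 + (-1:ℝ)^m * DD * x := by
    intro x
    rw [Finset.sum_range_succ, Finset.sum_range_succ]
    rw [Finset.sum_eq_zero (fun n hn => by
      have hn' : n < m := Finset.mem_range.mp hn
      rw [Nat.descFactorial_eq_zero_iff_lt.mpr (by omega)]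
      simp)]
    rw [show m+1+(m+1) - (2*m+1) = 1 from by omega, show m+(m+1) - (2*m+1) = 0 from by omega,
      pow_zero, pow_one]
    rw [show aCoef (m+1) (m+1) = (-1:ℝ)^m from by
      rw [aCoef, if_neg (by omega), show m+1+(m+1) = 2*(m+1) from by ring, Nat.choose_self,
        neg_one_pow_eq_of_mod (m+1+1) m (by omega)]
      simp]
    rw [show m+1+(m+1) = 2*m+2 from by ring, hc0def, hDDdef]
    ring
  -- the full pointwise formula
  have hfull : ∀ x ∈ Ioi (0:ℝ),
      (-1:ℝ)^(m+1) * iteratedDeriv (2*(m+1) - 1) (fun y => y ^ (m+1) * psiK (m+1) y) x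
        = EE - DD * x + DD * ramp x := by
    intro x hx
    rw [show 2*(m+1) - 1 = 2*m+1 from by omega]
    rw [hstep hx]
    have h1 : iteratedDeriv (2*m+1)
        (fun y => (∑ n ∈ Finset.range (m+1+1), aCoef (m+1) n * y ^ (n+(m+1)))
          + (-1:ℝ)^(m+1) * ramp y ^ (2*m+2)) x
        = iteratedDeriv (2*m+1)
            (fun y : ℝ => ∑ n ∈ Finset.range (m+1+1), aCoef (m+1) n * y ^ (n+(m+1))) x
          + iteratedDeriv (2*m+1) (fun y : ℝ => (-1:ℝ)^(m+1) * ramp y ^ (2*m+2)) x := by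
      have h2 := iteratedDerivWithin_add (Set.mem_univ x) uniqueDiffOn_univ
        hcdQ.contDiffWithinAt ((contDiff_const (c := (-1:ℝ)^(m+1))).mul hcdh).contDiffWithinAt
      simp only [iteratedDerivWithin_univ] at h2
      exact h2
    have h3 : iteratedDeriv (2*m+1) (fun y : ℝ => (-1:ℝ)^(m+1) * ramp y ^ (2*m+2)) x
        = (-1:ℝ)^(m+1) * iteratedDeriv (2*m+1) (fun y : ℝ => ramp y ^ (2*m+2)) x := by
      have h4 := iteratedDerivWithin_const_mul (Set.mem_univ x) uniqueDiffOn_univ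
        ((-1:ℝ)^(m+1)) hcdh.contDiffWithinAt
      simp only [iteratedDerivWithin_univ] at h4
      exact h4
    rw [h1, h3, hQval, hrval]
    simp only
    rw [hsum x, show 2*m+2 - (2*m+1) = 1 from by omega, pow_one]
    have s1 : (-1:ℝ)^(m+1) * (-1)^m = -1 := by
      rw [← pow_add, neg_one_pow_eq_of_mod (m+1+m) 1 (by omega), pow_one]
    have s2 : (-1:ℝ)^(m+1) * (-1)^(m+1) = 1 := by
      rw [← pow_add, neg_one_pow_eq_of_mod (m+1+(m+1)) 0 (by omega), pow_zero]
    rw [hEEdef, hDDdef]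
    linear_combination (((2*m+2).descFactorial (2*m+1) : ℝ) * x) * s1
      + (((2*m+2).descFactorial (2*m+1) : ℝ) * ramp x) * s2
  refine ⟨?_, ?_, ?_, ?_⟩
  · have hFc : Continuous (fun x : ℝ => EE - DD*x + DD*ramp x) :=
      (continuous_const.sub (continuous_const.mul continuous_id)).add (continuous_const.mul ramp_continuous)
    exact hFc.continuousOn.congr (fun x hx => hfull x hx)
  · intro x hx hx1
    have hev : (fun x' => (-1:ℝ)^(m+1) *
        iteratedDeriv (2*(m+1) - 1) (fun y => y ^ (m+1) * psiK (m+1) y) x')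
        =ᶠ[𝓝 x] fun x' => EE - DD * x' := by
      filter_upwards [Ioo_mem_nhds hx hx1] with y hy
      rw [hfull y hy.1, show ramp y = 0 from max_eq_right (by linarith [hy.2])]
      ring
    rw [hev.deriv_eq]
    have hd : HasDerivAt (fun x' : ℝ => EE - DD * x') (-DD) x := by
      simpa using ((hasDerivAt_id x).const_mul DD).const_sub EE
    rw [hd.deriv, hDD]
  · intro x hx1
    have hev : (fun x' => (-1:ℝ)^(m+1) *
        iteratedDeriv (2*(m+1) - 1) (fun y => y ^ (m+1) * psiK (m+1) y) x')
        =ᶠ[𝓝 x] fun x' => EE - DD * x' + DD * (x' - 1) := by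
      filter_upwards [Ioi_mem_nhds hx1] with y hy
      have hy1 : (1:ℝ) < y := hy
      rw [hfull y (by exact lt_trans zero_lt_one hy1),
        show ramp y = y - 1 from max_eq_left (by linarith)]
    rw [hev.deriv_eq]
    have ha : HasDerivAt (fun x' : ℝ => EE - DD * x') (-DD) x := by
      simpa using ((hasDerivAt_id x).const_mul DD).const_sub EE
    have hb : HasDerivAt (fun x' : ℝ => DD * (x' - 1)) (DD * 1) x :=
      ((hasDerivAt_id x).sub_const 1).const_mul DD
    rw [deriv_fun_add ha.differentiableAt hb.differentiableAt, ha.deriv, hb.deriv]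
    ring
  · have hmax : ConvexOn ℝ (Ioi (0:ℝ)) (fun x => DD * ramp x) := by
      have h1 := (affine_convexOn DD (-DD)).sup (affine_convexOn 0 0)
      have h2 : (fun x : ℝ => DD * ramp x)
          = (fun x : ℝ => DD*x + (-DD)) ⊔ (fun x : ℝ => 0*x + 0) := by
        funext x
        simp only [Pi.sup_apply, ramp]
        rw [show DD*x + (-DD) = DD * (x - 1) from by ring, show (0:ℝ)*x + 0 = DD * 0 from by ring]
        exact mul_max_of_nonneg _ _ hDD0
      rw [h2]
      exact h1
    have hF : ConvexOn ℝ (Ioi (0:ℝ))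
        ((fun x : ℝ => -DD * x + EE) + fun x : ℝ => DD * ramp x) :=
      (affine_convexOn (-DD) EE).add hmax
    exact convexOn_congr' hF (fun x hx => by
      rw [hfull x hx]
      simp only [Pi.add_apply]
      ring)
end

section
/- For every fixed x > 0 and t ≥ 0, one has C(2k,k)^{−1} Φ_k(x,t) → 1/(x+t) as k → ∞. -/
open Set MeasureTheory Filter

noncomputable def rrK (k n : ℕ) : ℝ := ((2 * k).choose (n + k) : ℝ) / ((2 * k).choose k)

lemma chooseK_pos (k : ℕ) : 0 < ((2 * k).choose k : ℝ) := by
  exact_mod_cast Nat.choose_pos (by omega)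

lemma rrK_nonneg (k n : ℕ) : 0 ≤ rrK k n := by
  unfold rrK; positivity

lemma rrK_le_one (k n : ℕ) : rrK k n ≤ 1 := by
  rw [rrK, div_le_one (chooseK_pos k)]
  have h := Nat.choose_le_middle (n + k) (2 * k)
  rw [show 2 * k / 2 = k by omega] at h
  exact_mod_cast h

lemma rrK_zero (k : ℕ) : rrK k 0 = 1 := by
  rw [rrK, zero_add, div_self (chooseK_pos k).ne']

lemma rrK_succ (k n : ℕ) :
    rrK k (n + 1) * ((n : ℝ) + k + 1) = rrK k n * ((k - n : ℕ) : ℝ) := by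
  have h : (2 * k).choose (n + k + 1) * (n + k + 1) = (2 * k).choose (n + k) * (k - n) := by
    have := Nat.choose_succ_right_eq (2 * k) (n + k)
    rw [show 2 * k - (n + k) = k - n by omega] at this
    exact this
  have h' : ((2 * k).choose (n + k + 1) : ℝ) * ((n : ℝ) + k + 1)
      = ((2 * k).choose (n + k) : ℝ) * ((k - n : ℕ) : ℝ) := by exact_mod_cast h
  rw [rrK, rrK, show n + 1 + k = n + k + 1 by omega, div_mul_eq_mul_div,
    div_mul_eq_mul_div, h']

lemma one_sub_rrK_le (k : ℕ) (hk : 1 ≤ k) (n : ℕ) : 1 - rrK k n ≤ (n : ℝ) ^ 2 / k := by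
  induction n with
  | zero => simp [rrK_zero]
  | succ n ih =>
    have hk' : (0 : ℝ) < k := by exact_mod_cast hk
    have hden : (0 : ℝ) < (n : ℝ) + k + 1 := by positivity
    set q : ℝ := ((k - n : ℕ) : ℝ) / ((n : ℝ) + k + 1) with hq
    have hrec : rrK k (n + 1) = rrK k n * q := by
      rw [hq, ← mul_div_assoc, eq_div_iff hden.ne']
      exact rrK_succ k n
    have hq0 : 0 ≤ q := by positivity
    have hqd : q * ((n : ℝ) + k + 1) = ((k - n : ℕ) : ℝ) := div_mul_cancel₀ _ hden.ne'
    have hcast : (k : ℝ) - n ≤ ((k - n : ℕ) : ℝ) := by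
      rcases le_total n k with h | h
      · rw [Nat.cast_sub h]
      · have h1 : ((k - n : ℕ) : ℝ) = 0 := by rw [Nat.sub_eq_zero_of_le h]; simp
        have h2 : (k : ℝ) ≤ n := by exact_mod_cast h
        rw [h1]; linarith
    have hq1 : q ≤ 1 := by
      rw [hq, div_le_one hden]
      have : ((k - n : ℕ) : ℝ) ≤ k := by exact_mod_cast Nat.sub_le k n
      linarith
    have hqk : 1 - q ≤ (2 * (n : ℝ) + 1) / k := by
      rw [le_div_iff₀ hk']
      nlinarith [hqd, hcast, hq0, hq1, hk', hden]
    have h1 : rrK k n * (1 - q) ≤ 1 - q :=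
      mul_le_of_le_one_left (by linarith) (rrK_le_one k n)
    calc 1 - rrK k (n + 1) = (1 - rrK k n) + rrK k n * (1 - q) := by rw [hrec]; ring
      _ ≤ (n : ℝ) ^ 2 / k + (2 * (n : ℝ) + 1) / k := add_le_add ih (h1.trans hqk)
      _ = ((n + 1 : ℕ) : ℝ) ^ 2 / k := by push_cast; rw [← add_div]; ring_nf

lemma inv_mul_Pk (k : ℕ) (y : ℝ) :
    (((2 * k).choose k : ℝ))⁻¹ * Pk k y = ∑ n ∈ Finset.range (k + 1), rrK k n * (-y) ^ n := by
  rw [Pk, Finset.mul_sum]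
  refine Finset.sum_congr rfl fun n _ => ?_
  rw [rrK, div_eq_mul_inv]; ring

lemma tendsto_geomsum (y : ℝ) (hy0 : 0 ≤ y) (hy1 : y < 1) :
    Tendsto (fun k : ℕ => ∑ n ∈ Finset.range (k + 1), (-y) ^ n) atTop (nhds (1 + y)⁻¹) := by
  have hn : ‖-y‖ < 1 := by rw [norm_neg, Real.norm_of_nonneg hy0]; exact hy1
  have h := (hasSum_geometric_of_norm_lt_one hn).tendsto_sum_nat
  have h2 := h.comp (tendsto_add_atTop_nat 1)
  simpa [Function.comp_def, sub_neg_eq_add] using h2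

lemma diff_tendsto (y : ℝ) (hy0 : 0 ≤ y) (hy1 : y < 1) :
    Tendsto (fun k : ℕ => (∑ n ∈ Finset.range (k + 1), rrK k n * (-y) ^ n)
      - ∑ n ∈ Finset.range (k + 1), (-y) ^ n) atTop (nhds 0) := by
  have hsum : Summable (fun n : ℕ => (n : ℝ) ^ 2 * y ^ n) :=
    summable_pow_mul_geometric_of_norm_lt_one 2
      (by rw [Real.norm_of_nonneg hy0]; exact hy1)
  set T := ∑' n : ℕ, (n : ℝ) ^ 2 * y ^ n with hT
  apply squeeze_zero_norm' (a := fun k : ℕ => (k : ℝ)⁻¹ * T)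
  · filter_upwards [eventually_ge_atTop 1] with k hk
    have hk' : (0 : ℝ) < k := by exact_mod_cast hk
    calc ‖(∑ n ∈ Finset.range (k + 1), rrK k n * (-y) ^ n)
          - ∑ n ∈ Finset.range (k + 1), (-y) ^ n‖
        = |∑ n ∈ Finset.range (k + 1), (rrK k n - 1) * (-y) ^ n| := by
          rw [Real.norm_eq_abs, ← Finset.sum_sub_distrib]
          congr 1
          refine Finset.sum_congr rfl fun n _ => ?_; ring
      _ ≤ ∑ n ∈ Finset.range (k + 1), |(rrK k n - 1) * (-y) ^ n| :=
          Finset.abs_sum_le_sum_abs _ _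
      _ ≤ ∑ n ∈ Finset.range (k + 1), (k : ℝ)⁻¹ * ((n : ℝ) ^ 2 * y ^ n) := by
          refine Finset.sum_le_sum fun n _ => ?_
          rw [abs_mul, abs_pow, abs_neg, abs_of_nonneg hy0, abs_sub_comm,
            abs_of_nonneg (sub_nonneg.2 (rrK_le_one k n))]
          have := mul_le_mul_of_nonneg_right (one_sub_rrK_le k hk n) (pow_nonneg hy0 n)
          calc (1 - rrK k n) * y ^ n ≤ (n : ℝ) ^ 2 / k * y ^ n := this
            _ = (k : ℝ)⁻¹ * ((n : ℝ) ^ 2 * y ^ n) := by ring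
      _ = (k : ℝ)⁻¹ * ∑ n ∈ Finset.range (k + 1), (n : ℝ) ^ 2 * y ^ n :=
          (Finset.mul_sum _ _ _).symm
      _ ≤ (k : ℝ)⁻¹ * T := by
          refine mul_le_mul_of_nonneg_left ?_ (inv_nonneg.2 hk'.le)
          exact hsum.sum_le_tsum _ (fun i _ => by positivity)
  · have h := (tendsto_inv_atTop_nhds_zero_nat (𝕜 := ℝ)).mul_const T
    simpa using h

lemma tendsto_Pk_ratio (y : ℝ) (hy0 : 0 ≤ y) (hy1 : y < 1) :
    Tendsto (fun k : ℕ => (((2 * k).choose k : ℝ))⁻¹ * Pk k y) atTop (nhds (1 + y)⁻¹) := by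
  have h := (diff_tendsto y hy0 hy1).add (tendsto_geomsum y hy0 hy1)
  rw [zero_add] at h
  refine h.congr fun k => ?_
  rw [inv_mul_Pk]; ring

lemma Pk_one (m : ℕ) : Pk (m + 1) 1 = ((2 * (m + 1)).choose (m + 1) : ℝ) / 2 := by
  have hsymm : (2 * m + 1).choose (m + 1) = (2 * m + 1).choose m := by
    have h := Nat.choose_symm (n := 2 * m + 1) (k := m + 1) (by omega)
    rw [show 2 * m + 1 - (m + 1) = m by omega] at h
    exact h.symm
  have hpasc : (2 * (m + 1)).choose (m + 1)
      = (2 * m + 1).choose m + (2 * m + 1).choose (m + 1) := by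
    rw [show 2 * (m + 1) = (2 * m + 1) + 1 by omega]
    exact Nat.choose_succ_succ _ _
  set A : ℕ → ℝ := fun n => (-1 : ℝ) ^ n * ((2 * m + 1).choose (n + (m + 1)) : ℝ) with hA
  have hstep : ∀ i, ((2 * (m + 1)).choose ((i + 1) + (m + 1)) : ℝ) * (-(1 : ℝ)) ^ (i + 1)
      = A (i + 1) - A i := by
    intro i
    have hp : (2 * (m + 1)).choose ((i + 1) + (m + 1))
        = (2 * m + 1).choose (i + (m + 1)) + (2 * m + 1).choose ((i + 1) + (m + 1)) := by
      rw [show 2 * (m + 1) = (2 * m + 1) + 1 by omega,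
        show (i + 1) + (m + 1) = (i + (m + 1)) + 1 by omega]
      exact Nat.choose_succ_succ _ _
    rw [hA]; push_cast [hp]; ring
  have hs : Pk (m + 1) 1 = (∑ i ∈ Finset.range (m + 1), (A (i + 1) - A i))
      + ((2 * (m + 1)).choose (0 + (m + 1)) : ℝ) * (-(1 : ℝ)) ^ 0 := by
    rw [Pk, Finset.sum_range_succ']
    congr 1
    exact Finset.sum_congr rfl fun i _ => hstep i
  rw [hs, Finset.sum_range_sub]
  have hAtop : A (m + 1) = 0 := by
    rw [hA]
    simp [Nat.choose_eq_zero_of_lt (show 2 * m + 1 < (m + 1) + (m + 1) by omega)]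
  have h2 : ((2 * (m + 1)).choose (m + 1) : ℝ) = 2 * ((2 * m + 1).choose (m + 1) : ℝ) := by
    rw [hpasc, hsymm]; push_cast; ring
  rw [hAtop, hA]
  simp only [zero_add, pow_zero, one_mul, mul_one]
  rw [h2]; ring

/-- limit (5): for fixed `x > 0` and `t ≥ 0`,
`C(2k,k)⁻¹ Φ_k(x,t) → 1/(x+t)` as `k → ∞`. -/
theorem phi_kernel_tendsto_stieltjes (x t : ℝ) (hx : 0 < x) (ht : 0 ≤ t) :
    Tendsto (fun k : ℕ => (((2 * k).choose k : ℝ))⁻¹ * Phi k x t) atTop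
      (nhds ((x + t)⁻¹)) := by
  rcases lt_trichotomy t x with h | h | h
  · have hy0 : 0 ≤ t / x := div_nonneg ht hx.le
    have hy1 : t / x < 1 := (div_lt_one hx).2 h
    have hmain := (tendsto_Pk_ratio _ hy0 hy1).const_mul x⁻¹
    have heq : x⁻¹ * (1 + t / x)⁻¹ = (x + t)⁻¹ := by
      rw [← mul_inv]
      congr 1
      field_simp
    rw [heq] at hmain
    refine hmain.congr fun k => ?_
    rw [Phi, if_pos h.le]; ring
  · subst h
    have hev : ∀ᶠ k : ℕ in atTop,
        (t + t)⁻¹ = (((2 * k).choose k : ℝ))⁻¹ * Phi k t t := by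
      filter_upwards [eventually_ge_atTop 1] with k hk
      obtain ⟨m, rfl⟩ : ∃ m, k = m + 1 := ⟨k - 1, by omega⟩
      rw [Phi, if_pos le_rfl, div_self hx.ne', Pk_one]
      have hc := chooseK_pos (m + 1)
      field_simp
      ring
    exact Tendsto.congr' hev tendsto_const_nhds
  · have ht' : 0 < t := hx.trans h
    have hy0 : 0 ≤ x / t := by positivity
    have hy1 : x / t < 1 := (div_lt_one ht').2 h
    have hmain := tendsto_Pk_ratio _ hy0 hy1
    have h2 := ((tendsto_const_nhds : Tendsto (fun _ : ℕ => (1:ℝ)) atTop (nhds 1)).sub hmain).const_mul x⁻¹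
    have heq : x⁻¹ * ((1 : ℝ) - (1 + x / t)⁻¹) = (x + t)⁻¹ := by
      have h1 : (1 : ℝ) + x / t = (t + x) / t := by field_simp
      rw [h1, inv_div]
      field_simp
      ring
    rw [heq] at h2
    refine h2.congr fun k => ?_
    have hc := chooseK_pos k
    rw [Phi, if_neg (not_le.2 h), Pkhat]
    have hcc : (((2 * k).choose k : ℝ))⁻¹ * ((2 * k).choose k : ℝ) = 1 :=
      inv_mul_cancel₀ hc.ne'
    linear_combination (-x⁻¹) * hcc
end

section
/- For every integer k ≥ 1 and every w > 2, setting x = (2 − w)^{−1} (so x < 0), one has Δ_{k,1}(w) = x^{1−k} ( ∑_{n=0}^{k−1} C(2n,n) x^n − (1 − 4x)^{−1/2} ). -/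
open Set MeasureTheory Filter

noncomputable def Tk (k : ℕ) (z : ℝ) : ℝ :=
  ∑ n ∈ Finset.range (k + 1), ((2 * k).choose (n + k) : ℝ) * z ^ n

lemma sum_range_k2 (k : ℕ) (z : ℝ) :
    (∑ n ∈ Finset.range (k+2), ((2*k).choose (n+k):ℝ) * z^n) = Tk k z := by
  have htop : ((2*k).choose (k+1+k) : ℝ) = 0 := by
    norm_cast; apply Nat.choose_eq_zero_of_lt; omega
  rw [Finset.sum_range_succ, htop, Tk]; ring

lemma shift1 (k : ℕ) (z : ℝ) :
    ∑ n ∈ Finset.range (k+1), ((2*k).choose (n+k+1) : ℝ) * z^(n+1)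
      = Tk k z - ((2*k).choose k : ℝ) := by
  have h := Finset.sum_range_succ' (fun n => ((2*k).choose (n+k):ℝ) * z^n) (k+1)
  simp only [zero_add, Nat.add_zero, pow_zero, mul_one,
    show ∀ m, m + 1 + k = m + k + 1 from fun m => by omega] at h
  rw [sum_range_k2] at h
  linarith [h]

lemma sum_range_k3 (k : ℕ) (z : ℝ) :
    (∑ n ∈ Finset.range (k+2), ((2*k).choose (n+k+1):ℝ) * z^(n+1))
      = Tk k z - ((2*k).choose k : ℝ) := by
  have htop : ((2*k).choose (k+1+k+1) : ℝ) = 0 := by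
    norm_cast; apply Nat.choose_eq_zero_of_lt; omega
  rw [Finset.sum_range_succ, htop, shift1]; ring

lemma shift2 (k : ℕ) (z : ℝ) :
    ∑ n ∈ Finset.range (k+1), ((2*k).choose (n+k+2) : ℝ) * z^(n+2)
      = Tk k z - ((2*k).choose k : ℝ) - ((2*k).choose (k+1) : ℝ) * z := by
  have h := Finset.sum_range_succ' (fun n => ((2*k).choose (n+k+1):ℝ) * z^(n+1)) (k+1)
  simp only [zero_add, Nat.add_zero, pow_one,
    show ∀ m, m + 1 + k + 1 = m + k + 2 from fun m => by omega,
    show ∀ m : ℕ, m + 1 + 1 = m + 2 from fun m => by omega] at h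
  rw [sum_range_k3] at h
  linarith [h]

lemma pascal2 (k n : ℕ) :
    ((2*(k+1)).choose (n+k+2) : ℝ)
      = ((2*k).choose (n+k) : ℝ) + 2 * ((2*k).choose (n+k+1) : ℝ)
          + ((2*k).choose (n+k+2) : ℝ) := by
  have : (2*(k+1)).choose (n+k+2)
      = (2*k).choose (n+k) + 2 * ((2*k).choose (n+k+1)) + (2*k).choose (n+k+2) := by
    have e1 : 2*(k+1) = (2*k+1)+1 := by omega
    have e2 : n+k+2 = (n+k+1)+1 := by omega
    rw [e1, e2, Nat.choose_succ_succ, show (2*k+1) = (2*k)+1 from rfl,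
      show n+k+1 = (n+k)+1 from rfl, Nat.choose_succ_succ, Nat.choose_succ_succ]
    simp only [Nat.succ_eq_add_one]
    omega
  rw [this]; push_cast; ring

lemma center_choose (k : ℕ) :
    ((2*(k+1)).choose (k+1) : ℝ) = 2 * ((2*k).choose k : ℝ) + 2 * ((2*k).choose (k+1) : ℝ) := by
  have h1 : (2*(k+1)).choose (k+1) = (2*k+1).choose k + (2*k+1).choose (k+1) := by
    rw [show 2*(k+1) = (2*k+1)+1 from by omega, Nat.choose_succ_succ]
  have hsymm : (2*k+1).choose k = (2*k+1).choose (k+1) := by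
    rw [← Nat.choose_symm (by omega : k+1 ≤ 2*k+1), show 2*k+1-(k+1) = k from by omega]
  have h2 : (2*k+1).choose (k+1) = (2*k).choose k + (2*k).choose (k+1) := by
    rw [show 2*k+1 = (2*k)+1 from rfl, Nat.choose_succ_succ]
  have : (2*(k+1)).choose (k+1) = 2 * ((2*k).choose k) + 2 * ((2*k).choose (k+1)) := by
    omega
  rw [this]; push_cast; ring

lemma keyrec (k : ℕ) (z : ℝ) :
    z * Tk (k+1) z
      = (1+z)^2 * Tk k z + ((2*k).choose (k+1) : ℝ) * z - ((2*k).choose k : ℝ) := by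
  have h1 : z * Tk (k+1) z
      = ∑ n ∈ Finset.range (k+2), ((2*(k+1)).choose (n+(k+1)) : ℝ) * z^(n+1) := by
    rw [Tk, Finset.mul_sum]
    apply Finset.sum_congr rfl
    intro n _; ring
  have h2 := Finset.sum_range_succ' (fun n => ((2*(k+1)).choose (n+(k+1)):ℝ) * z^(n+1)) (k+1)
  simp only [zero_add, pow_one,
    show ∀ m, m + 1 + (k+1) = m + (k+1) + 1 from fun m => by omega,
    show ∀ m : ℕ, m + 1 + 1 = m + 2 from fun m => by omega] at h2
  rw [h1, h2, center_choose]
  have h3 : ∑ n ∈ Finset.range (k+1), ((2*(k+1)).choose (n+(k+1)+1) : ℝ) * z^(n+2)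
      = ∑ n ∈ Finset.range (k+1),
          (((2*k).choose (n+k) : ℝ) * (z^2 * z^n) + 2 * (((2*k).choose (n+k+1) : ℝ) * z^(n+1)) * z
            + ((2*k).choose (n+k+2) : ℝ) * z^(n+2)) := by
    apply Finset.sum_congr rfl
    intro n _
    rw [show n+(k+1)+1 = n+k+2 from by omega, pascal2 k n]
    ring
  rw [h3, Finset.sum_add_distrib, Finset.sum_add_distrib]
  have hA : ∑ n ∈ Finset.range (k+1), ((2*k).choose (n+k) : ℝ) * (z^2 * z^n)
      = z^2 * Tk k z := by
    rw [Tk, Finset.mul_sum]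
    exact Finset.sum_congr rfl fun n _ => by ring
  have hB : ∑ n ∈ Finset.range (k+1), 2 * (((2*k).choose (n+k+1) : ℝ) * z^(n+1)) * z
      = 2 * z * (Tk k z - ((2*k).choose k : ℝ)) := by
    rw [← shift1 k z, Finset.mul_sum]
    exact Finset.sum_congr rfl fun n _ => by ring
  rw [hA, hB, shift2]
  ring

lemma polyid (k : ℕ) (y : ℝ) :
    y * (2 * Tk (k+1) (-y) - ((2*(k+1)).choose (k+1) : ℝ))
      + (1-y)^2 * (2 * Tk k (-y) - ((2*k).choose k : ℝ))
      = ((2*k).choose k : ℝ) * (1 - y^2) := by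
  rw [center_choose]
  linear_combination (-2 : ℝ) * keyrec k (-y)

lemma keystep (k : ℕ) (y : ℝ) (h0 : 0 < y) (h1 : y < 1) :
    (2 * Tk k (-y) - ((2*k).choose k : ℝ)) * (y/(1-y^2))
        + ((2*k).choose k : ℝ) * (-y/(1-y)^2)
      = (-y/(1-y)^2) *
          ((2 * Tk (k+1) (-y) - ((2*(k+1)).choose (k+1) : ℝ)) * (y/(1-y^2))) := by
  have hy1 : (1:ℝ) - y ≠ 0 := by linarith
  have hy2 : (1:ℝ) + y ≠ 0 := by linarith
  have hy3 : (1:ℝ) - y^2 ≠ 0 := by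
    intro h; apply hy1; nlinarith
  field_simp
  linear_combination polyid k y

lemma sumB (k : ℕ) (hk : 1 ≤ k) (y : ℝ) (h0 : 0 < y) (h1 : y < 1) :
    ∑ n ∈ Finset.range k, ((2*n).choose n : ℝ) * (-y/(1-y)^2)^n - (1-y)/(1+y)
      = (-y/(1-y)^2)^(k-1) *
          ((2 * Tk k (-y) - ((2*k).choose k : ℝ)) * (y/(1-y^2))) := by
  have hy1 : (1:ℝ) - y ≠ 0 := by linarith
  have hy2 : (1:ℝ) + y ≠ 0 := by linarith
  have hy3 : (1:ℝ) - y^2 ≠ 0 := by intro h; apply hy1; nlinarith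
  induction k, hk using Nat.le_induction with
  | base =>
    have hT : Tk 1 (-y) = 2 - y := by
      norm_num [Tk, Finset.sum_range_succ]; ring
    norm_num [Finset.sum_range_one, hT]
    field_simp
    ring
  | succ k hk IH =>
    obtain ⟨m, rfl⟩ : ∃ m, k = m + 1 := ⟨k - 1, (Nat.sub_add_cancel hk).symm⟩
    simp only [Nat.add_sub_cancel] at IH ⊢
    rw [Finset.sum_range_succ]
    linear_combination IH + ((-y/(1-y)^2)^m) * keystep (m+1) y h0 h1

lemma bigAux (k : ℕ) (hk : 1 ≤ k) (v : ℝ) (hv1 : 1 < v) :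
    (psiK k (1 * v) - psiK k (1 / v)) / (v - v⁻¹)
      = (2 - (v + v⁻¹))⁻¹ ^ ((1 : ℤ) - (k : ℤ)) *
          (∑ n ∈ Finset.range k, ((2 * n).choose n : ℝ) * (2 - (v + v⁻¹))⁻¹ ^ n -
            (1 - 4 * (2 - (v + v⁻¹))⁻¹) ^ (-(1 / 2) : ℝ)) := by
  obtain ⟨y, rfl⟩ : ∃ y, v = y⁻¹ := ⟨v⁻¹, (inv_inv v).symm⟩
  obtain ⟨hy0, hy1⟩ : 0 < y ∧ y < 1 := one_lt_inv_iff₀.mp hv1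
  have hyne : y ≠ 0 := ne_of_gt hy0
  have h1y : (1:ℝ) - y ≠ 0 := by linarith
  have h1y' : (1:ℝ) + y ≠ 0 := by linarith
  have h1y2 : (1:ℝ) - y^2 ≠ 0 := by intro h; apply h1y; nlinarith
  simp only [inv_inv, one_mul, one_div]
  rw [show ((-2⁻¹ : ℝ)) = (-(1/2) : ℝ) by norm_num]
  have hx : (2 - (y⁻¹ + y))⁻¹ = -y/(1-y)^2 := by
    have h2 : 2 - (y⁻¹ + y) = (-(1-y)^2)/y := by
      field_simp
      ring
    rw [h2, inv_div, div_neg, neg_div]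
  have hr : (1 - 4*(2-(y⁻¹+y))⁻¹) ^ (-(1/2):ℝ) = (1-y)/(1+y) := by
    have hb : 1 - 4*(2-(y⁻¹+y))⁻¹ = ((1+y)/(1-y))^2 := by rw [hx]; field_simp; ring
    have ht : 0 < (1+y)/(1-y) := div_pos (by linarith) (by linarith)
    rw [hb, ← Real.rpow_natCast ((1+y)/(1-y)) 2, ← Real.rpow_mul ht.le,
      show ((2:ℕ):ℝ) * (-(1/2)) = -1 by norm_num, Real.rpow_neg_one, inv_div]
  have hz : (2-(y⁻¹+y))⁻¹ ^ ((1:ℤ) - (k:ℤ)) = ((2-(y⁻¹+y))⁻¹ ^ (k-1 : ℕ))⁻¹ := by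
    have h : (1:ℤ) - (k:ℤ) = -((k-1 : ℕ) : ℤ) := by
      have : ((k-1:ℕ):ℤ) = (k:ℤ) - 1 := by omega
      rw [this]; ring
    rw [h, zpow_neg, zpow_natCast]
  have hnum : psiK k y⁻¹ - psiK k y
      = 2 * Pk k y - ((2*k).choose k : ℝ) := by
    rw [psiK, psiK, if_pos hv1.le, if_neg (not_le.mpr hy1), inv_inv, Pkhat]
    ring
  rw [hnum, hz, hr, hx, sumB k hk y hy0 hy1]
  have hxne : (-y/(1-y)^2) ≠ 0 := by
    apply div_ne_zero (neg_ne_zero.mpr hyne) (pow_ne_zero _ h1y)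
  rw [inv_mul_cancel_left₀ (pow_ne_zero _ hxne)]
  have hPT : Tk k (-y) = Pk k y := rfl
  rw [hPT]
  have hd : y⁻¹ - y ≠ 0 := by
    intro h; nlinarith [inv_pos.mpr hy0, hv1]
  have hf : y⁻¹ - y = (1-y^2)/y := by
    field_simp
  rw [div_eq_mul_inv, hf, inv_div]

/-- formula for `Δ_{k,1}`: for `k ≥ 1` and `w > 2`, with
`x = (2-w)⁻¹ < 0`, one has
`Δ_{k,1}(w) = x^{1-k} (∑_{n=0}^{k-1} C(2n,n) x^n - (1-4x)^{-1/2})`. -/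
theorem deltaK1_closed_formula (k : ℕ) (hk : 1 ≤ k) (w : ℝ) (hw : 2 < w) :
    DeltaKU k 1 w
      = (2 - w)⁻¹ ^ ((1 : ℤ) - (k : ℤ)) *
          (∑ n ∈ Finset.range k, ((2 * n).choose n : ℝ) * (2 - w)⁻¹ ^ n -
            (1 - 4 * (2 - w)⁻¹) ^ (-(1 / 2) : ℝ)) := by
  have hs4 : 0 < w^2 - 4 := by nlinarith
  have hs : 0 < Real.sqrt (w^2-4) := Real.sqrt_pos.mpr hs4
  have hv1 : 1 < vOf w := by rw [vOf]; linarith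
  have hvne : vOf w ≠ 0 := ne_of_gt (lt_trans zero_lt_one hv1)
  have hveq : vOf w ^ 2 - w * vOf w + 1 = 0 := by
    have hsq := Real.sq_sqrt hs4.le
    rw [vOf]; linear_combination (1/4 : ℝ) * hsq
  have hw' : vOf w + (vOf w)⁻¹ = w := by
    field_simp
    linear_combination hveq
  have h := bigAux k hk (vOf w) hv1
  rw [hw'] at h
  exact h
end

section
/- For every integer k ≥ 2, every α ∈ (0,1) and every x > 0, one has α x^{α−1} = ( α² ∏_{i=1}^{k−1} (i² − α²) / (2k−2)! ) · ∫_0^∞ Φ_{k−1}(x,t) t^{α−1} dt. -/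
open Set MeasureTheory Filter

section Aux


lemma prod_cast_factorial (M : ℕ) : ∏ t ∈ Finset.range M, ((t : ℝ) + 1) = M.factorial := by
  induction M with
  | zero => simp
  | succ n ih => rw [Finset.prod_range_succ, ih, Nat.factorial_succ]; push_cast; ring

lemma prod_range_sub_cast (j : ℕ) :
    ∏ i ∈ Finset.range j, ((i : ℝ) - j) = (-1) ^ j * j.factorial := by
  rw [← Finset.prod_range_reflect]
  have : ∀ i ∈ Finset.range j, ((j - 1 - i : ℕ) : ℝ) - j = -((i : ℝ) + 1) := by
    intro i hi
    simp only [Finset.mem_range] at hi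
    have : (j - 1 - i : ℕ) = j - (i + 1) := by omega
    rw [this, Nat.cast_sub (by omega)]
    push_cast
    ring
  rw [Finset.prod_congr rfl this]
  simp only [neg_eq_neg_one_mul ((_:ℝ)+1)]
  rw [Finset.prod_mul_distrib, Finset.prod_const, Finset.card_range, prod_cast_factorial]

lemma erase_range_split (N j : ℕ) (hj : j ≤ N) :
    (Finset.range (N + 1)).erase j = Finset.range j ∪ Finset.Ico (j + 1) (N + 1) := by
  ext a
  simp only [Finset.mem_erase, Finset.mem_range, Finset.mem_union, Finset.mem_Ico]
  omega

lemma prod_erase_sub (N j : ℕ) (hj : j ≤ N) :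
    ∏ i ∈ (Finset.range (N + 1)).erase j, ((i : ℝ) - j)
      = (-1) ^ j * j.factorial * (N - j).factorial := by
  rw [erase_range_split N j hj, Finset.prod_union]
  · rw [prod_range_sub_cast, Finset.prod_Ico_eq_prod_range]
    have h1 : N + 1 - (j + 1) = N - j := by omega
    rw [h1]
    have h2 : ∀ t ∈ Finset.range (N - j), ((j + 1 + t : ℕ) : ℝ) - j = (t : ℝ) + 1 := by
      intro t _; push_cast; ring
    rw [Finset.prod_congr rfl h2, prod_cast_factorial]
  · rw [Finset.disjoint_left]
    intro a ha hb
    simp only [Finset.mem_range] at ha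
    simp only [Finset.mem_Ico] at hb
    omega

lemma lagrange_key (N : ℕ) (c α : ℝ) :
    ∑ j ∈ Finset.range (N + 1),
      ((-1 : ℝ) ^ j * j.factorial * (N - j).factorial)⁻¹ *
        ∏ i ∈ (Finset.range (N + 1)).erase j, (α - c + i) = 1 := by
  have hinj : Set.InjOn (fun i : ℕ => c - (i : ℝ)) (Finset.range (N + 1)) := by
    intro a _ b _ hab
    simp only [sub_right_injective.eq_iff, Nat.cast_inj] at hab
    exact_mod_cast hab
  have hs := Lagrange.sum_basis hinj ⟨0, Finset.mem_range.mpr (by omega)⟩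
  have := congrArg (Polynomial.eval α) hs
  rw [Polynomial.eval_finset_sum, Polynomial.eval_one] at this
  have hterm : ∀ j ∈ Finset.range (N + 1),
      Polynomial.eval α (Lagrange.basis (Finset.range (N + 1)) (fun i : ℕ => c - (i : ℝ)) j)
        = ((-1 : ℝ) ^ j * j.factorial * (N - j).factorial)⁻¹ *
            ∏ i ∈ (Finset.range (N + 1)).erase j, (α - c + i) := by
    intro j hj
    simp only [Finset.mem_range] at hj
    rw [Lagrange.basis, Polynomial.eval_prod]
    have heq : ∀ i ∈ (Finset.range (N + 1)).erase j,
        Polynomial.eval α (Lagrange.basisDivisor (c - (j : ℝ)) (c - (i : ℝ)))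
          = ((i : ℝ) - j)⁻¹ * (α - c + i) := by
      intro i _
      simp only [Lagrange.basisDivisor, Polynomial.eval_mul, Polynomial.eval_C,
        Polynomial.eval_sub, Polynomial.eval_X]
      ring_nf
    rw [Finset.prod_congr rfl heq, Finset.prod_mul_distrib, Finset.prod_inv_distrib,
      prod_erase_sub N j (by omega)]
  rw [Finset.sum_congr rfl hterm] at this
  exact this

lemma sum_choose_inv_eq (N : ℕ) (c α : ℝ)
    (h : ∀ j ∈ Finset.range (N + 1), α - c + (j : ℝ) ≠ 0) :
    ∑ j ∈ Finset.range (N + 1), (-1 : ℝ) ^ j * (N.choose j : ℝ) / (α - c + j)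
      = (N.factorial : ℝ) / ∏ j ∈ Finset.range (N + 1), (α - c + (j : ℝ)) := by
  have hQ : ∏ j ∈ Finset.range (N + 1), (α - c + (j : ℝ)) ≠ 0 :=
    Finset.prod_ne_zero_iff.mpr h
  rw [eq_div_iff hQ, Finset.sum_mul]
  have hterm : ∀ j ∈ Finset.range (N + 1),
      (-1 : ℝ) ^ j * (N.choose j : ℝ) / (α - c + j) *
          ∏ i ∈ Finset.range (N + 1), (α - c + (i : ℝ))
        = (N.factorial : ℝ) * (((-1 : ℝ) ^ j * j.factorial * (N - j).factorial)⁻¹ *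
            ∏ i ∈ (Finset.range (N + 1)).erase j, (α - c + i)) := by
    intro j hj
    have hjN : j ≤ N := by simpa [Nat.lt_succ_iff] using Finset.mem_range.mp hj
    rw [← Finset.mul_prod_erase _ _ hj]
    have hd : α - c + (j : ℝ) ≠ 0 := h j hj
    have hfac : (N.choose j : ℝ) * j.factorial * (N - j).factorial = N.factorial := by
      exact_mod_cast congrArg (Nat.cast : ℕ → ℝ) (Nat.choose_mul_factorial_mul_factorial hjN)
    have hj1 : (j.factorial : ℝ) ≠ 0 := Nat.cast_ne_zero.mpr (Nat.factorial_ne_zero j)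
    have hj2 : ((N - j).factorial : ℝ) ≠ 0 := Nat.cast_ne_zero.mpr (Nat.factorial_ne_zero (N - j))
    have hsgn : ((-1 : ℝ) ^ j)⁻¹ = (-1 : ℝ) ^ j := by
      rw [← inv_pow, inv_neg, inv_one]
    rw [mul_inv, mul_inv, hsgn]
    field_simp
    linear_combination (∏ x ∈ (Finset.range (N + 1)).erase j, (α - c + (x : ℝ))) * hfac
  rw [Finset.sum_congr rfl hterm, ← Finset.mul_sum, lagrange_key, mul_one]

lemma Q_prod_eq (α : ℝ) : ∀ m : ℕ,
    ∏ j ∈ Finset.range (2 * m + 1), (α - (m : ℝ) + j)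
      = α * ∏ i ∈ Finset.Icc 1 m, (α ^ 2 - (i : ℝ) ^ 2)
  | 0 => by simp
  | (m + 1) => by
    have h2 : 2 * (m + 1) + 1 = (2 * m + 2) + 1 := by ring
    rw [h2, Finset.prod_range_succ', Finset.prod_range_succ]
    have hcong : ∀ i ∈ Finset.range (2 * m + 1),
        (α - ((m + 1 : ℕ) : ℝ) + ((i + 1 : ℕ) : ℝ)) = α - (m : ℝ) + i := by
      intro i _; push_cast; ring
    rw [Finset.prod_congr rfl hcong, Q_prod_eq α m, Finset.prod_Icc_succ_top (by omega : 1 ≤ m + 1)]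
    push_cast
    ring



lemma Pkhat_eq (k : ℕ) (y : ℝ) :
    Pkhat k y = ∑ i ∈ Finset.range k, ((2 * k).choose (i + 1 + k) : ℝ) * (-y) ^ (i + 1) := by
  unfold Pkhat Pk
  rw [Finset.sum_range_succ']
  simp

section IocPart

variable {m : ℕ} {x α : ℝ}

lemma g1_eqOn (hx : 0 < x) (hα : 0 < α) :
    EqOn (fun t => Phi m x t * t ^ (α - 1))
      (fun t => ∑ n ∈ Finset.range (m + 1),
        (((2 * m).choose (n + m) : ℝ) * (-1) ^ n / x ^ (n + 1)) * t ^ ((n : ℝ) + α - 1))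
      (Ioc 0 x) := by
  intro t ht
  obtain ⟨ht0, htx⟩ := ht
  simp only [Phi, if_pos htx, Pk, Finset.sum_mul, Finset.mul_sum]
  refine Finset.sum_congr rfl fun n _ => ?_
  have h1 : t ^ ((n : ℝ) + α - 1) = t ^ (n : ℕ) * t ^ (α - 1) := by
    rw [← Real.rpow_natCast t n, ← Real.rpow_add ht0]
    ring_nf
  rw [h1]
  have h2 : (-(t / x)) ^ n = (-1) ^ n * t ^ n / x ^ n := by
    rw [neg_pow, div_pow]; ring
  rw [h2]
  have hxn : (x : ℝ) ^ n ≠ 0 := pow_ne_zero _ hx.ne'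
  have hxn1 : (x : ℝ) ^ (n + 1) ≠ 0 := pow_ne_zero _ hx.ne'
  field_simp
  ring

lemma g1_integrableOn (hx : 0 < x) (hα : 0 < α) :
    IntegrableOn (fun t => ∑ n ∈ Finset.range (m + 1),
        (((2 * m).choose (n + m) : ℝ) * (-1) ^ n / x ^ (n + 1)) * t ^ ((n : ℝ) + α - 1))
      (Ioc 0 x) := by
  apply MeasureTheory.integrable_finset_sum
  intro n _
  apply MeasureTheory.Integrable.const_mul
  have hr : (-1 : ℝ) < (n : ℝ) + α - 1 := by
    have : (0 : ℝ) ≤ n := Nat.cast_nonneg n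
    linarith
  exact (intervalIntegral.intervalIntegrable_rpow' hr (a := 0) (b := x)).1

lemma g1_integral (hx : 0 < x) (hα : 0 < α) :
    ∫ t in Ioc (0 : ℝ) x, (∑ n ∈ Finset.range (m + 1),
        (((2 * m).choose (n + m) : ℝ) * (-1) ^ n / x ^ (n + 1)) * t ^ ((n : ℝ) + α - 1))
      = ∑ n ∈ Finset.range (m + 1),
          (-1 : ℝ) ^ n * ((2 * m).choose (n + m) : ℝ) * x ^ (α - 1) / (α + n) := by
  rw [MeasureTheory.integral_finset_sum _ (fun n _ => by
    apply MeasureTheory.Integrable.const_mul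
    have hr : (-1 : ℝ) < (n : ℝ) + α - 1 := by
      have : (0 : ℝ) ≤ n := Nat.cast_nonneg n
      linarith
    exact (intervalIntegral.intervalIntegrable_rpow' hr (a := 0) (b := x)).1)]
  refine Finset.sum_congr rfl fun n _ => ?_
  rw [MeasureTheory.integral_const_mul]
  have hr : (-1 : ℝ) < (n : ℝ) + α - 1 := by
    have : (0 : ℝ) ≤ n := Nat.cast_nonneg n
    linarith
  have hi : ∫ t in Ioc (0 : ℝ) x, t ^ ((n : ℝ) + α - 1)
      = x ^ ((n : ℝ) + α) / ((n : ℝ) + α) := by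
    rw [← intervalIntegral.integral_of_le hx.le, integral_rpow (Or.inl hr)]
    rw [Real.zero_rpow (by linarith : (n : ℝ) + α - 1 + 1 ≠ 0)]
    ring_nf
  rw [hi]
  have hna : (n : ℝ) + α ≠ 0 := by positivity
  have hxa : x ^ ((n : ℝ) + α) = x ^ (n : ℕ) * x ^ (α - 1) * x := by
    have he : ((n : ℝ) + α) = (n : ℝ) + (α - 1) + 1 := by ring
    rw [he, Real.rpow_add hx, Real.rpow_add hx, Real.rpow_one, Real.rpow_natCast]
  rw [hxa]
  have hxn1 : (x : ℝ) ^ (n + 1) ≠ 0 := pow_ne_zero _ hx.ne'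
  field_simp
  ring

end IocPart

section IoiPart

variable {m : ℕ} {x α : ℝ}

lemma g2_eqOn (hx : 0 < x) :
    EqOn (fun t => Phi m x t * t ^ (α - 1))
      (fun t => ∑ i ∈ Finset.range m,
        (-(((2 * m).choose (i + 1 + m) : ℝ)) * (-1) ^ (i + 1) * x ^ (i + 1) / x) *
          t ^ (α - 1 - ((i : ℝ) + 1)))
      (Ioi x) := by
  intro t ht
  simp only [mem_Ioi] at ht
  have ht0 : 0 < t := hx.trans ht
  simp only [Phi, if_neg (not_le.mpr ht), Pkhat_eq, ← Finset.sum_neg_distrib,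
    Finset.sum_mul, Finset.mul_sum]
  refine Finset.sum_congr rfl fun i _ => ?_
  have h1 : t ^ (α - 1 - ((i : ℝ) + 1)) = t ^ (α - 1) * (t ^ (i + 1 : ℕ))⁻¹ := by
    have he : α - 1 - ((i : ℝ) + 1) = (α - 1) + (-(((i + 1 : ℕ) : ℝ))) := by push_cast; ring
    rw [he, Real.rpow_add ht0, Real.rpow_neg ht0.le, Real.rpow_natCast]
  rw [h1]
  have h2 : (-(x / t)) ^ (i + 1) = (-1) ^ (i + 1) * x ^ (i + 1) / t ^ (i + 1) := by
    rw [neg_pow, div_pow]; ring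
  rw [h2]
  have htn : (t : ℝ) ^ (i + 1) ≠ 0 := pow_ne_zero _ ht0.ne'
  field_simp

end IoiPart

lemma g2_integrableOn (hx : 0 < x) (hα : α < 1) :
    IntegrableOn (fun t => ∑ i ∈ Finset.range m,
        (-(((2 * m).choose (i + 1 + m) : ℝ)) * (-1) ^ (i + 1) * x ^ (i + 1) / x) *
          t ^ (α - 1 - ((i : ℝ) + 1)))
      (Ioi x) := by
  apply MeasureTheory.integrable_finset_sum
  intro i _
  apply MeasureTheory.Integrable.const_mul
  have hr : α - 1 - ((i : ℝ) + 1) < -1 := by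
    have : (0 : ℝ) ≤ i := Nat.cast_nonneg i
    linarith
  exact integrableOn_Ioi_rpow_of_lt hr hx

lemma g2_integral (hx : 0 < x) (hα : α < 1) :
    ∫ t in Ioi x, (∑ i ∈ Finset.range m,
        (-(((2 * m).choose (i + 1 + m) : ℝ)) * (-1) ^ (i + 1) * x ^ (i + 1) / x) *
          t ^ (α - 1 - ((i : ℝ) + 1)))
      = ∑ i ∈ Finset.range m,
          -((-1 : ℝ) ^ (i + 1) * ((2 * m).choose (i + 1 + m) : ℝ) * x ^ (α - 1) /
            (((i : ℕ) + 1 : ℝ) - α)) := by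
  rw [MeasureTheory.integral_finset_sum _ (fun i _ => by
    apply MeasureTheory.Integrable.const_mul
    have hr : α - 1 - ((i : ℝ) + 1) < -1 := by
      have : (0 : ℝ) ≤ i := Nat.cast_nonneg i
      linarith
    exact integrableOn_Ioi_rpow_of_lt hr hx)]
  refine Finset.sum_congr rfl fun i _ => ?_
  rw [MeasureTheory.integral_const_mul]
  have hr : α - 1 - ((i : ℝ) + 1) < -1 := by
    have : (0 : ℝ) ≤ i := Nat.cast_nonneg i
    linarith
  rw [integral_Ioi_rpow_of_lt hr hx]
  have hd : α - 1 - ((i : ℝ) + 1) + 1 = α - ((i : ℝ) + 1) := by ring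
  rw [hd]
  have hxa : x ^ (α - ((i : ℝ) + 1)) = x ^ (α - 1) * x / x ^ (i + 1 : ℕ) := by
    have he : α - ((i : ℝ) + 1) = (α - 1) + 1 - ((i + 1 : ℕ) : ℝ) := by push_cast; ring
    rw [he, Real.rpow_sub hx, Real.rpow_add hx, Real.rpow_one, Real.rpow_natCast]
  rw [hxa]
  have hxn : (x : ℝ) ^ (i + 1) ≠ 0 := pow_ne_zero _ hx.ne'
  have hia : ((i : ℝ) + 1) - α ≠ 0 := by
    have : (0 : ℝ) ≤ i := Nat.cast_nonneg i
    intro hc; nlinarith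
  have hia2 : α - ((i : ℝ) + 1) ≠ 0 := fun hc => hia (by linarith [sub_eq_zero.mp hc])
  push_cast
  field_simp
  ring


lemma neg_one_pow_cancel (m : ℕ) : (-1 : ℝ) ^ m * (-1) ^ m = 1 := by
  rw [← pow_add]
  exact Even.neg_one_pow ⟨m, rfl⟩

lemma sum_combine (m : ℕ) (α xpow : ℝ) (hα : α ∈ Ioo (0:ℝ) 1) :
    (∑ n ∈ Finset.range (m + 1),
        (-1 : ℝ) ^ n * ((2 * m).choose (n + m) : ℝ) * xpow / (α + n))
      + (∑ i ∈ Finset.range m,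
          -((-1 : ℝ) ^ (i + 1) * ((2 * m).choose (i + 1 + m) : ℝ) * xpow /
            (((i : ℕ) + 1 : ℝ) - α)))
      = xpow * (-1) ^ m *
        ∑ j ∈ Finset.range (2 * m + 1),
          (-1 : ℝ) ^ j * ((2 * m).choose j : ℝ) / (α - m + j) := by
  set f : ℕ → ℝ := fun j => (-1 : ℝ) ^ j * ((2 * m).choose j : ℝ) / (α - m + j) with hf
  have hsplit : ∑ j ∈ Finset.range (2 * m + 1), f j
      = ∑ j ∈ Finset.range m, f j + ∑ j ∈ Finset.range (m + 1), f (m + j) := by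
    rw [show 2 * m + 1 = m + (m + 1) by ring, Finset.sum_range_add]
  rw [hsplit, mul_add, add_comm (xpow * (-1) ^ m * _)]
  congr 1
  · -- second block: ∑ range (m+1)
    rw [Finset.mul_sum]
    refine Finset.sum_congr rfl fun n _ => ?_
    have hd : α + (n : ℝ) ≠ 0 := by
      have h0 : (0 : ℝ) ≤ n := Nat.cast_nonneg n
      have := hα.1; positivity
    have hden : α - (m : ℝ) + ((m + n : ℕ) : ℝ) = α + n := by push_cast; ring
    simp only [hf, hden, Nat.add_comm m n]
    have hpow : (-1 : ℝ) ^ (n + m) = (-1) ^ n * (-1) ^ m := pow_add (-1) n m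
    simp only [hpow]
    have hs : (-1 : ℝ) ^ m * (-1) ^ m = 1 := neg_one_pow_cancel m
    field_simp
    have hden2 : α - (m : ℝ) + ((n + m : ℕ) : ℝ) = α + n := by push_cast; ring
    rw [hden2, eq_div_iff hd]
    linear_combination (-(((2 * m).choose (n + m) : ℝ) * xpow * (α + n))) * hs
  · -- first block: ∑ range m reflected
    rw [Finset.mul_sum, ← Finset.sum_range_reflect (fun j => xpow * (-1) ^ m * f j) m]
    refine Finset.sum_congr rfl fun i hi => ?_
    have him : i < m := Finset.mem_range.mp hi
    have hcast : ((m - 1 - i : ℕ) : ℝ) = (m : ℝ) - 1 - i := by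
      have : (m - 1 - i : ℕ) = m - (i + 1) := by omega
      rw [this, Nat.cast_sub (by omega)]
      push_cast; ring
    have hden : α - (m : ℝ) + ((m - 1 - i : ℕ) : ℝ) = -(((i : ℝ) + 1) - α) := by
      rw [hcast]; ring
    have hch : ((2 * m).choose (m - 1 - i) : ℝ) = ((2 * m).choose (i + 1 + m) : ℝ) := by
      congr 1
      rw [show m - 1 - i = 2 * m - (i + 1 + m) by omega]
      exact Nat.choose_symm (by omega)
    have hsgn : (-1 : ℝ) ^ m * (-1) ^ (m - 1 - i) = (-1) ^ (i + 1) := by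
      rw [← pow_add, show m + (m - 1 - i) = (i + 1) + 2 * (m - 1 - i) by omega,
        pow_add, pow_mul]
      norm_num
    have hsgn' : (-1 : ℝ) ^ (m - 1 - i) = (-1) ^ m * (-1) ^ (i + 1) := by
      rw [← hsgn, ← mul_assoc, neg_one_pow_cancel, one_mul]
    have hd : ((i : ℝ) + 1) - α ≠ 0 := by
      have h0 : (0 : ℝ) ≤ i := Nat.cast_nonneg i
      have := hα.2; intro hc; nlinarith
    simp only [hf, hden, hch, hsgn', div_neg]
    have hs : (-1 : ℝ) ^ m * (-1) ^ m = 1 := neg_one_pow_cancel m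
    field_simp
    linear_combination (((2 * m).choose (i + 1 + m) : ℝ) * xpow) * hs

end Aux

/-- GIG-type decomposition: for `k ≥ 2`, `α ∈ (0,1)` and `x > 0`,
`α x^{α-1} = (α² ∏_{i=1}^{k-1}(i²-α²)/(2k-2)!) ∫₀^∞ Φ_{k-1}(x,t) t^{α-1} dt`. -/
theorem power_function_phi_representation (k : ℕ) (hk : 2 ≤ k) (α : ℝ)
    (hα : α ∈ Ioo (0 : ℝ) 1) (x : ℝ) (hx : 0 < x) :
    α * x ^ (α - 1)
      = (α ^ 2 * ∏ i ∈ Finset.Icc 1 (k - 1), ((i : ℝ) ^ 2 - α ^ 2)) /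
          ((2 * k - 2).factorial : ℝ) *
        ∫ t in Ioi (0 : ℝ), Phi (k - 1) x t * t ^ (α - 1) := by
  obtain ⟨m, hm1, rfl⟩ : ∃ m, 1 ≤ m ∧ k = m + 1 := ⟨k - 1, by omega, by omega⟩
  obtain ⟨hα0, hα1⟩ := hα
  simp only [Nat.add_sub_cancel, show 2 * (m + 1) - 2 = 2 * m from by omega]
  have hIoc : IntegrableOn (fun t => Phi m x t * t ^ (α - 1)) (Ioc 0 x) :=
    (g1_integrableOn hx hα0).congr_fun (g1_eqOn hx hα0).symm measurableSet_Ioc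
  have hIoi : IntegrableOn (fun t => Phi m x t * t ^ (α - 1)) (Ioi x) :=
    (g2_integrableOn hx hα1).congr_fun (g2_eqOn hx).symm measurableSet_Ioi
  have hsplit : ∫ t in Ioi (0 : ℝ), Phi m x t * t ^ (α - 1)
      = (∫ t in Ioc (0 : ℝ) x, Phi m x t * t ^ (α - 1))
        + ∫ t in Ioi x, Phi m x t * t ^ (α - 1) := by
    rw [← Set.Ioc_union_Ioi_eq_Ioi hx.le,
      MeasureTheory.setIntegral_union (Set.Ioc_disjoint_Ioi le_rfl) measurableSet_Ioi hIoc hIoi]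
  rw [hsplit, MeasureTheory.setIntegral_congr_fun measurableSet_Ioc (g1_eqOn hx hα0),
    MeasureTheory.setIntegral_congr_fun measurableSet_Ioi (g2_eqOn hx),
    g1_integral hx hα0, g2_integral hx hα1, sum_combine m α (x ^ (α - 1)) ⟨hα0, hα1⟩]
  have hne : ∀ j ∈ Finset.range (2 * m + 1), α - (m : ℝ) + (j : ℝ) ≠ 0 := by
    intro j _ hc
    have h1 : (j : ℝ) < (m : ℝ) := by linarith
    have h2 : (m : ℝ) < ((j + 1 : ℕ) : ℝ) := by push_cast; linarith
    have := Nat.cast_lt.mp h1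
    have := Nat.cast_lt.mp h2
    omega
  rw [sum_choose_inv_eq (2 * m) (m : ℝ) α hne, Q_prod_eq α m]
  have hprodneg : ∏ i ∈ Finset.Icc 1 m, (α ^ 2 - (i : ℝ) ^ 2)
      = (-1) ^ m * ∏ i ∈ Finset.Icc 1 m, ((i : ℝ) ^ 2 - α ^ 2) := by
    have hc := Finset.prod_congr rfl (fun i (_ : i ∈ Finset.Icc 1 m) =>
      show α ^ 2 - (i : ℝ) ^ 2 = (-1) * ((i : ℝ) ^ 2 - α ^ 2) from by ring)
    rw [hc, Finset.prod_mul_distrib, Finset.prod_const, Nat.card_Icc]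
    simp
  have hP : (0 : ℝ) < ∏ i ∈ Finset.Icc 1 m, ((i : ℝ) ^ 2 - α ^ 2) := by
    apply Finset.prod_pos
    intro i hi
    have h1 : 1 ≤ i := (Finset.mem_Icc.mp hi).1
    have h1' : (1 : ℝ) ≤ (i : ℝ) := by exact_mod_cast h1
    nlinarith
  have hF : ((2 * m).factorial : ℝ) ≠ 0 := Nat.cast_ne_zero.mpr (Nat.factorial_ne_zero _)
  have hs : (-1 : ℝ) ^ m * (-1) ^ m = 1 := neg_one_pow_cancel m
  rw [hprodneg]
  set P : ℝ := ∏ i ∈ Finset.Icc 1 m, ((i : ℝ) ^ 2 - α ^ 2) with hPdef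
  have hP0 : P ≠ 0 := ne_of_gt hP
  field_simp
end

section
/- For every integer n ≥ 1 and every x > 0, one has 1/(1+x) = (2n+1) ∫_0^∞ Φ_n(x,t) · t^n / (1+t)^{2n+2} dt. -/
open Set MeasureTheory Filter Topology
lemma tendsto_aux (c : ℝ) (hc : 0 ≤ c) (p q : ℕ) (hpq : p < q) :
    Tendsto (fun t : ℝ => (t - c) ^ p / (1 + t) ^ q) atTop (𝓝 0) := by
  have h0 : Tendsto (fun t : ℝ => (1 + t)⁻¹) atTop (𝓝 0) :=
    tendsto_inv_atTop_zero.comp (tendsto_atTop_add_const_left _ 1 tendsto_id)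
  apply squeeze_zero_norm' _ h0
  filter_upwards [eventually_ge_atTop c, eventually_ge_atTop (0 : ℝ)] with t htc ht0
  have h1 : (0:ℝ) < 1 + t := by linarith
  have hnum : (t - c) ^ p ≤ (1 + t) ^ p :=
    pow_le_pow_left₀ (by linarith) (by linarith) p
  have hden : (1 + t) ^ (p + 1) ≤ (1 + t) ^ q :=
    pow_le_pow_right₀ (by linarith) (by omega)
  have hle : (t - c) ^ p / (1 + t) ^ q ≤ (1 + t) ^ p / (1 + t) ^ (p + 1) :=
    div_le_div₀ (by positivity) hnum (by positivity) hden
  rw [Real.norm_eq_abs,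
    abs_of_nonneg (div_nonneg (pow_nonneg (by linarith) _) (pow_nonneg h1.le _))]
  calc (t - c) ^ p / (1 + t) ^ q ≤ (1 + t) ^ p / (1 + t) ^ (p + 1) := hle
    _ = (1 + t)⁻¹ := by rw [pow_succ, div_mul_eq_div_div, div_self (by positivity), one_div]

lemma beta_int_val (a b : ℕ) (c : ℝ) (hc : 0 ≤ c) :
    IntegrableOn (fun t => (t - c) ^ a / (1 + t) ^ (a + b + 2)) (Ioi c) volume ∧
    ∫ t in Ioi c, (t - c) ^ a / (1 + t) ^ (a + b + 2)
      = (a.factorial * b.factorial : ℝ) / ((a + b + 1).factorial * (1 + c) ^ (b + 1)) := by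
  induction a with
  | zero =>
    have hder : ∀ t ∈ Ici c, HasDerivAt (fun t : ℝ => -(((b:ℝ) + 1) * (1 + t) ^ (b + 1))⁻¹)
        ((t - c) ^ 0 / (1 + t) ^ (0 + b + 2)) t := by
      intro t ht
      have h1 : (0:ℝ) < 1 + t := by simp only [mem_Ici] at ht; linarith
      have hp : HasDerivAt (fun t : ℝ => (1 + t) ^ (b + 1))
          ((((b:ℕ) + 1 : ℕ) : ℝ) * (1 + t) ^ b * 1) t :=
        ((hasDerivAt_id t).const_add 1).fun_pow (b+1)
      have h2 := ((hp.const_mul ((b:ℝ)+1)).inv (by positivity)).neg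
      refine h2.congr_deriv ?_
      have hne : (1 + t) ^ (b+1) ≠ 0 := by positivity
      field_simp
      push_cast
      ring
    have hpos : ∀ t ∈ Ioi c, 0 ≤ (t - c) ^ 0 / (1 + t) ^ (0 + b + 2) := by
      intro t ht
      simp only [mem_Ioi] at ht
      have : (0:ℝ) < 1 + t := by linarith
      positivity
    have hlim : Tendsto (fun t : ℝ => -(((b:ℝ) + 1) * (1 + t) ^ (b + 1))⁻¹) atTop (𝓝 0) := by
      have h2 : Tendsto (fun t : ℝ => (t - c) ^ 0 / (1 + t) ^ (b + 1)) atTop (𝓝 0) :=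
        tendsto_aux c hc 0 (b+1) (by omega)
      have h3 : Tendsto (fun t : ℝ => -(((b:ℝ)+1)⁻¹ * ((t - c) ^ 0 / (1 + t) ^ (b + 1)))) atTop
          (𝓝 (-(((b:ℝ)+1)⁻¹ * 0))) := (h2.const_mul _).neg
      simp only [mul_zero, neg_zero] at h3
      apply h3.congr
      intro t; rw [pow_zero, one_div, mul_inv, mul_comm]
    constructor
    · exact integrableOn_Ioi_deriv_of_nonneg' hder hpos hlim
    · rw [integral_Ioi_of_hasDerivAt_of_nonneg' hder hpos hlim]
      have h1 : (0:ℝ) < 1 + c := by linarith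
      simp only [Nat.factorial, zero_add, Nat.factorial_one]
      rw [zero_sub, neg_neg, eq_div_iff (by positivity)]
      push_cast
      field_simp
  | succ a ih =>
    obtain ⟨ihint, ihval⟩ := ih
    have h3 : ∀ t : ℝ, t ∈ Ioi c → (0:ℝ) < 1 + t := fun t ht => by
      simp only [mem_Ioi] at ht; linarith
    set K : ℝ := (a:ℝ) + (b:ℝ) + 2 with hK
    have hKpos : (0:ℝ) < K := by positivity
    have hexp : a + 1 + b + 2 = (a + b + 2) + 1 := by omega
    -- integrability of target
    have hintg : IntegrableOn (fun t => (t - c) ^ (a+1) / (1 + t) ^ (a + 1 + b + 2)) (Ioi c) volume := by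
      apply Integrable.mono ihint
      · apply ContinuousOn.aestronglyMeasurable _ measurableSet_Ioi
        apply ContinuousOn.div (by fun_prop) (by fun_prop)
        intro t ht; exact (pow_pos (h3 t ht) _).ne'
      · filter_upwards [ae_restrict_mem measurableSet_Ioi] with t ht
        have h1 := h3 t ht
        simp only [mem_Ioi] at ht
        have hd1 : (0:ℝ) ≤ t - c := by linarith
        rw [Real.norm_eq_abs, Real.norm_eq_abs,
          abs_of_nonneg (div_nonneg (pow_nonneg hd1 _) (pow_nonneg h1.le _)),
          abs_of_nonneg (div_nonneg (pow_nonneg hd1 _) (pow_nonneg h1.le _))]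
        calc (t - c) ^ (a+1) / (1 + t) ^ (a + 1 + b + 2)
            = ((t - c) ^ a / (1 + t) ^ (a + b + 2)) * ((t - c) / (1 + t)) := by
              rw [hexp, pow_succ, pow_succ]
              field_simp
          _ ≤ ((t - c) ^ a / (1 + t) ^ (a + b + 2)) * 1 := by
              apply mul_le_mul_of_nonneg_left _ (div_nonneg (pow_nonneg hd1 _) (pow_nonneg h1.le _))
              rw [div_le_one h1]; linarith
          _ = (t - c) ^ a / (1 + t) ^ (a + b + 2) := mul_one _
    refine ⟨hintg, ?_⟩
    -- FTC part
    have hder : ∀ t ∈ Ici c, HasDerivAt (fun t : ℝ => -((t - c) ^ (a+1) / (K * (1 + t) ^ (a + b + 2))))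
        ((t - c) ^ (a+1) / (1 + t) ^ (a + 1 + b + 2)
          - (((a:ℝ)+1)/K) * ((t - c) ^ a / (1 + t) ^ (a + b + 2))) t := by
      intro t ht
      have h1 : (0:ℝ) < 1 + t := by simp only [mem_Ici] at ht; linarith
      have hp1 : HasDerivAt (fun t : ℝ => (t - c) ^ (a+1))
          ((((a:ℕ) + 1 : ℕ) : ℝ) * (t - c) ^ a * 1) t :=
        ((hasDerivAt_id t).sub_const c).fun_pow (a+1)
      have hp2 : HasDerivAt (fun t : ℝ => ((1 + t) ^ (a + b + 2) : ℝ))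
          ((((a + b + 2 : ℕ)) : ℝ) * (1 + t) ^ (a + b + 1) * 1) t := by
        have := ((hasDerivAt_id t).const_add 1).fun_pow (a+b+2)
        simpa using this
      have hp3 := (hp1.div (hp2.const_mul K) (by positivity)).neg
      refine hp3.congr_deriv ?_
      have hne : (1 + t) ^ (a+b+2) ≠ 0 := by positivity
      have hne2 : (1 + t) ≠ 0 := h1.ne'
      rw [hexp]
      field_simp
      push_cast
      rw [hK]
      ring
    have hlim : Tendsto (fun t : ℝ => -((t - c) ^ (a+1) / (K * (1 + t) ^ (a + b + 2)))) atTop (𝓝 0) := by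
      have h2 : Tendsto (fun t : ℝ => (t - c) ^ (a+1) / (1 + t) ^ (a + b + 2)) atTop (𝓝 0) :=
        tendsto_aux c hc (a+1) (a+b+2) (by omega)
      have h4 : Tendsto (fun t : ℝ => -(K⁻¹ * ((t - c) ^ (a+1) / (1 + t) ^ (a + b + 2)))) atTop
          (𝓝 (-(K⁻¹ * 0))) := (h2.const_mul _).neg
      simp only [mul_zero, neg_zero] at h4
      apply h4.congr
      intro t
      rw [div_mul_eq_div_div_swap]
      ring
    have hint' : IntegrableOn (fun t => (t - c) ^ (a+1) / (1 + t) ^ (a + 1 + b + 2)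
        - (((a:ℝ)+1)/K) * ((t - c) ^ a / (1 + t) ^ (a + b + 2))) (Ioi c) volume :=
      hintg.sub (ihint.const_mul _)
    have hftc := integral_Ioi_of_hasDerivAt_of_tendsto' hder hint' hlim
    rw [integral_sub hintg (ihint.const_mul _), integral_const_mul, ihval] at hftc
    have hc0 : (c - c : ℝ) ^ (a+1) = 0 := by simp
    rw [hc0] at hftc
    simp only [zero_div, zero_sub, neg_eq_iff_eq_neg] at hftc
    have : ∫ t in Ioi c, (t - c) ^ (a+1) / (1 + t) ^ (a + 1 + b + 2)
        = (((a:ℝ)+1)/K) * ((a.factorial * b.factorial : ℝ) / ((a + b + 1).factorial * (1 + c) ^ (b + 1))) := by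
      linarith [hftc]
    rw [this]
    have h1 : (0:ℝ) < 1 + c := by linarith
    have hfa : ((a+1+b+1).factorial : ℝ) = ((a:ℝ) + b + 2) * ((a+b+1).factorial : ℝ) := by
      rw [show a+1+b+1 = (a+b+1)+1 by omega, Nat.factorial_succ]
      push_cast; ring
    have hfb : (((a+1 : ℕ)).factorial : ℝ) = ((a:ℝ)+1) * (a.factorial : ℝ) := by
      rw [Nat.factorial_succ]; push_cast; ring
    rw [hfa, hfb, hK]
    have hfacpos : (0:ℝ) < ((a+b+1).factorial : ℝ) := by positivity
    field_simp

lemma neg_one_pow_sub_s19 (m N : ℕ) (h : m ≤ N) (hN : Even N) :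
    ((-1 : ℝ)) ^ (N - m) = (-1) ^ m := by
  have h1 : ((-1 : ℝ)) ^ (N - m) * (-1) ^ m = 1 := by
    rw [← pow_add, Nat.sub_add_cancel h, hN.neg_one_pow]
  have h2 : ((-1 : ℝ)) ^ m * (-1) ^ m = 1 := by
    rw [← pow_add, ← two_mul, pow_mul]; norm_num
  have h3 : ((-1 : ℝ)) ^ m ≠ 0 := pow_ne_zero m (by norm_num)
  exact mul_right_cancel₀ h3 (h1.trans h2.symm)

lemma neg_one_pow_add_even (m N : ℕ) (hN : Even N) :
    ((-1 : ℝ)) ^ (N + m) = (-1) ^ m := by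
  rw [pow_add, hN.neg_one_pow, one_mul]

lemma pk_pkhat_key (n : ℕ) (x t : ℝ) (hx : x ≠ 0) (ht : t ≠ 0) :
    x ^ n * t ^ n * (Pk n (t / x) + Pkhat n (x / t)) = (-1) ^ n * (t - x) ^ (2 * n) := by
  set T : ℕ → ℝ := fun m => ((2 * n).choose m : ℝ) * (-1) ^ (n + m) * x ^ (2 * n - m) * t ^ m
    with hT
  have hEven : Even (2 * n) := even_two_mul n
  have hrhs : (-1 : ℝ) ^ n * (t - x) ^ (2 * n) = ∑ m ∈ Finset.range (2 * n + 1), T m := by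
    rw [sub_eq_add_neg, add_pow, Finset.mul_sum]
    refine Finset.sum_congr rfl fun m hm => ?_
    simp only [Finset.mem_range] at hm
    have hm' : m ≤ 2 * n := by omega
    rw [hT]
    simp only
    rw [neg_pow x (2 * n - m)]
    have hsg : (-1 : ℝ) ^ (2 * n - m) = (-1) ^ m := neg_one_pow_sub_s19 m (2 * n) hm' hEven
    rw [hsg, pow_add (-1 : ℝ) n m]
    ring
  have hS1 : x ^ n * t ^ n * Pk n (t / x) = ∑ j ∈ Finset.range (n + 1), T (n + j) := by
    rw [Pk, Finset.mul_sum]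
    refine Finset.sum_congr rfl fun j hj => ?_
    simp only [Finset.mem_range] at hj
    have hj' : j ≤ n := by omega
    rw [hT]
    simp only
    rw [show 2 * n - (n + j) = n - j by omega, show j + n = n + j from by omega]
    have hsgn : (-1 : ℝ) ^ (n + (n + j)) = (-1) ^ j := by
      rw [show n + (n + j) = 2 * n + j by omega]
      exact neg_one_pow_add_even j (2 * n) hEven
    rw [hsgn]
    have hxp : x ^ (n - j) * x ^ j = x ^ n := by
      rw [← pow_add]; congr 1; omega
    rw [← hxp, ← neg_div, div_pow, neg_pow]
    field_simp
    ring
  have hS2 : x ^ n * t ^ n * Pk n (x / t) = ∑ j ∈ Finset.range (n + 1), T (n - j) := by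
    rw [Pk, Finset.mul_sum]
    refine Finset.sum_congr rfl fun j hj => ?_
    simp only [Finset.mem_range] at hj
    have hj' : j ≤ n := by omega
    rw [hT]
    simp only
    have hch : ((2 * n).choose (n - j) : ℝ) = ((2 * n).choose (j + n) : ℝ) := by
      rw [show n - j = 2 * n - (n + j) by omega, Nat.choose_symm (by omega), Nat.add_comm]
    rw [hch, show 2 * n - (n - j) = n + j by omega]
    have hsgn : (-1 : ℝ) ^ (n + (n - j)) = (-1) ^ j := by
      rw [show n + (n - j) = 2 * n - j by omega]
      exact neg_one_pow_sub_s19 j (2 * n) (by omega) hEven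
    rw [hsgn]
    have htp : t ^ (n - j) * t ^ j = t ^ n := by
      rw [← pow_add]; congr 1; omega
    rw [← htp, ← neg_div, div_pow, neg_pow]
    field_simp
    ring
  have hTn : T n = ((2 * n).choose n : ℝ) * x ^ n * t ^ n := by
    rw [hT]
    simp only
    rw [show 2 * n - n = n by omega]
    have hnn : (-1 : ℝ) ^ (n + n) = 1 := by
      rw [show n + n = 2 * n by omega]; exact hEven.neg_one_pow
    rw [hnn]; ring
  rw [Pkhat, mul_add, hS1, mul_sub, hS2, hrhs]
  have hsplit : ∑ m ∈ Finset.range (2 * n + 1), T m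
      = (∑ m ∈ Finset.range n, T m) + ∑ m ∈ Finset.Ico n (2 * n + 1), T m := by
    rw [Finset.range_eq_Ico, ← Finset.sum_Ico_consecutive T (by omega : 0 ≤ n) (by omega),
      ← Finset.range_eq_Ico]
  have hup : ∑ m ∈ Finset.Ico n (2 * n + 1), T m = ∑ j ∈ Finset.range (n + 1), T (n + j) := by
    rw [Finset.sum_Ico_eq_sum_range, show 2 * n + 1 - n = n + 1 from by omega]
  have hlow : ∑ j ∈ Finset.range (n + 1), T (n - j) - T n = ∑ m ∈ Finset.range n, T m := by
    rw [Finset.sum_range_succ']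
    simp only [Nat.sub_zero]
    rw [add_sub_cancel_right]
    rw [← Finset.sum_range_reflect (fun m => T m) n]
    refine Finset.sum_congr rfl fun j hj => ?_
    congr 1
    simp only [Finset.mem_range] at hj
    omega
  have : x ^ n * t ^ n * ((2 * n).choose n : ℝ) = T n := by rw [hTn]; ring
  rw [this, hsplit, hup, ← hlow]
  ring

lemma geom_sum_aux (n : ℕ) (x : ℝ) (hx : x ≠ 0) :
    (1 + x) * ∑ j ∈ Finset.range (n + 1), (-1 : ℝ) ^ j * (x⁻¹) ^ (j + 1)
      = 1 + (-1) ^ n * (x⁻¹) ^ (n + 1) := by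
  induction n with
  | zero =>
    simp only [zero_add, Finset.sum_range_one, pow_zero, one_mul, pow_one]
    field_simp
    ring
  | succ m ih =>
    rw [Finset.sum_range_succ, mul_add, ih, pow_succ (-1 : ℝ) m, pow_succ (x⁻¹) (m + 1)]
    field_simp
    ring


/-- for every `n ≥ 1` and `x > 0`,
`1/(1+x) = (2n+1) ∫₀^∞ Φ_n(x,t) tⁿ/(1+t)^{2n+2} dt`. -/
theorem stieltjes_kernel_phi_representation (n : ℕ) (hn : 1 ≤ n) (x : ℝ) (hx : 0 < x) :
    (1 + x)⁻¹
      = (2 * (n : ℝ) + 1) *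
          ∫ t in Ioi (0 : ℝ), Phi n x t * t ^ n / (1 + t) ^ (2 * n + 2) := by
  have hx0 : x ≠ 0 := hx.ne'
  have h1x : (0 : ℝ) < 1 + x := by linarith
  set f : ℝ → ℝ := fun t => Phi n x t * t ^ n / (1 + t) ^ (2 * n + 2) with hf
  set g : ℝ → ℝ := fun t => x⁻¹ * Pk n (t / x) * t ^ n / (1 + t) ^ (2 * n + 2) with hg
  set q : ℝ → ℝ := fun t => ((-1 : ℝ) ^ n * (x⁻¹) ^ (n + 1)) * ((t - x) ^ (2 * n) / (1 + t) ^ (2 * n + 2)) with hq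
  set coeff : ℕ → ℝ := fun j => (-1 : ℝ) ^ j * (((2 * n).choose (j + n) : ℕ) : ℝ) * (x⁻¹) ^ (j + 1)
    with hcoeff
  set φ : ℕ → ℝ → ℝ := fun m t => t ^ m / (1 + t) ^ (2 * n + 2) with hφdef
  -- Beta values
  have hφ : ∀ j, j ≤ n → IntegrableOn (φ (n + j)) (Ioi 0) volume ∧
      ∫ t in Ioi 0, φ (n + j) t
        = ((n + j).factorial * (n - j).factorial : ℝ) / ((2 * n + 1).factorial : ℝ) := by
    intro j hj
    have hb := beta_int_val (n + j) (n - j) 0 le_rfl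
    rw [show (n + j) + (n - j) + 2 = 2 * n + 2 by omega,
      show (n + j) + (n - j) + 1 = 2 * n + 1 by omega] at hb
    simp only [sub_zero] at hb
    norm_num at hb
    exact hb
  -- expansion of g
  have hg_sum : g = fun t => ∑ j ∈ Finset.range (n + 1), coeff j * φ (n + j) t := by
    funext t
    rw [hg]
    simp only [Pk, Finset.mul_sum, Finset.sum_mul, Finset.sum_div]
    refine Finset.sum_congr rfl fun j hj => ?_
    have hAB : x⁻¹ * ((((2 * n).choose (j + n) : ℕ) : ℝ) * (-(t / x)) ^ j) * t ^ n
        = coeff j * t ^ (n + j) := by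
      rw [hcoeff, ← neg_div, div_pow, neg_pow, pow_add t n j]
      simp only [div_eq_mul_inv, inv_pow, pow_succ]
      ring
    rw [hcoeff, hφdef]
    simp only
    rw [← mul_div_assoc]
    exact congrArg (fun z => z / (1 + t) ^ (2 * n + 2)) hAB
  have hg_int : IntegrableOn g (Ioi 0) volume := by
    rw [hg_sum]
    apply integrable_finset_sum
    intro j hj
    exact ((hφ j (by simp only [Finset.mem_range] at hj; omega)).1).const_mul _
  -- value of (2n+1) ∫ g
  have hg_val : (2 * (n : ℝ) + 1) * ∫ t in Ioi 0, g t
      = ∑ j ∈ Finset.range (n + 1), (-1 : ℝ) ^ j * (x⁻¹) ^ (j + 1) := by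
    rw [hg_sum, integral_finset_sum _ (fun j hj =>
      ((hφ j (by simp only [Finset.mem_range] at hj; omega)).1).const_mul _),
      Finset.mul_sum]
    refine Finset.sum_congr rfl fun j hj => ?_
    simp only [Finset.mem_range] at hj
    have hj' : j ≤ n := by omega
    rw [integral_const_mul, (hφ j hj').2, hcoeff]
    have hcf : (((2 * n).choose (j + n) : ℕ) : ℝ) * (((n + j).factorial : ℕ) : ℝ)
        * (((n - j).factorial : ℕ) : ℝ) = (((2 * n).factorial : ℕ) : ℝ) := by
      have := Nat.choose_mul_factorial_mul_factorial (show n + j ≤ 2 * n by omega)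
      rw [show 2 * n - (n + j) = n - j by omega] at this
      rw [show j + n = n + j by omega]
      exact_mod_cast congrArg (Nat.cast : ℕ → ℝ) this
    have hfs : (((2 * n + 1).factorial : ℕ) : ℝ)
        = (2 * (n : ℝ) + 1) * (((2 * n).factorial : ℕ) : ℝ) := by
      rw [Nat.factorial_succ]; push_cast; ring
    have hfp : (0 : ℝ) < (((2 * n).factorial : ℕ) : ℝ) := by positivity
    rw [hfs]
    field_simp
    linear_combination hcf
  -- tail integral q
  have hb2 := beta_int_val (2 * n) 0 x hx.le
  rw [show 2 * n + 0 + 2 = 2 * n + 2 by omega, show 2 * n + 0 + 1 = 2 * n + 1 by omega] at hb2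
  have hq_int : IntegrableOn q (Ioi x) volume := (hb2.1).const_mul _
  have hq_val : (2 * (n : ℝ) + 1) * ∫ t in Ioi x, q t
      = (-1 : ℝ) ^ n * (x⁻¹) ^ (n + 1) * (1 + x) ⁻¹ := by
    rw [hq]
    simp only
    rw [integral_const_mul, hb2.2]
    have hfs : (((2 * n + 1).factorial : ℕ) : ℝ)
        = (2 * (n : ℝ) + 1) * (((2 * n).factorial : ℕ) : ℝ) := by
      rw [Nat.factorial_succ]; push_cast; ring
    have hfp : (0 : ℝ) < (((2 * n).factorial : ℕ) : ℝ) := by positivity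
    rw [hfs]
    simp only [Nat.factorial_zero, Nat.cast_one, mul_one, pow_one]
    field_simp
    ring
  -- pointwise identities
  have hEq1 : EqOn f g (Ioc 0 x) := by
    intro t ht
    rw [hf, hg]
    simp only [Phi, if_pos ht.2]
  have hEq2 : EqOn f (fun t => g t - q t) (Ioi x) := by
    intro t ht
    simp only [mem_Ioi] at ht
    have htpos : 0 < t := lt_trans hx ht
    have htn : t ^ n ≠ 0 := by positivity
    have hxn : x ^ n ≠ 0 := by positivity
    have h1t : (0:ℝ) < 1 + t := by linarith
    have h1tp : ((1 + t) ^ (2 * n + 2) : ℝ) ≠ 0 := by positivity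
    have hkey := pk_pkhat_key n x t hx0 htpos.ne'
    have hPkhat : Pkhat n (x / t)
        = (-1 : ℝ) ^ n * (t - x) ^ (2 * n) / (x ^ n * t ^ n) - Pk n (t / x) := by
      rw [eq_sub_iff_add_eq, eq_div_iff (mul_ne_zero hxn htn)]
      linear_combination hkey
    rw [hf, hg, hq]
    simp only [Phi, if_neg (not_le.mpr ht)]
    rw [hPkhat]
    have hinv : (x⁻¹) ^ (n + 1) = x⁻¹ * (x ^ n)⁻¹ := by
      rw [pow_succ, inv_pow]; ring
    rw [hinv]
    field_simp
    ring
  -- splitting the integral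
  have hsplit : Ioi (0 : ℝ) = Ioc 0 x ∪ Ioi x := (Ioc_union_Ioi_eq_Ioi hx.le).symm
  have hdisj : Disjoint (Ioc (0:ℝ) x) (Ioi x) := Ioc_disjoint_Ioi le_rfl
  have hf_int1 : IntegrableOn f (Ioc 0 x) volume :=
    ((hg_int.mono_set Ioc_subset_Ioi_self).congr_fun (fun t ht => (hEq1 ht).symm)
      measurableSet_Ioc)
  have hgq_int : IntegrableOn (fun t => g t - q t) (Ioi x) volume :=
    (hg_int.mono_set (Ioi_subset_Ioi hx.le)).sub hq_int
  have hf_int2 : IntegrableOn f (Ioi x) volume :=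
    hgq_int.congr_fun (fun t ht => (hEq2 ht).symm) measurableSet_Ioi
  have hIoi0 : ∫ t in Ioi (0:ℝ), f t = (∫ t in Ioc 0 x, f t) + ∫ t in Ioi x, f t := by
    rw [hsplit, setIntegral_union hdisj measurableSet_Ioi hf_int1 hf_int2]
  have hIoc : ∫ t in Ioc (0:ℝ) x, f t = ∫ t in Ioc (0:ℝ) x, g t :=
    setIntegral_congr_fun measurableSet_Ioc hEq1
  have hIoix : ∫ t in Ioi x, f t = (∫ t in Ioi x, g t) - ∫ t in Ioi x, q t := by
    rw [setIntegral_congr_fun measurableSet_Ioi hEq2,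
      integral_sub (hg_int.mono_set (Ioi_subset_Ioi hx.le)) hq_int]
  have hgsplit : ∫ t in Ioi (0:ℝ), g t = (∫ t in Ioc (0:ℝ) x, g t) + ∫ t in Ioi x, g t := by
    rw [hsplit, setIntegral_union hdisj measurableSet_Ioi
      (hg_int.mono_set Ioc_subset_Ioi_self) (hg_int.mono_set (Ioi_subset_Ioi hx.le))]
  have htotal : ∫ t in Ioi (0:ℝ), f t = (∫ t in Ioi (0:ℝ), g t) - ∫ t in Ioi x, q t := by
    rw [hIoi0, hIoc, hIoix, hgsplit]; ring
  rw [htotal, mul_sub, hg_val, hq_val]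
  have hgeom := geom_sum_aux n x hx0
  have hxinv : (x⁻¹) ^ (n + 1) ≠ 0 := by positivity
  field_simp at hgeom ⊢
  linarith [hgeom]
end
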